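/- arXiv:2603.05705 — 13 statements merged into one kernel-verified Lean document; each statement's English description precedes it below -/
import Mathlib

section
/- For any k ≥ 2 and λ ≥ 1, there exists a bipartite graph G with open k-balance number β_k(G) ≥ λ. Specifically, let X = {1, 2, ..., (λ−1)k + 1}, let Y be the set of all λ-element subsets of X, and join x ∈ X to S ∈ Y iff x ∈ S; then for every k-coloring of this graph, some vertex S ∈ Y has all λ of its neighbors the same color, so the coloring is not (λ−1)-balanced at N(S). -/
/-- Number of neighbors of `v` (open neighborhood) with color `i`. -/
noncomputable def oCnt {V α : Type*} (G : SimpleGraph V) (c : V → α) (v : V) (i : α) : ℕ :=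
  {u | G.Adj v u ∧ c u = i}.ncard

/-- Number of vertices of the closed neighborhood of `v` with color `i`. -/
noncomputable def cCnt {V α : Type*} (G : SimpleGraph V) (c : V → α) (v : V) (i : α) : ℕ :=
  {u | (u = v ∨ G.Adj v u) ∧ c u = i}.ncard

/-- Degree of `v`. -/
noncomputable def deg' {V : Type*} (G : SimpleGraph V) (v : V) : ℕ := {u | G.Adj v u}.ncard

/-- The bipartite graph with parts `X = Fin ((λ-1)k+1)` and `Y` the `λ`-element
subsets of `X`, where `x ∈ X` is joined to `S ∈ Y` iff `x ∈ S`. -/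
def bipGraph (k l : ℕ) :
    SimpleGraph (Fin ((l - 1) * k + 1) ⊕ {S : Finset (Fin ((l - 1) * k + 1)) // S.card = l}) where
  Adj u v :=
    match u, v with
    | Sum.inl x, Sum.inr S => x ∈ S.val
    | Sum.inr S, Sum.inl x => x ∈ S.val
    | _, _ => False
  symm := ⟨by rintro (x | S) (y | T) h <;> simp_all⟩
  loopless := ⟨by rintro (x | S) h <;> simp_all⟩

lemma oCnt_eq (k l : ℕ)
    (c : (Fin ((l - 1) * k + 1) ⊕ {S : Finset (Fin ((l - 1) * k + 1)) // S.card = l}) → Fin k)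
    (S : {S : Finset (Fin ((l - 1) * k + 1)) // S.card = l}) (i : Fin k) :
    oCnt (bipGraph k l) c (Sum.inr S) i
      = (S.val.filter (fun x => c (Sum.inl x) = i)).card := by
  have hset : {u | (bipGraph k l).Adj (Sum.inr S) u ∧ c u = i}
      = ↑((S.val.filter (fun x => c (Sum.inl x) = i)).image
          (Sum.inl : _ → Fin ((l - 1) * k + 1) ⊕
            {S : Finset (Fin ((l - 1) * k + 1)) // S.card = l})) := by
    ext (x | T)
    · simp [bipGraph, Set.mem_setOf_eq]
    · simp [bipGraph, Set.mem_setOf_eq]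
  rw [oCnt, hset, Set.ncard_coe_finset, Finset.card_image_of_injective _ Sum.inl_injective]

lemma key (k l : ℕ) (hk : 2 ≤ k) (hl : 1 ≤ l)
    (c : (Fin ((l - 1) * k + 1) ⊕ {S : Finset (Fin ((l - 1) * k + 1)) // S.card = l}) → Fin k) :
    ∃ S : {S : Finset (Fin ((l - 1) * k + 1)) // S.card = l},
      (∃ col : Fin k, ∀ x ∈ S.val, c (Sum.inl x) = col) ∧
      (∃ i j : Fin k,
        (l : ℤ) - 1 <
          ((oCnt (bipGraph k l) c (Sum.inr S) i : ℤ) -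
            oCnt (bipGraph k l) c (Sum.inr S) j).natAbs) := by
  classical
  have hcard : (Finset.univ : Finset (Fin k)).card * (l - 1)
      < (Finset.univ : Finset (Fin ((l - 1) * k + 1))).card := by
    simp [mul_comm]
  obtain ⟨col, -, hcol⟩ := Finset.exists_lt_card_fiber_of_mul_lt_card_of_maps_to
    (f := fun x => c (Sum.inl x)) (fun x _ => Finset.mem_univ _) hcard
  have hge : l ≤ (Finset.univ.filter (fun x => c (Sum.inl x) = col)).card := by omega
  obtain ⟨S, hSsub, hScard⟩ := Finset.exists_subset_card_eq hge
  have hScol : ∀ x ∈ S, c (Sum.inl x) = col := fun x hx =>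
    (Finset.mem_filter.mp (hSsub hx)).2
  haveI : Nontrivial (Fin k) := Fin.nontrivial_iff_two_le.mpr hk
  obtain ⟨j, hne⟩ := exists_ne col
  refine ⟨⟨S, hScard⟩, ⟨col, hScol⟩, col, j, ?_⟩
  have h1 : oCnt (bipGraph k l) c (Sum.inr ⟨S, hScard⟩) col = l := by
    rw [oCnt_eq]
    simp only
    rw [Finset.filter_true_of_mem hScol, hScard]
  have h2 : oCnt (bipGraph k l) c (Sum.inr ⟨S, hScard⟩) j = 0 := by
    rw [oCnt_eq]
    simp only [Finset.card_eq_zero]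
    rw [Finset.filter_false_of_mem]
    intro x hx h
    exact hne (h ▸ hScol x hx)
  rw [h1, h2]
  simp only [Nat.cast_zero, sub_zero, Int.natAbs_natCast]
  omega

lemma balanced_nonempty (k l : ℕ) (hk : 2 ≤ k) :
    ∃ μ : ℕ, ∃ c' : (Fin ((l - 1) * k + 1) ⊕
          {S : Finset (Fin ((l - 1) * k + 1)) // S.card = l}) → Fin k,
        ∀ v, ∀ i j : Fin k,
          ((oCnt (bipGraph k l) c' v i : ℤ) - oCnt (bipGraph k l) c' v j).natAbs ≤ μ := by
  classical
  refine ⟨Nat.card (Fin ((l - 1) * k + 1) ⊕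
      {S : Finset (Fin ((l - 1) * k + 1)) // S.card = l}),
    fun _ => (⟨0, by omega⟩ : Fin k), fun v i j => ?_⟩
  have hb : ∀ m : Fin k, oCnt (bipGraph k l) (fun _ => (⟨0, by omega⟩ : Fin k)) v m
      ≤ Nat.card (Fin ((l - 1) * k + 1) ⊕
        {S : Finset (Fin ((l - 1) * k + 1)) // S.card = l}) := by
    intro m
    rw [← Set.ncard_univ]
    exact Set.ncard_le_ncard (Set.subset_univ _) Set.finite_univ
  have h1 := hb i
  have h2 := hb j
  omega

/-- For `k ≥ 2`, `λ ≥ 1`, the bipartite graph `bipGraph k λ` has open `k`-balance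
number at least `λ`: every `k`-coloring has a vertex `S ∈ Y` all of whose `λ`
neighbors get the same color, so the coloring is not `(λ-1)`-balanced at `N(S)`. -/
theorem stmt4 (k l : ℕ) (hk : 2 ≤ k) (hl : 1 ≤ l)
    (c : (Fin ((l - 1) * k + 1) ⊕ {S : Finset (Fin ((l - 1) * k + 1)) // S.card = l}) → Fin k) :
    ∃ S : {S : Finset (Fin ((l - 1) * k + 1)) // S.card = l},
      (∃ col : Fin k, ∀ x ∈ S.val, c (Sum.inl x) = col) ∧
      (∃ i j : Fin k,
        (l : ℤ) - 1 <
          ((oCnt (bipGraph k l) c (Sum.inr S) i : ℤ) -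
            oCnt (bipGraph k l) c (Sum.inr S) j).natAbs) ∧
    l ≤ sInf {μ : ℕ | ∃ c' : (Fin ((l - 1) * k + 1) ⊕
          {S : Finset (Fin ((l - 1) * k + 1)) // S.card = l}) → Fin k,
        ∀ v, ∀ i j : Fin k,
          ((oCnt (bipGraph k l) c' v i : ℤ) - oCnt (bipGraph k l) c' v j).natAbs ≤ μ} := by
  obtain ⟨S, hS1, hS2⟩ := key k l hk hl c
  refine ⟨S, hS1, hS2, ?_⟩
  refine le_csInf (balanced_nonempty k l hk) ?_
  rintro μ ⟨c', hc'⟩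
  obtain ⟨T, -, i, j, hT⟩ := key k l hk hl c'
  have := hc' (Sum.inr T) i j
  omega
end

section
/- The cycle C_n admits a 2-coloring that is 1-balanced at every closed neighborhood for all n ≥ 3 (i.e., C_n ∈ CSB for all n); and C_n admits a 2-coloring that is 1-balanced at every open neighborhood if and only if n is a multiple of 4. -/
/-- The cycle graph on `n` vertices `0, 1, ..., n-1`, with `i` adjacent to `i ± 1 (mod n)`. -/
def cycGraph (n : ℕ) : SimpleGraph (Fin n) where
  Adj i j := i ≠ j ∧ ((i.val + 1) % n = j.val ∨ (j.val + 1) % n = i.val)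
  symm := ⟨by rintro i j ⟨h, h'⟩; exact ⟨h.symm, h'.symm⟩⟩
  loopless := ⟨by rintro i ⟨h, _⟩; exact h rfl⟩

section Counting
variable {α β : Type*} [DecidableEq β]

lemma pairCount (a b : α) (hab : a ≠ b) (c : α → β) (i : β) :
    {u | (u = a ∨ u = b) ∧ c u = i}.ncard =
      (if c a = i then 1 else 0) + (if c b = i then 1 else 0) := by
  by_cases ha : c a = i <;> by_cases hb : c b = i <;>
    simp only [ha, hb, if_true, if_false]
  · rw [show {u | (u = a ∨ u = b) ∧ c u = i} = {a, b} by
      ext u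
      constructor
      · exact fun h => h.1
      · rintro (rfl | rfl)
        exacts [⟨Or.inl rfl, ha⟩, ⟨Or.inr rfl, hb⟩]]
    exact Set.ncard_pair hab
  · rw [show {u | (u = a ∨ u = b) ∧ c u = i} = {a} by
      ext u
      constructor
      · rintro ⟨rfl | rfl, h⟩
        · rfl
        · exact absurd h hb
      · rintro rfl; exact ⟨Or.inl rfl, ha⟩]
    simp
  · rw [show {u | (u = a ∨ u = b) ∧ c u = i} = {b} by
      ext u
      constructor
      · rintro ⟨rfl | rfl, h⟩
        · exact absurd h ha
        · rfl
      · rintro rfl; exact ⟨Or.inr rfl, hb⟩]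
    simp
  · rw [show {u | (u = a ∨ u = b) ∧ c u = i} = ∅ by
      ext u
      simp only [Set.mem_setOf_eq, Set.mem_empty_iff_false, iff_false]
      rintro ⟨rfl | rfl, h⟩
      exacts [ha h, hb h]]
    simp

lemma tripleCount (a b d : α) (hab : a ≠ b) (had : a ≠ d) (hbd : b ≠ d) (c : α → β) (i : β) :
    {u | (u = a ∨ u = b ∨ u = d) ∧ c u = i}.ncard =
      (if c a = i then 1 else 0) +
        ((if c b = i then 1 else 0) + (if c d = i then 1 else 0)) := by
  have hS : {u | (u = b ∨ u = d) ∧ c u = i}.ncard =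
      (if c b = i then 1 else 0) + (if c d = i then 1 else 0) := pairCount b d hbd c i
  have hfin : {u | (u = b ∨ u = d) ∧ c u = i}.Finite := by
    apply ((Set.finite_singleton d).insert b).subset
    rintro u ⟨rfl | rfl, _⟩ <;> simp
  by_cases ha : c a = i
  · rw [show {u | (u = a ∨ u = b ∨ u = d) ∧ c u = i}
        = insert a {u | (u = b ∨ u = d) ∧ c u = i} by
      ext u
      constructor
      · rintro ⟨rfl | h, hi⟩
        · exact Or.inl rfl
        · exact Or.inr ⟨h, hi⟩
      · rintro (rfl | ⟨h, hi⟩)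
        · exact ⟨Or.inl rfl, ha⟩
        · exact ⟨Or.inr h, hi⟩]
    rw [Set.ncard_insert_of_notMem ?_ hfin, hS, if_pos ha]
    · omega
    · rintro ⟨rfl | rfl, _⟩
      exacts [hab rfl, had rfl]
  · rw [show {u | (u = a ∨ u = b ∨ u = d) ∧ c u = i}
        = {u | (u = b ∨ u = d) ∧ c u = i} by
      ext u
      constructor
      · rintro ⟨rfl | h, hi⟩
        · exact absurd hi ha
        · exact ⟨h, hi⟩
      · rintro ⟨h, hi⟩; exact ⟨Or.inr h, hi⟩]
    rw [hS, if_neg ha]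
    omega

end Counting

section FinStuff
variable {n : ℕ} [NeZero n]

lemma val_one_aux (hn : 3 ≤ n) : (1 : Fin n).val = 1 := by
  rw [Fin.val_one']; exact Nat.mod_eq_of_lt (by omega)

lemma add_one_val (hn : 3 ≤ n) (v : Fin n) :
    (v + 1).val = if v.val + 1 = n then 0 else v.val + 1 := by
  have : (v + 1).val = (v.val + (1 : Fin n).val) % n := rfl
  rw [this, val_one_aux hn]
  split
  · rename_i h; rw [h, Nat.mod_self]
  · exact Nat.mod_eq_of_lt (by omega)

lemma sub_one_val (hn : 3 ≤ n) (v : Fin n) :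
    (v - 1).val = if v.val = 0 then n - 1 else v.val - 1 := by
  have h : (v - 1).val = (n - (1 : Fin n).val + v.val) % n := by rw [Fin.sub_def]
  rw [h, val_one_aux hn]
  split
  · rename_i h0; rw [h0]; exact Nat.mod_eq_of_lt (by omega)
  · rename_i h0
    have : n - 1 + v.val = (v.val - 1) + n := by omega
    rw [this, Nat.add_mod_right]
    exact Nat.mod_eq_of_lt (by omega)

lemma add_one_ne (hn : 3 ≤ n) (v : Fin n) : v + 1 ≠ v := by
  intro h
  have := congrArg Fin.val h
  rw [add_one_val hn] at this
  have hv := v.isLt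
  split_ifs at this <;> omega

lemma sub_one_ne (hn : 3 ≤ n) (v : Fin n) : v - 1 ≠ v := by
  intro h
  have := congrArg Fin.val h
  rw [sub_one_val hn] at this
  have hv := v.isLt
  split_ifs at this <;> omega

lemma add_ne_sub (hn : 3 ≤ n) (v : Fin n) : v + 1 ≠ v - 1 := by
  intro h
  have := congrArg Fin.val h
  rw [add_one_val hn, sub_one_val hn] at this
  have hv := v.isLt
  split_ifs at this <;> omega

lemma cyc_adj (hn : 3 ≤ n) (v u : Fin n) :
    (cycGraph n).Adj v u ↔ (u = v + 1 ∨ u = v - 1) := by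
  have hv := v.isLt
  have hu := u.isLt
  have m1 : (v.val + 1) % n = if v.val + 1 = n then 0 else v.val + 1 := by
    split
    · rename_i h; rw [h, Nat.mod_self]
    · exact Nat.mod_eq_of_lt (by omega)
  have m1u : (u.val + 1) % n = if u.val + 1 = n then 0 else u.val + 1 := by
    split
    · rename_i h; rw [h, Nat.mod_self]
    · exact Nat.mod_eq_of_lt (by omega)
  constructor
  · rintro ⟨hne, h | h⟩
    · left
      apply Fin.ext
      rw [add_one_val hn, ← h, m1]
    · right
      apply Fin.ext
      rw [sub_one_val hn]
      rw [m1u] at h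
      split_ifs at h <;> split_ifs <;> omega
  · rintro (rfl | rfl)
    · exact ⟨fun h => add_one_ne hn v h.symm, Or.inl (by rw [add_one_val hn, m1])⟩
    · refine ⟨fun h => sub_one_ne hn v h.symm, Or.inr ?_⟩
      rw [sub_one_val hn]
      split_ifs with h0
      · rw [show n - 1 + 1 = n by omega, Nat.mod_self, h0]
      · rw [show v.val - 1 + 1 = v.val by omega]
        exact Nat.mod_eq_of_lt hv

lemma oCnt_eq_s5 (hn : 3 ≤ n) (c : Fin n → Bool) (v : Fin n) (i : Bool) :
    oCnt (cycGraph n) c v i =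
      (if c (v + 1) = i then 1 else 0) + (if c (v - 1) = i then 1 else 0) := by
  unfold oCnt
  have : {u | (cycGraph n).Adj v u ∧ c u = i}
      = {u | (u = v + 1 ∨ u = v - 1) ∧ c u = i} := by
    ext u; rw [Set.mem_setOf_eq, Set.mem_setOf_eq, cyc_adj hn]
  rw [this, pairCount _ _ (add_ne_sub hn v) c i]

lemma cCnt_eq (hn : 3 ≤ n) (c : Fin n → Bool) (v : Fin n) (i : Bool) :
    cCnt (cycGraph n) c v i =
      (if c v = i then 1 else 0) +
        ((if c (v + 1) = i then 1 else 0) + (if c (v - 1) = i then 1 else 0)) := by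
  unfold cCnt
  have : {u | (u = v ∨ (cycGraph n).Adj v u) ∧ c u = i}
      = {u | (u = v ∨ u = v + 1 ∨ u = v - 1) ∧ c u = i} := by
    ext u; rw [Set.mem_setOf_eq, Set.mem_setOf_eq, cyc_adj hn]
  rw [this, tripleCount v (v + 1) (v - 1) (fun h => add_one_ne hn v h.symm)
    (fun h => sub_one_ne hn v h.symm) (add_ne_sub hn v) c i]

end FinStuff

/-- For `n ≥ 3` the cycle `C_n` admits a 2-coloring 1-balanced at every closed
neighborhood; and it admits a 2-coloring 1-balanced at every open neighborhood
iff `4 ∣ n`. -/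
theorem stmt5 (n : ℕ) (hn : 3 ≤ n) :
    (∃ c : Fin n → Bool, ∀ v,
      ((cCnt (cycGraph n) c v true : ℤ) - cCnt (cycGraph n) c v false).natAbs ≤ 1) ∧
    ((∃ c : Fin n → Bool, ∀ v,
      ((oCnt (cycGraph n) c v true : ℤ) - oCnt (cycGraph n) c v false).natAbs ≤ 1) ↔ 4 ∣ n) := by
  haveI : NeZero n := ⟨by omega⟩
  constructor
  · -- CSB part
    refine ⟨fun i => decide (i.val % 2 = 0), fun v => ?_⟩
    set c : Fin n → Bool := fun i => decide (i.val % 2 = 0) with hc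
    have hv := v.isLt
    have hnall : ¬(c v = c (v + 1) ∧ c v = c (v - 1)) := by
      simp only [hc, decide_eq_decide]
      rw [add_one_val hn, sub_one_val hn]
      split_ifs <;> omega
    rw [cCnt_eq hn, cCnt_eq hn]
    rcases hb : c v <;> rcases hb1 : c (v + 1) <;> rcases hb2 : c (v - 1)
    all_goals try norm_num [hb, hb1, hb2]
    all_goals exact absurd ⟨hb.trans hb1.symm, hb.trans hb2.symm⟩ hnall
  · constructor
    · -- OSB → 4 ∣ n
      rintro ⟨c, hc⟩
      open Fin.CommRing in
      have hstep : ∀ u : Fin n, c (u + 2) = ! c u := by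
        intro u
        have h2 := hc (u + 1)
        rw [oCnt_eq_s5 hn, oCnt_eq_s5 hn] at h2
        have e1 : u + 1 + 1 = u + 2 := by ring
        have e2 : u + 1 - 1 = u := by ring
        rw [e1, e2] at h2
        cases h3 : c u <;> cases h4 : c (u + 2) <;>
          simp only [h3, h4, if_true, if_false] at h2 ⊢ <;> simp_all
      open Fin.CommRing in
      have claim : ∀ k : ℕ, c ((2 * k : ℕ) : Fin n) =
          if k % 2 = 0 then c 0 else ! (c 0) := by
        intro k
        induction k with
        | zero => simp
        | succ k ih =>
          have e : ((2 * (k + 1) : ℕ) : Fin n) = ((2 * k : ℕ) : Fin n) + 2 := by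
            push_cast; ring
          rw [e, hstep, ih]
          by_cases hk : k % 2 = 0
          · rw [if_pos hk, if_neg (by omega)]
          · rw [if_neg hk, if_pos (by omega)]
            simp
      open Fin.CommRing in
      have heven : n % 2 = 0 := by
        by_contra hodd
        have h1 := claim n
        rw [if_neg (by omega)] at h1
        have e : ((2 * n : ℕ) : Fin n) = 0 := by
          push_cast [Fin.natCast_self]; ring
        rw [e] at h1
        exact (Bool.self_ne_not (c 0)) h1
      have h1 := claim (n / 2)
      open Fin.CommRing in
      have e : ((2 * (n / 2) : ℕ) : Fin n) = 0 := by
        rw [show 2 * (n / 2) = n by omega]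
        exact Fin.natCast_self n
      rw [e] at h1
      by_contra h4
      rw [if_neg (by omega)] at h1
      exact (Bool.self_ne_not (c 0)) h1
    · -- 4 ∣ n → OSB
      intro h4
      refine ⟨fun i => decide (i.val % 4 < 2), fun v => ?_⟩
      set c : Fin n → Bool := fun i => decide (i.val % 4 < 2) with hc
      have hv := v.isLt
      have hne : c (v + 1) ≠ c (v - 1) := by
        simp only [hc, ne_eq, decide_eq_decide]
        rw [add_one_val hn, sub_one_val hn]
        split_ifs <;> omega
      rw [oCnt_eq_s5 hn, oCnt_eq_s5 hn]
      rcases hb1 : c (v + 1) <;> rcases hb2 : c (v - 1)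
      all_goals try norm_num [hb1, hb2]
      all_goals exact absurd (hb1.trans hb2.symm) hne
end

section
/- The path P_n admits a 2-coloring 1-balanced at every closed neighborhood and a 2-coloring 1-balanced at every open neighborhood for every n ≥ 1; moreover P_n admits a parity-balanced 2-coloring (0-balanced at N(v) for each even-degree v and 0-balanced at N[v] for each odd-degree v) if and only if n is even or n = 1. -/
/-- The path graph on `n` vertices `0, 1, ..., n-1`, with `i` adjacent to `i ± 1`. -/
def pthGraph (n : ℕ) : SimpleGraph (Fin n) where
  Adj i j := i.val + 1 = j.val ∨ j.val + 1 = i.val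
  symm := ⟨by rintro i j h; exact h.symm⟩
  loopless := ⟨by rintro i h; omega⟩

/-- A 2-coloring of `G` is parity balanced: 0-balanced at `N(v)` for every even-degree
`v` and 0-balanced at `N[v]` for every odd-degree `v`. -/
def IsPB {V : Type*} (G : SimpleGraph V) (c : V → Bool) : Prop :=
  ∀ v, (Even (deg' G v) → oCnt G c v true = oCnt G c v false) ∧
    (Odd (deg' G v) → cCnt G c v true = cCnt G c v false)


open Finset

lemma chi_sum' {V : Type*} [DecidableEq V] (S : Finset V) (c : V → Bool) :
    ((S.filter (fun u => c u = true)).card : ℤ) - (S.filter (fun u => c u = false)).card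
      = ∑ u ∈ S, (if c u then (1:ℤ) else -1) := by
  classical
  induction S using Finset.induction_on with
  | empty => simp
  | @insert a s ha ih =>
    rw [Finset.sum_insert ha, Finset.filter_insert, Finset.filter_insert]
    cases hc : c a <;>
      simp [Finset.card_insert_of_notMem, ha, Finset.mem_filter, ← ih] <;> push_cast <;> ring

lemma cnt_eq' {n : ℕ} (P : Fin n → Prop) (S : Finset (Fin n)) (hS : ∀ u, P u ↔ u ∈ S)
    (c : Fin n → Bool) (i : Bool) :
    {u | P u ∧ c u = i}.ncard = (S.filter (fun u => c u = i)).card := by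
  classical
  rw [← Set.ncard_coe_finset]
  congr 1
  ext u
  simp [hS u]

lemma diff_eq {n : ℕ} (P : Fin n → Prop) (S : Finset (Fin n)) (hS : ∀ u, P u ↔ u ∈ S)
    (c : Fin n → Bool) :
    ({u | P u ∧ c u = true}.ncard : ℤ) - {u | P u ∧ c u = false}.ncard
      = ∑ u ∈ S, (if c u then (1:ℤ) else -1) := by
  rw [cnt_eq' P S hS, cnt_eq' P S hS, chi_sum']

lemma oCnt_diff {n : ℕ} (c : Fin n → Bool) (v : Fin n) (S : Finset (Fin n))
    (hS : ∀ u, (pthGraph n).Adj v u ↔ u ∈ S) :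
    (oCnt (pthGraph n) c v true : ℤ) - oCnt (pthGraph n) c v false
      = ∑ u ∈ S, (if c u then (1:ℤ) else -1) := by
  simpa [oCnt] using diff_eq (fun u => (pthGraph n).Adj v u) S hS c

lemma cCnt_diff {n : ℕ} (c : Fin n → Bool) (v : Fin n) (S : Finset (Fin n))
    (hS : ∀ u, (pthGraph n).Adj v u ↔ u ∈ S) :
    (cCnt (pthGraph n) c v true : ℤ) - cCnt (pthGraph n) c v false
      = (if c v then (1:ℤ) else -1) + ∑ u ∈ S, (if c u then (1:ℤ) else -1) := by
  classical
  have hv : v ∉ S := by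
    intro h
    exact (pthGraph n).loopless.irrefl v ((hS v).2 h)
  have h2 : ∀ u, (u = v ∨ (pthGraph n).Adj v u) ↔ u ∈ insert v S := by
    intro u
    simp [hS u, eq_comm]
  have := diff_eq (fun u => (u = v ∨ (pthGraph n).Adj v u)) (insert v S) h2 c
  simpa [cCnt, Finset.sum_insert hv] using this

lemma deg_eq {n : ℕ} (v : Fin n) (S : Finset (Fin n))
    (hS : ∀ u, (pthGraph n).Adj v u ↔ u ∈ S) :
    deg' (pthGraph n) v = S.card := by
  rw [deg', ← Set.ncard_coe_finset]
  congr 1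
  ext u
  simp [hS u]

lemma nbhd {n : ℕ} (v : Fin n) :
    (n = 1 ∧ ∀ u, (pthGraph n).Adj v u ↔ u ∈ (∅ : Finset (Fin n))) ∨
    (∃ a : Fin n, 2 ≤ n ∧ v.val = 0 ∧ a.val = 1 ∧
      ∀ u, (pthGraph n).Adj v u ↔ u ∈ ({a} : Finset (Fin n))) ∨
    (∃ a : Fin n, 2 ≤ n ∧ v.val = n - 1 ∧ 1 ≤ v.val ∧ a.val = n - 2 ∧
      ∀ u, (pthGraph n).Adj v u ↔ u ∈ ({a} : Finset (Fin n))) ∨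
    (∃ a b : Fin n, a.val + 1 = v.val ∧ v.val + 1 = b.val ∧ b.val + 1 ≤ n ∧ a ≠ b ∧
      ∀ u, (pthGraph n).Adj v u ↔ u ∈ ({a, b} : Finset (Fin n))) := by
  have hv := v.isLt
  rcases Nat.lt_or_ge n 2 with hn | hn
  · left
    have hn1 : n = 1 := by omega
    refine ⟨hn1, fun u => ?_⟩
    have hu := u.isLt
    simp only [pthGraph, Finset.notMem_empty, iff_false]
    omega
  rcases Nat.eq_zero_or_pos v.val with h0 | h0
  · right; left
    refine ⟨⟨1, by omega⟩, hn, h0, rfl, fun u => ?_⟩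
    have hu := u.isLt
    simp only [pthGraph, Finset.mem_singleton, Fin.ext_iff]
    omega
  rcases Nat.lt_or_ge v.val (n - 1) with h1 | h1
  · right; right; right
    refine ⟨⟨v.val - 1, by omega⟩, ⟨v.val + 1, by omega⟩, by simp only [Fin.val_mk]; omega,
      by simp only [Fin.val_mk], by simp only [Fin.val_mk]; omega,
      by simp only [ne_eq, Fin.mk.injEq]; omega, fun u => ?_⟩
    have hu := u.isLt
    simp only [pthGraph, Finset.mem_insert, Finset.mem_singleton, Fin.ext_iff]
    omega
  · right; right; left
    refine ⟨⟨n - 2, by omega⟩, hn, by omega, by omega, rfl, fun u => ?_⟩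
    have hu := u.isLt
    simp only [pthGraph, Finset.mem_singleton, Fin.ext_iff]
    omega

lemma nat_eq_of_diff {a b : ℕ} (h : (a : ℤ) - b = 0) : a = b := by omega

lemma pb_interior {n : ℕ} {c : Fin n → Bool} (hc : IsPB (pthGraph n) c)
    (i : ℕ) (h : i + 2 < n) : c ⟨i + 2, h⟩ = !c ⟨i, by omega⟩ := by
  set v : Fin n := ⟨i + 1, by omega⟩ with hv
  set a : Fin n := ⟨i, by omega⟩ with ha'
  set b : Fin n := ⟨i + 2, h⟩ with hb'
  have hab : a ≠ b := by simp [ha', hb', Fin.ext_iff]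
  have hS : ∀ u, (pthGraph n).Adj v u ↔ u ∈ ({a, b} : Finset (Fin n)) := by
    intro u
    have hu := u.isLt
    simp only [pthGraph, Finset.mem_insert, Finset.mem_singleton, Fin.ext_iff, hv, ha', hb']
    omega
  have hdeg : deg' (pthGraph n) v = 2 := by
    rw [deg_eq v _ hS, Finset.card_insert_of_notMem (by simpa using hab),
      Finset.card_singleton]
  have heq := (hc v).1 (by rw [hdeg]; exact even_two)
  have hd := oCnt_diff c v _ hS
  rw [heq, sub_self, Finset.sum_pair hab] at hd
  cases hca : c a <;> cases hcb : c b <;> simp [hca, hcb] at hd ⊢ <;> omega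

lemma pb_end0 {n : ℕ} {c : Fin n → Bool} (hc : IsPB (pthGraph n) c)
    (h : 2 ≤ n) : c ⟨1, by omega⟩ = !c ⟨0, by omega⟩ := by
  set v : Fin n := ⟨0, by omega⟩ with hv
  set a : Fin n := ⟨1, by omega⟩ with ha'
  have hS : ∀ u, (pthGraph n).Adj v u ↔ u ∈ ({a} : Finset (Fin n)) := by
    intro u
    have hu := u.isLt
    simp only [pthGraph, Finset.mem_singleton, Fin.ext_iff, hv, ha']
    omega
  have hdeg : deg' (pthGraph n) v = 1 := by
    rw [deg_eq v _ hS, Finset.card_singleton]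
  have heq := (hc v).2 (by rw [hdeg]; exact odd_one)
  have hd := cCnt_diff c v _ hS
  rw [heq, sub_self, Finset.sum_singleton] at hd
  cases hca : c a <;> cases hcv : c v <;> simp [hca, hcv] at hd ⊢ <;> omega

lemma pb_end1 {n : ℕ} {c : Fin n → Bool} (hc : IsPB (pthGraph n) c)
    (h : 2 ≤ n) : c ⟨n - 1, by omega⟩ = !c ⟨n - 2, by omega⟩ := by
  set v : Fin n := ⟨n - 1, by omega⟩ with hv
  set a : Fin n := ⟨n - 2, by omega⟩ with ha'
  have hS : ∀ u, (pthGraph n).Adj v u ↔ u ∈ ({a} : Finset (Fin n)) := by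
    intro u
    have hu := u.isLt
    simp only [pthGraph, Finset.mem_singleton, Fin.ext_iff, hv, ha']
    omega
  have hdeg : deg' (pthGraph n) v = 1 := by
    rw [deg_eq v _ hS, Finset.card_singleton]
  have heq := (hc v).2 (by rw [hdeg]; exact odd_one)
  have hd := cCnt_diff c v _ hS
  rw [heq, sub_self, Finset.sum_singleton] at hd
  cases hca : c a <;> cases hcv : c v <;> simp [hca, hcv] at hd ⊢ <;> omega

lemma pb_prop {n : ℕ} {c : Fin n → Bool} (hc : IsPB (pthGraph n) c) :
    ∀ i, ∀ h : i < n, (c ⟨i, h⟩ = c ⟨i % 2, by omega⟩ ↔ i % 4 < 2) := by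
  intro i
  induction i using Nat.strong_induction_on with
  | _ i ih =>
    intro h
    rcases Nat.lt_or_ge i 2 with h2 | h2
    · have e : (⟨i % 2, by omega⟩ : Fin n) = ⟨i, h⟩ := by
        simp only [Fin.mk.injEq]; omega
      rw [e]
      simp only [true_iff]
      omega
    · obtain ⟨j, rfl⟩ : ∃ j, i = j + 2 := ⟨i - 2, by omega⟩
      have hs := pb_interior hc j h
      have hih := ih j (by omega) (by omega)
      have e : (⟨(j + 2) % 2, by omega⟩ : Fin n) = ⟨j % 2, by omega⟩ := by
        simp only [Fin.mk.injEq]; omega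
      rw [e, hs]
      have hmod : ((j + 2) % 4 < 2) ↔ ¬(j % 4 < 2) := by omega
      rw [hmod, ← hih]
      cases c (⟨j, by omega⟩ : Fin n) <;> cases c (⟨j % 2, by omega⟩ : Fin n) <;> simp

lemma pb_odd {n : ℕ} (hodd : ¬ Even n) (h3 : 3 ≤ n) {c : Fin n → Bool}
    (hc : IsPB (pthGraph n) c) : False := by
  have hn2 : n % 2 = 1 := by
    rcases Nat.even_or_odd n with he | ho
    · exact absurd he hodd
    · exact Nat.odd_iff.mp ho
  obtain ⟨m, hm⟩ : ∃ m, n = 2 * m + 1 := ⟨n / 2, by omega⟩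
  have hm1 : 1 ≤ m := by omega
  have ceq : ∀ (i j : ℕ) (hi : i < n) (hj : j < n), i = j → c ⟨i, hi⟩ = c ⟨j, hj⟩ := by
    intro i j hi hj hij
    subst hij
    rfl
  have h01 := pb_end0 hc (by omega)
  have hend := pb_end1 hc (by omega)
  have hA := pb_prop hc (2 * m) (by omega)
  have hB := pb_prop hc (2 * m - 1) (by omega)
  have eA : c ⟨2 * m % 2, by omega⟩ = c ⟨0, by omega⟩ := ceq _ _ _ _ (by omega)
  have eB : c ⟨(2 * m - 1) % 2, by omega⟩ = c ⟨1, by omega⟩ := ceq _ _ _ _ (by omega)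
  have eC : c ⟨n - 1, by omega⟩ = c ⟨2 * m, by omega⟩ := ceq _ _ _ _ (by omega)
  have eD : c ⟨n - 2, by omega⟩ = c ⟨2 * m - 1, by omega⟩ := ceq _ _ _ _ (by omega)
  rw [eA] at hA
  rw [eB] at hB
  rw [eC, eD] at hend
  have hm4 : (2 * m % 4 < 2 ∧ ¬((2 * m - 1) % 4 < 2)) ∨
      (¬(2 * m % 4 < 2) ∧ (2 * m - 1) % 4 < 2) := by omega
  cases hca : c ⟨0, by omega⟩ <;> cases hcb : c ⟨1, by omega⟩ <;>
    cases hcu : c ⟨2 * m, by omega⟩ <;> cases hcw : c ⟨2 * m - 1, by omega⟩ <;>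
    rw [hca, hcb] at h01 <;> rw [hcu, hcw] at hend <;>
    rw [hca, hcu] at hA <;> rw [hcb, hcw] at hB <;> simp at h01 hend hA hB <;> omega

lemma exists_closed (n : ℕ) :
    ∃ c : Fin n → Bool, ∀ v,
      ((cCnt (pthGraph n) c v true : ℤ) - cCnt (pthGraph n) c v false).natAbs ≤ 1 := by
  refine ⟨fun u => decide (u.val % 2 = 0), fun v => ?_⟩
  rcases nbhd v with ⟨h1, hS⟩ | ⟨a, hn, hv, ha, hS⟩ | ⟨a, hn, hv, hv1, ha, hS⟩ |
      ⟨a, b, ha, hb, hbn, hab, hS⟩ <;>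
    rw [cCnt_diff _ v _ hS]
  · by_cases h : (v : ℕ) % 2 = 0 <;> simp [h]
  · have h1 : (v : ℕ) % 2 = 0 := by omega
    have h2 : ¬((a : ℕ) % 2 = 0) := by omega
    simp [h1, h2]
  · by_cases h : (v : ℕ) % 2 = 0
    · have h2 : ¬((a : ℕ) % 2 = 0) := by omega
      simp [h, h2]
    · have h2 : (a : ℕ) % 2 = 0 := by omega
      simp [h, h2]
  · rw [Finset.sum_pair hab]
    by_cases h : (v : ℕ) % 2 = 0
    · have h2 : ¬((a : ℕ) % 2 = 0) := by omega
      have h3 : ¬((b : ℕ) % 2 = 0) := by omega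
      simp [h, h2, h3]
    · have h2 : (a : ℕ) % 2 = 0 := by omega
      have h3 : (b : ℕ) % 2 = 0 := by omega
      simp [h, h2, h3]

lemma exists_open (n : ℕ) :
    ∃ c : Fin n → Bool, ∀ v,
      ((oCnt (pthGraph n) c v true : ℤ) - oCnt (pthGraph n) c v false).natAbs ≤ 1 := by
  refine ⟨fun u => decide (u.val % 4 < 2), fun v => ?_⟩
  rcases nbhd v with ⟨h1, hS⟩ | ⟨a, hn, hv, ha, hS⟩ | ⟨a, hn, hv, hv1, ha, hS⟩ |
      ⟨a, b, ha, hb, hbn, hab, hS⟩ <;>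
    rw [oCnt_diff _ v _ hS]
  · simp
  · by_cases h : (a : ℕ) % 4 < 2 <;> simp [h] <;> split_ifs <;> simp
  · by_cases h : (a : ℕ) % 4 < 2 <;> simp [h] <;> split_ifs <;> simp
  · rw [Finset.sum_pair hab]
    by_cases h : (a : ℕ) % 4 < 2
    · have h2 : ¬((b : ℕ) % 4 < 2) := by omega
      simp [h, h2]
    · have h2 : (b : ℕ) % 4 < 2 := by omega
      simp [h, h2]

lemma pb_one {n : ℕ} (h1 : n = 1) : IsPB (pthGraph n) (fun _ => true) := by
  intro v
  have hS : ∀ u, (pthGraph n).Adj v u ↔ u ∈ (∅ : Finset (Fin n)) := by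
    intro u
    have hu := u.isLt
    have hv := v.isLt
    simp only [pthGraph, Finset.notMem_empty, iff_false]
    omega
  have hdeg : deg' (pthGraph n) v = 0 := by rw [deg_eq v _ hS]; simp
  constructor
  · intro _
    have hd := oCnt_diff (fun _ => true) v _ hS
    rw [Finset.sum_empty] at hd
    omega
  · intro hodds
    rw [hdeg] at hodds
    exact absurd hodds (by decide)

lemma pb_even {n : ℕ} (hn : 2 ≤ n) (he : Even n) :
    IsPB (pthGraph n) (fun u => decide ((u.val + 1) % 4 < 2)) := by
  have hn2 : n % 2 = 0 := Nat.even_iff.mp he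
  set c : Fin n → Bool := fun u => decide ((u.val + 1) % 4 < 2) with hcdef
  have hT : ∀ x : Fin n, ((x : ℕ) + 1) % 4 < 2 → c x = true := fun x hx => by
    simp [hcdef, hx]; omega
  have hF : ∀ x : Fin n, ¬(((x : ℕ) + 1) % 4 < 2) → c x = false := fun x hx => by
    simp [hcdef, hx]; omega
  intro v
  rcases nbhd v with ⟨h1, hS⟩ | ⟨a, hn', hv, ha, hS⟩ | ⟨a, hn', hv, hv1, ha, hS⟩ |
      ⟨a, b, ha, hb, hbn, hab, hS⟩
  · omega
  · -- left endpoint, degree 1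
    have hdeg : deg' (pthGraph n) v = 1 := by rw [deg_eq v _ hS]; simp
    constructor
    · intro hev
      rw [hdeg] at hev
      exact absurd hev (by decide)
    · intro _
      have hd := cCnt_diff c v _ hS
      rw [Finset.sum_singleton] at hd
      have h1 : ((v : ℕ) + 1) % 4 < 2 := by omega
      have h2 : ¬(((a : ℕ) + 1) % 4 < 2) := by omega
      rw [hT v h1, hF a h2] at hd
      norm_num at hd
      omega
  · -- right endpoint, degree 1
    have hdeg : deg' (pthGraph n) v = 1 := by rw [deg_eq v _ hS]; simp
    constructor
    · intro hev
      rw [hdeg] at hev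
      exact absurd hev (by decide)
    · intro _
      have hd := cCnt_diff c v _ hS
      rw [Finset.sum_singleton] at hd
      have hkey : (((v : ℕ) + 1) % 4 < 2 ∧ ¬(((a : ℕ) + 1) % 4 < 2)) ∨
          (¬(((v : ℕ) + 1) % 4 < 2) ∧ ((a : ℕ) + 1) % 4 < 2) := by omega
      rcases hkey with ⟨h1, h2⟩ | ⟨h1, h2⟩
      · rw [hT v h1, hF a h2] at hd
        norm_num at hd
        omega
      · rw [hF v h1, hT a h2] at hd
        norm_num at hd
        omega
  · -- interior, degree 2
    have hdeg : deg' (pthGraph n) v = 2 := by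
      rw [deg_eq v _ hS, Finset.card_insert_of_notMem (by simpa using hab),
        Finset.card_singleton]
    constructor
    · intro _
      have hd := oCnt_diff c v _ hS
      rw [Finset.sum_pair hab] at hd
      have hkey : ((((a : ℕ) + 1) % 4 < 2 ∧ ¬(((b : ℕ) + 1) % 4 < 2)) ∨
          (¬(((a : ℕ) + 1) % 4 < 2) ∧ ((b : ℕ) + 1) % 4 < 2)) := by omega
      rcases hkey with ⟨h1, h2⟩ | ⟨h1, h2⟩
      · rw [hT a h1, hF b h2] at hd
        norm_num at hd
        omega
      · rw [hF a h1, hT b h2] at hd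
        norm_num at hd
        omega
    · intro hodds
      rw [hdeg] at hodds
      exact absurd hodds (by decide)

/-- For every `n ≥ 1`, the path `P_n` admits a 2-coloring 1-balanced at every closed
neighborhood and a 2-coloring 1-balanced at every open neighborhood; moreover it
admits a parity-balanced 2-coloring iff `n` is even or `n = 1`. -/
theorem stmt6 (n : ℕ) (hn : 1 ≤ n) :
    (∃ c : Fin n → Bool, ∀ v,
      ((cCnt (pthGraph n) c v true : ℤ) - cCnt (pthGraph n) c v false).natAbs ≤ 1) ∧
    (∃ c : Fin n → Bool, ∀ v,
      ((oCnt (pthGraph n) c v true : ℤ) - oCnt (pthGraph n) c v false).natAbs ≤ 1) ∧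
    ((∃ c : Fin n → Bool, IsPB (pthGraph n) c) ↔ (Even n ∨ n = 1)) := by
  refine ⟨exists_closed n, exists_open n, ?_, ?_⟩
  · rintro ⟨c, hc⟩
    by_contra hcon
    push_neg at hcon
    obtain ⟨h1, h2⟩ := hcon
    have hn2 : n % 2 = 1 := by
      rcases Nat.even_or_odd n with he | ho
      · exact absurd he h1
      · exact Nat.odd_iff.mp ho
    exact pb_odd h1 (by omega) hc
  · rintro (he | h1)
    · rcases Nat.lt_or_ge n 2 with h | h
      · have h1 : n = 1 := by omega
        rw [h1] at he
        exact absurd he (by decide)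
      · exact ⟨_, pb_even h he⟩
    · exact ⟨_, pb_one h1⟩
end

section
/- If n is even, the complete graph K_n admits a 2-coloring with equal red and blue counts in every closed neighborhood (K_n ∈ CNBC). If n ≥ 3 is odd, then K_n admits a 2-coloring 1-balanced at every closed neighborhood, but admits no 2-coloring that is 1-balanced at every open neighborhood. -/
open Finset


lemma cCnt_top {n : ℕ} (c : Fin n → Bool) (v : Fin n) (i : Bool) :
    cCnt (⊤ : SimpleGraph (Fin n)) c v i = (univ.filter fun u => c u = i).card := by
  classical
  unfold cCnt
  have h : {u : Fin n | (u = v ∨ (⊤ : SimpleGraph (Fin n)).Adj v u) ∧ c u = i}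
      = ↑(univ.filter fun u => c u = i) := by
    ext u
    simp only [SimpleGraph.top_adj, Set.mem_setOf_eq, coe_filter, mem_univ, true_and]
    constructor
    · tauto
    · intro hc
      refine ⟨?_, hc⟩
      by_cases h : u = v
      · left; exact h
      · right; exact fun h' => h h'.symm
  rw [h, Set.ncard_coe_finset]

lemma oCnt_top {n : ℕ} (c : Fin n → Bool) (v : Fin n) (i : Bool) :
    oCnt (⊤ : SimpleGraph (Fin n)) c v i = ((univ.filter fun u => c u = i).erase v).card := by
  classical
  unfold oCnt
  have h : {u : Fin n | (⊤ : SimpleGraph (Fin n)).Adj v u ∧ c u = i}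
      = ↑((univ.filter fun u => c u = i).erase v) := by
    ext u
    simp only [SimpleGraph.top_adj, Set.mem_setOf_eq, coe_erase, coe_filter, mem_univ, true_and,
      Set.mem_diff, Set.mem_setOf_eq, Set.mem_singleton_iff]
    constructor
    · rintro ⟨hne, hc⟩; exact ⟨hc, fun h => hne h.symm⟩
    · rintro ⟨hc, hne⟩; exact ⟨fun h => hne h.symm, hc⟩
  rw [h, Set.ncard_coe_finset]

lemma count_lt {n m : ℕ} (h : m ≤ n) :
    (univ.filter fun u : Fin n => (decide (u.val < m)) = true).card = m := by
  rcases eq_or_lt_of_le h with rfl | h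
  · simp
  · have : (univ.filter fun u : Fin n => (decide (u.val < m)) = true)
        = Finset.Iio (⟨m, h⟩ : Fin n) := by
      ext u; simp [Fin.lt_def]
    rw [this, Fin.card_Iio]

lemma count_ge {n m : ℕ} (h : m ≤ n) :
    (univ.filter fun u : Fin n => (decide (u.val < m)) = false).card = n - m := by
  classical
  have := Finset.card_filter_add_card_filter_not
    (s := (univ : Finset (Fin n))) (p := fun u : Fin n => (decide (u.val < m)) = true)
  simp only [card_univ, Fintype.card_fin] at this
  have h2 : (univ.filter fun u : Fin n => ¬ ((decide (u.val < m)) = true))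
      = (univ.filter fun u : Fin n => (decide (u.val < m)) = false) := by
    apply Finset.filter_congr; intro u _; simp
  rw [h2, count_lt h] at this
  omega

/-- If `n` is even, `K_n` admits a 2-coloring with equal red and blue counts in every
closed neighborhood. If `n ≥ 3` is odd, `K_n` admits a 2-coloring 1-balanced at every
closed neighborhood but no 2-coloring 1-balanced at every open neighborhood. -/
theorem stmt7 (n : ℕ) :
    (Even n → ∃ c : Fin n → Bool, ∀ v,
      cCnt (⊤ : SimpleGraph (Fin n)) c v true = cCnt (⊤ : SimpleGraph (Fin n)) c v false) ∧
    (Odd n → 3 ≤ n →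
      (∃ c : Fin n → Bool, ∀ v,
        ((cCnt (⊤ : SimpleGraph (Fin n)) c v true : ℤ) -
          cCnt (⊤ : SimpleGraph (Fin n)) c v false).natAbs ≤ 1) ∧
      ¬ ∃ c : Fin n → Bool, ∀ v,
        ((oCnt (⊤ : SimpleGraph (Fin n)) c v true : ℤ) -
          oCnt (⊤ : SimpleGraph (Fin n)) c v false).natAbs ≤ 1) := by
  classical
  constructor
  · rintro ⟨m, hm⟩
    refine ⟨fun u => decide (u.val < m), fun v => ?_⟩
    rw [cCnt_top, cCnt_top, count_lt (by omega), count_ge (by omega)]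
    omega
  · rintro ⟨m, hm⟩ h3
    constructor
    · refine ⟨fun u => decide (u.val < m), fun v => ?_⟩
      rw [cCnt_top, cCnt_top, count_lt (by omega), count_ge (by omega)]
      omega
    · rintro ⟨c, hc⟩
      set T := (univ.filter fun u => c u = true) with hT
      set F := (univ.filter fun u => c u = false) with hF
      have hTF : T.card + F.card = n := by
        have := Finset.card_filter_add_card_filter_not
          (s := (univ : Finset (Fin n))) (p := fun u : Fin n => c u = true)
        simp only [card_univ, Fintype.card_fin] at this
        have h2 : (univ.filter fun u : Fin n => ¬ (c u = true)) = F := by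
          apply Finset.filter_congr; intro u _; simp
        rw [h2] at this; exact this
      have key : ∀ v, ((((T.erase v).card : ℤ)) - ((F.erase v).card : ℤ)).natAbs ≤ 1 := by
        intro v
        have := hc v
        rwa [oCnt_top, oCnt_top] at this
      rcases Finset.eq_empty_or_nonempty T with hTe | ⟨vt, hvt⟩
      · -- all false
        have hFc : F.card = n := by rw [hTe] at hTF; simpa using hTF
        obtain ⟨vf, hvf⟩ : F.Nonempty := by
          rw [← Finset.card_pos, hFc]; omega
        have h1 := key vf
        rw [Finset.card_erase_of_mem hvf] at h1
        have : (T.erase vf).card = 0 := by rw [hTe]; simp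
        rw [this] at h1
        simp only [Nat.cast_zero, zero_sub, Int.natAbs_neg, Int.natAbs_natCast] at h1
        omega
      · rcases Finset.eq_empty_or_nonempty F with hFe | ⟨vf, hvf⟩
        · have hTc : T.card = n := by rw [hFe] at hTF; simpa using hTF
          have h1 := key vt
          rw [Finset.card_erase_of_mem hvt] at h1
          have : (F.erase vt).card = 0 := by rw [hFe]; simp
          rw [this] at h1
          omega
        · have h1 := key vt
          have h2 := key vf
          have hct : c vt = true := (mem_filter.mp hvt).2
          have hcf : c vf = false := (mem_filter.mp hvf).2
          have hvtF : vt ∉ F := by simp [hF, hct]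
          have hvfT : vf ∉ T := by simp [hT, hcf]
          rw [Finset.card_erase_of_mem hvt, Finset.erase_eq_of_notMem hvtF] at h1
          rw [Finset.card_erase_of_mem hvf, Finset.erase_eq_of_notMem hvfT] at h2
          have hTpos : 1 ≤ T.card := Finset.card_pos.mpr ⟨vt, hvt⟩
          have hFpos : 1 ≤ F.card := Finset.card_pos.mpr ⟨vf, hvf⟩
          omega
end

section
/- For all m, n ≥ 1, the complete bipartite graph K_{n,m} admits a 2-coloring that is 1-balanced at every open neighborhood. If n and m are both even, K_{n,m} admits a coloring 0-balanced at every open neighborhood. If at least one of n, m is odd and (n,m) ∉ {(1,1),(1,2),(2,1)}, then K_{n,m} admits no 2-coloring that is 1-balanced at every closed neighborhood. -/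
/-- The complete bipartite graph with parts `Fin n` and `Fin m`. -/
def cbGraph (n m : ℕ) : SimpleGraph (Fin n ⊕ Fin m) where
  Adj u v := u.isLeft ≠ v.isLeft
  symm := by constructor; intro u v h; exact h.symm
  loopless := by constructor; intro u h; exact h rfl

lemma filter_bool_card {β : Type*} [Fintype β] (p : β → Bool) :
    (Finset.univ.filter fun x => p x = true).card
      + (Finset.univ.filter fun x => p x = false).card = Fintype.card β := by
  classical
  rw [show (Finset.univ.filter fun x => p x = false)
      = Finset.univ.filter fun x => ¬ (p x = true) by simp]
  rw [Finset.card_filter_add_card_filter_not, Finset.card_univ]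

lemma card_filter_lt (m k : ℕ) (h : k ≤ m) :
    (Finset.univ.filter fun j : Fin m => (j : ℕ) < k).card = k := by
  classical
  rw [show (Finset.univ.filter fun j : Fin m => (j : ℕ) < k)
      = (Finset.range k).attachFin (fun x hx => lt_of_lt_of_le (Finset.mem_range.mp hx) h) by
    ext j; simp [Finset.mem_attachFin]]
  rw [Finset.card_attachFin, Finset.card_range]

lemma oCnt_inl (n m : ℕ) (c : Fin n ⊕ Fin m → Bool) (i : Fin n) (b : Bool) :
    oCnt (cbGraph n m) c (Sum.inl i) b
      = (Finset.univ.filter fun j : Fin m => c (Sum.inr j) = b).card := by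
  unfold oCnt
  have hs : {u | (cbGraph n m).Adj (Sum.inl i) u ∧ c u = b}
      = Sum.inr '' {j : Fin m | c (Sum.inr j) = b} := by
    ext u
    cases u with
    | inl i' => simp [cbGraph]
    | inr j => simp [cbGraph]
  rw [hs, Set.ncard_image_of_injective _ Sum.inr_injective,
    show {j : Fin m | c (Sum.inr j) = b}
      = ↑(Finset.univ.filter fun j : Fin m => c (Sum.inr j) = b) by ext j; simp,
    Set.ncard_coe_finset]

lemma oCnt_inr (n m : ℕ) (c : Fin n ⊕ Fin m → Bool) (j : Fin m) (b : Bool) :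
    oCnt (cbGraph n m) c (Sum.inr j) b
      = (Finset.univ.filter fun i : Fin n => c (Sum.inl i) = b).card := by
  unfold oCnt
  have hs : {u | (cbGraph n m).Adj (Sum.inr j) u ∧ c u = b}
      = Sum.inl '' {i : Fin n | c (Sum.inl i) = b} := by
    ext u
    cases u with
    | inl i' => simp [cbGraph]
    | inr j' => simp [cbGraph]
  rw [hs, Set.ncard_image_of_injective _ Sum.inl_injective,
    show {i : Fin n | c (Sum.inl i) = b}
      = ↑(Finset.univ.filter fun i : Fin n => c (Sum.inl i) = b) by ext i; simp,
    Set.ncard_coe_finset]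

lemma cCnt_eq_s8 {V : Type*} [Fintype V] (G : SimpleGraph V) (c : V → Bool) (v : V) (i : Bool) :
    cCnt G c v i = oCnt G c v i + if c v = i then 1 else 0 := by
  unfold cCnt oCnt
  by_cases h : c v = i
  · rw [if_pos h]
    have hset : {u | (u = v ∨ G.Adj v u) ∧ c u = i} = insert v {u | G.Adj v u ∧ c u = i} := by
      ext u
      constructor
      · rintro ⟨h1 | h1, h2⟩
        · exact Or.inl h1
        · exact Or.inr ⟨h1, h2⟩
      · rintro (rfl | ⟨h1, h2⟩)
        · exact ⟨Or.inl rfl, h⟩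
        · exact ⟨Or.inr h1, h2⟩
    rw [hset, Set.ncard_insert_of_notMem (by simp) (Set.toFinite _)]
  · rw [if_neg h]
    congr 1
    ext u
    constructor
    · rintro ⟨h1 | h1, h2⟩
      · exact absurd (h1 ▸ h2) h
      · exact ⟨h1, h2⟩
    · rintro ⟨h1, h2⟩; exact ⟨Or.inr h1, h2⟩

lemma cCnt_swap (n m : ℕ) (c : Fin n ⊕ Fin m → Bool) (v : Fin m ⊕ Fin n) (b : Bool) :
    cCnt (cbGraph m n) (c ∘ Sum.swap) v b = cCnt (cbGraph n m) c v.swap b := by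
  have adj_iff : ∀ (x u : Fin m ⊕ Fin n),
      (cbGraph m n).Adj x u ↔ (cbGraph n m).Adj x.swap u.swap := by
    intro x u; cases x <;> cases u <;> simp [cbGraph]
  have hinj : Function.Injective (Sum.swap : Fin n ⊕ Fin m → Fin m ⊕ Fin n) := by
    intro a b h
    rw [← Sum.swap_swap a, ← Sum.swap_swap b, h]
  unfold cCnt
  have hs : {u | (u = v ∨ (cbGraph m n).Adj v u) ∧ (c ∘ Sum.swap) u = b}
      = Sum.swap '' {u | (u = v.swap ∨ (cbGraph n m).Adj v.swap u) ∧ c u = b} := by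
    ext u
    constructor
    · rintro ⟨h1, h2⟩
      refine ⟨u.swap, ⟨?_, h2⟩, Sum.swap_swap u⟩
      rcases h1 with rfl | h1
      · exact Or.inl rfl
      · exact Or.inr ((adj_iff v u).mp h1)
    · rintro ⟨w, ⟨h1, h2⟩, rfl⟩
      refine ⟨?_, by simpa using h2⟩
      rcases h1 with rfl | h1
      · exact Or.inl (Sum.swap_swap v)
      · refine Or.inr ?_
        rw [adj_iff v w.swap]
        simpa [Sum.swap_swap] using h1
  rw [hs]
  exact Set.ncard_image_of_injective _ hinj

lemma aux_odd (n m : ℕ) (hn : 1 ≤ n) (hm : 1 ≤ m) (hmo : Odd m)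
    (c : Fin n ⊕ Fin m → Bool)
    (hc : ∀ v, ((cCnt (cbGraph n m) c v true : ℤ) - cCnt (cbGraph n m) c v false).natAbs ≤ 1) :
    m = 1 ∧ n ≤ 2 := by
  classical
  obtain ⟨K, hK⟩ := hmo
  set At := (Finset.univ.filter fun i : Fin n => c (Sum.inl i) = true).card with hAtdef
  set Af := (Finset.univ.filter fun i : Fin n => c (Sum.inl i) = false).card with hAfdef
  set Bt := (Finset.univ.filter fun j : Fin m => c (Sum.inr j) = true).card with hBtdef
  set Bf := (Finset.univ.filter fun j : Fin m => c (Sum.inr j) = false).card with hBfdef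
  have hA : At + Af = n := by
    simpa using filter_bool_card (fun i : Fin n => c (Sum.inl i))
  have hB : Bt + Bf = m := by
    simpa using filter_bool_card (fun j : Fin m => c (Sum.inr j))
  have hcl : ∀ i : Fin n,
      (((Bt + if c (Sum.inl i) = true then 1 else 0 : ℕ) : ℤ)
        - ((Bf + if c (Sum.inl i) = false then 1 else 0 : ℕ) : ℤ)).natAbs ≤ 1 := by
    intro i
    have h := hc (Sum.inl i)
    rwa [cCnt_eq_s8, cCnt_eq_s8, oCnt_inl, oCnt_inl] at h
  have hcr : ∀ j : Fin m,
      (((At + if c (Sum.inr j) = true then 1 else 0 : ℕ) : ℤ)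
        - ((Af + if c (Sum.inr j) = false then 1 else 0 : ℕ) : ℤ)).natAbs ≤ 1 := by
    intro j
    have h := hc (Sum.inr j)
    rwa [cCnt_eq_s8, cCnt_eq_s8, oCnt_inr, oCnt_inr] at h
  have htrue : ∀ i : Fin n, c (Sum.inl i) = true → Bf = Bt + 1 := by
    intro i hci
    have h := hcl i
    rw [if_pos hci, if_neg (by simp [hci])] at h
    omega
  have hfalse : ∀ i : Fin n, c (Sum.inl i) = false → Bt = Bf + 1 := by
    intro i hci
    have h := hcl i
    rw [if_neg (by simp [hci]), if_pos hci] at h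
    omega
  have hdi : (∀ i, c (Sum.inl i) = true) ∨ (∀ i, c (Sum.inl i) = false) := by
    by_cases hex : ∃ i, c (Sum.inl i) = false
    · obtain ⟨i0, hi0⟩ := hex
      right
      intro i
      cases hci : c (Sum.inl i) with
      | false => rfl
      | true =>
        have h1 := htrue i hci
        have h2 := hfalse i0 hi0
        omega
    · left
      intro i
      cases hci : c (Sum.inl i) with
      | false => exact absurd ⟨i, hci⟩ hex
      | true => rfl
  obtain ⟨i0, _⟩ : ∃ _ : Fin n, True := ⟨⟨0, hn⟩, trivial⟩
  obtain ⟨j0, _⟩ : ∃ _ : Fin m, True := ⟨⟨0, hm⟩, trivial⟩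
  rcases hdi with hall | hall
  · have hAtn : At = n := by
      rw [hAtdef, Finset.filter_true_of_mem (fun i _ => hall i), Finset.card_univ,
        Fintype.card_fin]
    have hAf0 : Af = 0 := by omega
    have hrf : ∀ j : Fin m, c (Sum.inr j) = false := by
      intro j
      cases hcj : c (Sum.inr j) with
      | false => rfl
      | true =>
        have h := hcr j
        rw [if_pos hcj, if_neg (by simp [hcj])] at h
        omega
    have hBfm : Bf = m := by
      rw [hBfdef, Finset.filter_true_of_mem (fun j _ => hrf j), Finset.card_univ,
        Fintype.card_fin]
    have h1 := htrue i0 (hall i0)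
    have h2 := hcr j0
    rw [if_neg (by simp [hrf j0]), if_pos (hrf j0)] at h2
    omega
  · have hAfn : Af = n := by
      rw [hAfdef, Finset.filter_true_of_mem (fun i _ => hall i), Finset.card_univ,
        Fintype.card_fin]
    have hAt0 : At = 0 := by omega
    have hrt : ∀ j : Fin m, c (Sum.inr j) = true := by
      intro j
      cases hcj : c (Sum.inr j) with
      | true => rfl
      | false =>
        have h := hcr j
        rw [if_neg (by simp [hcj]), if_pos hcj] at h
        omega
    have hBtm : Bt = m := by
      rw [hBtdef, Finset.filter_true_of_mem (fun j _ => hrt j), Finset.card_univ,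
        Fintype.card_fin]
    have h1 := hfalse i0 (hall i0)
    have h2 := hcr j0
    rw [if_pos (hrt j0), if_neg (by simp [hrt j0])] at h2
    omega

/-- For `n, m ≥ 1`, `K_{n,m}` admits a 2-coloring 1-balanced at every open
neighborhood; if `n` and `m` are both even it admits one 0-balanced at every open
neighborhood; and if at least one of `n, m` is odd and
`(n,m) ∉ {(1,1),(1,2),(2,1)}`, it admits no 2-coloring 1-balanced at every closed
neighborhood. -/
theorem stmt8 (n m : ℕ) (hn : 1 ≤ n) (hm : 1 ≤ m) :
    (∃ c : Fin n ⊕ Fin m → Bool, ∀ v,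
      ((oCnt (cbGraph n m) c v true : ℤ) - oCnt (cbGraph n m) c v false).natAbs ≤ 1) ∧
    (Even n → Even m → ∃ c : Fin n ⊕ Fin m → Bool, ∀ v,
      oCnt (cbGraph n m) c v true = oCnt (cbGraph n m) c v false) ∧
    ((Odd n ∨ Odd m) →
      ¬ ((n = 1 ∧ m = 1) ∨ (n = 1 ∧ m = 2) ∨ (n = 2 ∧ m = 1)) →
      ¬ ∃ c : Fin n ⊕ Fin m → Bool, ∀ v,
        ((cCnt (cbGraph n m) c v true : ℤ) - cCnt (cbGraph n m) c v false).natAbs ≤ 1) := by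
  classical
  set c : Fin n ⊕ Fin m → Bool :=
    Sum.elim (fun i : Fin n => decide ((i : ℕ) < n / 2))
      (fun j : Fin m => decide ((j : ℕ) < m / 2)) with hcdef
  have hBt : (Finset.univ.filter fun j : Fin m => c (Sum.inr j) = true).card = m / 2 := by
    simp only [hcdef, Sum.elim_inr, decide_eq_true_eq]
    exact card_filter_lt m (m / 2) (Nat.div_le_self m 2)
  have hAt : (Finset.univ.filter fun i : Fin n => c (Sum.inl i) = true).card = n / 2 := by
    simp only [hcdef, Sum.elim_inl, decide_eq_true_eq]
    exact card_filter_lt n (n / 2) (Nat.div_le_self n 2)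
  have hBsum := filter_bool_card (fun j : Fin m => c (Sum.inr j))
  have hAsum := filter_bool_card (fun i : Fin n => c (Sum.inl i))
  rw [Fintype.card_fin] at hBsum hAsum
  refine ⟨⟨c, ?_⟩, ?_, ?_⟩
  · intro v
    cases v with
    | inl i => rw [oCnt_inl, oCnt_inl]; omega
    | inr j => rw [oCnt_inr, oCnt_inr]; omega
  · intro hne hme
    obtain ⟨a, ha⟩ := hne
    obtain ⟨b, hb⟩ := hme
    refine ⟨c, ?_⟩
    intro v
    cases v with
    | inl i => rw [oCnt_inl, oCnt_inl]; omega
    | inr j => rw [oCnt_inr, oCnt_inr]; omega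
  · rintro ho hexc ⟨c', hc'⟩
    rcases ho with ho | ho
    · have hc'' : ∀ v, ((cCnt (cbGraph m n) (c' ∘ Sum.swap) v true : ℤ)
          - cCnt (cbGraph m n) (c' ∘ Sum.swap) v false).natAbs ≤ 1 := by
        intro v
        rw [cCnt_swap, cCnt_swap]
        exact hc' v.swap
      obtain ⟨h1, h2⟩ := aux_odd m n hm hn ho (c' ∘ Sum.swap) hc''
      exact hexc (by omega)
    · obtain ⟨h1, h2⟩ := aux_odd n m hn hm ho c' hc'
      exact hexc (by omega)
end

section
/- Let W_n (n ≥ 4) denote the wheel: a cycle C_n plus a hub adjacent to every cycle vertex. If n ≡ 1, 3, or 0 (mod 4), then W_n admits a 2-coloring 1-balanced at every open neighborhood. If n ≡ 2 (mod 4) then W_n admits no 2-coloring 1-balanced at every open neighborhood. -/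
open Finset


open Finset

private lemma modsucc (n i : ℕ) (hn : 1 ≤ n) (hi : i < n) :
    (i + 1) % n = if i = n - 1 then 0 else i + 1 := by
  split
  · next h =>
      have e : i + 1 = n := by omega
      rw [e, Nat.mod_self]
  · next h => exact Nat.mod_eq_of_lt (by omega)

private lemma modpred (n i : ℕ) (hn : 1 ≤ n) (hi : i < n) :
    (i + (n - 1)) % n = if i = 0 then n - 1 else i - 1 := by
  split
  · next h =>
      subst h
      simpa using Nat.mod_eq_of_lt (show n - 1 < n by omega)
  · next h =>
    have e : i + (n - 1) = (i - 1) + n := by omega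
    rw [e, Nat.add_mod_right]
    exact Nat.mod_eq_of_lt (by omega)

private lemma modshift (n i j : ℕ) (hn : 1 ≤ n) (hi : i < n) (hj : j < n) :
    (j + 1) % n = i ↔ j = (i + (n - 1)) % n := by
  constructor
  · rintro rfl
    rw [Nat.mod_add_mod]
    have e : j + 1 + (n - 1) = j + n := by omega
    rw [e, Nat.add_mod_right, Nat.mod_eq_of_lt hj]
  · rintro rfl
    rw [Nat.mod_add_mod]
    have e : i + (n - 1) + 1 = i + n := by omega
    rw [e, Nat.add_mod_right, Nat.mod_eq_of_lt hi]



/-- The wheel graph `W_n`: a cycle on `some 0, ..., some (n-1)` together with a hub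
`none` adjacent to every cycle vertex. -/
def whlGraph (n : ℕ) : SimpleGraph (Option (Fin n)) where
  Adj u v :=
    match u, v with
    | none, some _ => True
    | some _, none => True
    | some i, some j => i ≠ j ∧ ((i.val + 1) % n = j.val ∨ (j.val + 1) % n = i.val)
    | none, none => False
  symm := by
    constructor
    rintro (_ | i) (_ | j) h
    · exact h
    · trivial
    · trivial
    · exact ⟨h.1.symm, h.2.symm⟩
  loopless := by
    constructor
    rintro (_ | i) h
    · exact h
    · exact h.1 rfl

private def nxt {n : ℕ} (i : Fin n) : Fin n := ⟨(i.val + 1) % n, Nat.mod_lt _ i.pos⟩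
private def prv {n : ℕ} (i : Fin n) : Fin n := ⟨(i.val + (n - 1)) % n, Nat.mod_lt _ i.pos⟩

private lemma oCnt_some {n : ℕ} (hn : 4 ≤ n) (c : Option (Fin n) → Bool) (i : Fin n) (col : Bool) :
    oCnt (whlGraph n) c (some i) col =
      (if c none = col then 1 else 0) + (if c (some (nxt i)) = col then 1 else 0)
        + (if c (some (prv i)) = col then 1 else 0) := by
  classical
  have hpos : 0 < n := by omega
  set a := nxt i with ha
  set b := prv i with hb
  have hav : (a : ℕ) = if i.val = n - 1 then 0 else i.val + 1 := by
    rw [show (a : ℕ) = (i.val + 1) % n from rfl, modsucc n i.val (by omega) i.isLt]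
  have hbv : (b : ℕ) = if i.val = 0 then n - 1 else i.val - 1 := by
    rw [show (b : ℕ) = (i.val + (n - 1)) % n from rfl, modpred n i.val (by omega) i.isLt]
  have hne1 : a ≠ i := by
    intro h
    have h2 := congrArg Fin.val h
    rw [hav] at h2
    split_ifs at h2 <;> omega
  have hne2 : b ≠ i := by
    intro h
    have h2 := congrArg Fin.val h
    rw [hbv] at h2
    split_ifs at h2 <;> omega
  have hne3 : a ≠ b := by
    intro h
    have h2 := congrArg Fin.val h
    rw [hav, hbv] at h2
    have hi := i.isLt
    split_ifs at h2 <;> omega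
  have hset : {u | (whlGraph n).Adj (some i) u ∧ c u = col}
      = ↑(({none, some a, some b} : Finset (Option (Fin n))).filter (fun u => c u = col)) := by
    ext u
    simp only [Set.mem_setOf_eq, Finset.coe_filter, Finset.mem_insert, Finset.mem_singleton]
    constructor
    · rintro ⟨hadj, hc⟩
      refine ⟨?_, hc⟩
      match u with
      | none => tauto
      | some j =>
        obtain ⟨hij, hor⟩ := hadj
        rcases hor with h | h
        · right; left
          simp only [ha, nxt, Option.some.injEq, Fin.ext_iff]
          exact h.symm
        · right; right
          simp only [hb, prv, Option.some.injEq, Fin.ext_iff]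
          exact (modshift n i.val j.val (by omega) i.isLt j.isLt).mp h
    · rintro ⟨hu, hc⟩
      refine ⟨?_, hc⟩
      rcases hu with rfl | rfl | rfl
      · trivial
      · exact ⟨hne1.symm ∘ Eq.symm ∘ Eq.symm, Or.inl (by simp [ha, nxt])⟩
      · refine ⟨fun h => hne2 h.symm, Or.inr ?_⟩
        exact (modshift n i.val b.val (by omega) i.isLt b.isLt).mpr (by simp [hb, prv])
  rw [oCnt, hset, Set.ncard_coe_finset, Finset.card_filter]
  rw [Finset.sum_insert (by simp), Finset.sum_insert (by simp [hne3]), Finset.sum_singleton]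
  ring

private lemma oCnt_none {n : ℕ} (c : Option (Fin n) → Bool) (col : Bool) :
    oCnt (whlGraph n) c none col
      = (Finset.univ.filter (fun j : Fin n => c (some j) = col)).card := by
  classical
  have hset : {u | (whlGraph n).Adj none u ∧ c u = col}
      = ↑((Finset.univ.filter (fun j : Fin n => c (some j) = col)).image some) := by
    ext u
    match u with
    | none => simp [whlGraph]
    | some j => simp [whlGraph]
  rw [oCnt, hset, Set.ncard_coe_finset,
    Finset.card_image_of_injective _ (Option.some_injective _)]

private lemma vert (x y z : Bool) (h : ¬(x = y ∧ y = z)) :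
    ((((if x = true then 1 else 0) + (if y = true then 1 else 0) + (if z = true then 1 else 0) : ℕ) : ℤ)
      - (((if x = false then 1 else 0) + (if y = false then 1 else 0)
          + (if z = false then 1 else 0) : ℕ) : ℤ)).natAbs ≤ 1 := by
  revert h; cases x <;> cases y <;> cases z <;> decide

private lemma vert' (x y z : Bool)
    (h : ((((if x = true then 1 else 0) + (if y = true then 1 else 0) + (if z = true then 1 else 0) : ℕ) : ℤ)
      - (((if x = false then 1 else 0) + (if y = false then 1 else 0)
          + (if z = false then 1 else 0) : ℕ) : ℤ)).natAbs ≤ 1) : ¬(x = y ∧ y = z) := by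
  revert h; cases x <;> cases y <;> cases z <;> decide

private lemma finCard (n : ℕ) (P : ℕ → Prop) [DecidablePred P] :
    (Finset.univ.filter (fun i : Fin n => P i.val)).card = ((Finset.range n).filter P).card := by
  rw [Finset.card_filter, Finset.card_filter, ← Fin.sum_univ_eq_sum_range (fun j => if P j then 1 else 0)]

private lemma cardEven (N : ℕ) :
    ((Finset.range N).filter (fun j => j % 2 = 0)).card = (N + 1) / 2 := by
  induction N with
  | zero => simp
  | succ N ih =>
    rw [Finset.range_add_one, Finset.filter_insert]
    split
    · rw [Finset.card_insert_of_notMem (by simp), ih]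
      omega
    · rw [ih]; omega

private lemma cardFour (N : ℕ) :
    ((Finset.range N).filter (fun j => j % 4 < 2)).card = 2 * (N / 4) + min (N % 4) 2 := by
  induction N with
  | zero => simp
  | succ N ih =>
    rw [Finset.range_add_one, Finset.filter_insert]
    split
    · rw [Finset.card_insert_of_notMem (by simp), ih]
      omega
    · rw [ih]; omega

private lemma cardCompl {n : ℕ} (p : Fin n → Prop) [DecidablePred p] :
    (Finset.univ.filter (fun i => ¬ p i)).card = n - (Finset.univ.filter p).card := by
  have := Finset.card_filter_add_card_filter_not (s := (Finset.univ : Finset (Fin n))) p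
  simp only [Finset.card_univ, Fintype.card_fin] at this
  omega

private lemma filterFalse {n : ℕ} (c : Option (Fin n) → Bool) :
    (Finset.univ.filter (fun j : Fin n => c (some j) = false)).card
      = n - (Finset.univ.filter (fun j : Fin n => c (some j) = true)).card := by
  rw [← cardCompl]
  congr 1
  apply Finset.filter_congr
  intro j _
  simp

private lemma case4 {n : ℕ} (hn : 4 ≤ n) (h4 : n % 4 = 0) :
    ∃ c : Option (Fin n) → Bool, ∀ v,
      ((oCnt (whlGraph n) c v true : ℤ) - oCnt (whlGraph n) c v false).natAbs ≤ 1 := by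
  classical
  refine ⟨fun u => match u with | none => true | some i => decide (i.val % 4 < 2), ?_⟩
  set c : Option (Fin n) → Bool :=
    fun u => match u with | none => true | some i => decide (i.val % 4 < 2) with hc
  have hcs : ∀ j : Fin n, c (some j) = decide (j.val % 4 < 2) := fun j => rfl
  have hcn : c none = true := rfl
  intro v
  match v with
  | none =>
    rw [oCnt_none c true, oCnt_none c false]
    have ht : (Finset.univ.filter (fun j : Fin n => c (some j) = true)).card = n / 2 := by
      simp only [hcs, decide_eq_true_iff]
      rw [finCard n (fun x => x % 4 < 2), cardFour]
      omega
    rw [filterFalse, ht]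
    omega
  | some i =>
    rw [oCnt_some hn c i true, oCnt_some hn c i false]
    apply vert
    rintro ⟨h1, h2⟩
    rw [hcn, hcs, hcs] at *
    rw [← h1] at h2
    simp only [true_eq_decide_iff, decide_eq_true_iff] at h1 h2
    have hd : (4 : ℕ) ∣ n := ⟨n / 4, by omega⟩
    have h1' : (i.val + 1) % n % 4 < 2 := h1
    have h2' : (i.val + (n - 1)) % n % 4 < 2 := h2
    rw [Nat.mod_mod_of_dvd _ hd] at h1' h2'
    omega

private lemma caseOdd {n : ℕ} (hn : 4 ≤ n) (hodd : n % 2 = 1) :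
    ∃ c : Option (Fin n) → Bool, ∀ v,
      ((oCnt (whlGraph n) c v true : ℤ) - oCnt (whlGraph n) c v false).natAbs ≤ 1 := by
  classical
  have hpos : 0 < n := by omega
  set m : ℕ := (n + 1) / 2 with hm0
  have hm : 2 * m = n + 1 := by omega
  have comp1 : ∀ y, y < n → (((2 * y) % n) * m) % n = y := by
    intro y hy
    rw [Nat.mod_mul_mod, show 2 * y * m = y * (2 * m) by ring, hm,
      show y * (n + 1) = y + y * n by ring, Nat.add_mul_mod_self_right, Nat.mod_eq_of_lt hy]
  have comp2 : ∀ x, x < n → (2 * ((x * m) % n)) % n = x := by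
    intro x hx
    rw [Nat.mul_mod_mod, show 2 * (x * m) = x * (2 * m) by ring, hm,
      show x * (n + 1) = x + x * n by ring, Nat.add_mul_mod_self_right, Nat.mod_eq_of_lt hx]
  set Q : ℕ → Prop := fun x => x % 2 = 0 ∧ x ≠ n - 1 with hQ
  refine ⟨fun u => match u with | none => true | some i => decide (Q ((i.val * m) % n)), ?_⟩
  set c : Option (Fin n) → Bool :=
    fun u => match u with | none => true | some i => decide (Q ((i.val * m) % n)) with hc
  have hcs : ∀ j : Fin n, c (some j) = decide (Q ((j.val * m) % n)) := fun j => rfl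
  have hcn : c none = true := rfl
  intro v
  match v with
  | none =>
    rw [oCnt_none c true, oCnt_none c false]
    have ht : (Finset.univ.filter (fun j : Fin n => c (some j) = true)).card = (n - 1) / 2 := by
      simp only [hcs, decide_eq_true_iff]
      rw [finCard n (fun x => Q ((x * m) % n))]
      have hbij : ((Finset.range n).filter (fun x => Q ((x * m) % n))).card
          = ((Finset.range n).filter Q).card := by
        apply Finset.card_nbij' (i := fun x => (x * m) % n) (j := fun x => (2 * x) % n)
        · intro a ha
          simp only [Finset.mem_coe, Finset.mem_filter, Finset.mem_range] at *
          exact ⟨Nat.mod_lt _ hpos, ha.2⟩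
        · intro a ha
          simp only [Finset.mem_coe, Finset.mem_filter, Finset.mem_range] at *
          rw [comp1 a ha.1]
          exact ⟨Nat.mod_lt _ hpos, ha.2⟩
        · intro a ha
          simp only [Finset.mem_coe, Finset.mem_filter, Finset.mem_range] at ha
          exact comp2 a ha.1
        · intro a ha
          simp only [Finset.mem_coe, Finset.mem_filter, Finset.mem_range] at ha
          exact comp1 a ha.1
      rw [hbij]
      have herase : (Finset.range n).filter Q
          = ((Finset.range n).filter (fun x => x % 2 = 0)).erase (n - 1) := by
        ext x
        simp only [Finset.mem_filter, Finset.mem_range, Finset.mem_erase, hQ]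
        tauto
      rw [herase, Finset.card_erase_of_mem (by
        simp only [Finset.mem_filter, Finset.mem_range]
        omega), cardEven]
      omega
    rw [filterFalse, ht]
    omega
  | some i =>
    rw [oCnt_some hn c i true, oCnt_some hn c i false]
    apply vert
    rintro ⟨h1, h2⟩
    rw [hcn, hcs, hcs] at *
    rw [← h1] at h2
    simp only [true_eq_decide_iff] at h1 h2
    have h1' : Q (((i.val + 1) % n * m) % n) := h1
    have h2' : Q (((i.val + (n - 1)) % n * m) % n) := h2
    set A : ℕ := (i.val + (n - 1)) % n with hA
    have hAlt : A < n := Nat.mod_lt _ hpos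
    have hstep : (i.val + 1) % n = (A + 2) % n := by
      rw [hA, Nat.mod_add_mod, show i.val + (n - 1) + 2 = (i.val + 1) + n by omega,
        Nat.add_mod_right]
    set pa : ℕ := (A * m) % n with hpa
    have hpalt : pa < n := Nat.mod_lt _ hpos
    have hpb : ((i.val + 1) % n * m) % n = (pa + 1) % n := by
      rw [hstep, Nat.mod_mul_mod, show (A + 2) * m = A * m + 2 * m by ring, hm,
        show A * m + (n + 1) = (A * m + 1) + n by ring, Nat.add_mod_right, hpa,
        ← Nat.mod_add_mod]
    rw [hpb] at h1'
    obtain ⟨he2, hne2⟩ := h2'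
    have hlt : pa + 1 < n := by omega
    rw [Nat.mod_eq_of_lt hlt] at h1'
    obtain ⟨he1, -⟩ := h1'
    omega

private lemma case2 {n : ℕ} (hn : 4 ≤ n) (h2 : n % 4 = 2) :
    ¬ ∃ c : Option (Fin n) → Bool, ∀ v,
      ((oCnt (whlGraph n) c v true : ℤ) - oCnt (whlGraph n) c v false).natAbs ≤ 1 := by
  classical
  rintro ⟨c, hc⟩
  have hpos : 0 < n := by omega
  set b : Fin n → Bool := fun j => c (some j) == c none with hb
  set N2 : Fin n → Fin n := fun x => ⟨(x.val + 2) % n, Nat.mod_lt _ hpos⟩ with hN2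
  have hcon : ∀ x : Fin n, ¬(b x = true ∧ b (N2 x) = true) := by
    rintro x ⟨hx1, hx2⟩
    have hv := hc (some (nxt x))
    rw [oCnt_some hn c _ true, oCnt_some hn c _ false] at hv
    have hni := vert' _ _ _ hv
    apply hni
    have e1 : nxt (nxt x) = N2 x := by
      apply Fin.ext
      show ((x.val + 1) % n + 1) % n = (x.val + 2) % n
      rw [Nat.mod_add_mod]
    have e2 : prv (nxt x) = x := by
      apply Fin.ext
      show ((x.val + 1) % n + (n - 1)) % n = x.val
      rw [Nat.mod_add_mod, show x.val + 1 + (n - 1) = x.val + n by omega, Nat.add_mod_right,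
        Nat.mod_eq_of_lt x.isLt]
    rw [e1, e2]
    simp only [hb, beq_iff_eq] at hx1 hx2
    exact ⟨hx2.symm, hx2.trans hx1.symm⟩
  -- hub count
  have hhub := hc none
  rw [oCnt_none c true, oCnt_none c false, filterFalse] at hhub
  have hle : (Finset.univ.filter (fun j : Fin n => c (some j) = true)).card ≤ n := by
    refine le_trans (Finset.card_filter_le _ _) (by simp)
  have hct : (Finset.univ.filter (fun j : Fin n => c (some j) = true)).card = n / 2 := by
    omega
  have htn : (Finset.univ.filter (fun j : Fin n => b j = true)).card = n / 2 := by
    cases hcn : c none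
    · have he : (Finset.univ.filter (fun j : Fin n => b j = true))
          = Finset.univ.filter (fun j : Fin n => c (some j) = false) := by
        apply Finset.filter_congr
        intro j _
        simp [hb, hcn]
      rw [he, filterFalse, hct]
      omega
    · have he : (Finset.univ.filter (fun j : Fin n => b j = true))
          = Finset.univ.filter (fun j : Fin n => c (some j) = true) := by
        apply Finset.filter_congr
        intro j _
        simp [hb, hcn]
      rw [he, hct]
  -- sum argument
  have hbound : ∀ x : Fin n, ((if b x = true then 1 else 0) + (if b (N2 x) = true then 1 else 0) : ℕ) ≤ 1 := by
    intro x
    have h0 := hcon x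
    cases hbx : b x <;> cases hbn : b (N2 x)
    · simp
    · simp
    · simp
    · exact absurd ⟨hbx, hbn⟩ h0
  have hsum : ∑ x : Fin n, ((if b x = true then 1 else 0) + (if b (N2 x) = true then 1 else 0) : ℕ)
      = 2 * (n / 2) := by
    rw [Finset.sum_add_distrib]
    have h1 : ∑ x : Fin n, (if b x = true then 1 else 0 : ℕ)
        = (Finset.univ.filter (fun j : Fin n => b j = true)).card :=
      (Finset.card_filter _ _).symm
    have hshift : ∑ x : Fin n, (if b (N2 x) = true then 1 else 0 : ℕ)
        = ∑ x : Fin n, (if b x = true then 1 else 0 : ℕ) := by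
      refine Finset.sum_nbij' (i := N2) (j := fun x => ⟨(x.val + (n - 2)) % n, Nat.mod_lt _ hpos⟩)
        (fun a _ => Finset.mem_univ _) (fun a _ => Finset.mem_univ _) ?_ ?_ (fun a _ => rfl)
      · intro a _
        apply Fin.ext
        show ((a.val + 2) % n + (n - 2)) % n = a.val
        rw [Nat.mod_add_mod, show a.val + 2 + (n - 2) = a.val + n by omega, Nat.add_mod_right,
          Nat.mod_eq_of_lt a.isLt]
      · intro a _
        apply Fin.ext
        show ((a.val + (n - 2)) % n + 2) % n = a.val
        rw [Nat.mod_add_mod, show a.val + (n - 2) + 2 = a.val + n by omega, Nat.add_mod_right,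
          Nat.mod_eq_of_lt a.isLt]
    rw [h1, hshift, h1, htn]
    ring
  have hall : ∀ x : Fin n, ((if b x = true then 1 else 0) + (if b (N2 x) = true then 1 else 0) : ℕ) = 1 := by
    by_contra hno
    push_neg at hno
    obtain ⟨x0, hx0⟩ := hno
    have hlt : ∑ x : Fin n, ((if b x = true then 1 else 0) + (if b (N2 x) = true then 1 else 0) : ℕ)
        < ∑ _x : Fin n, (1 : ℕ) := by
      apply Finset.sum_lt_sum (fun i _ => hbound i)
      exact ⟨x0, Finset.mem_univ _, by have := hbound x0; omega⟩
    rw [hsum] at hlt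
    simp only [Finset.sum_const, Finset.card_univ, Fintype.card_fin, smul_eq_mul, mul_one] at hlt
    omega
  have hstep : ∀ x : Fin n, b (N2 x) = !(b x) := by
    intro x
    have h1 := hall x
    have h0 := hcon x
    cases hbx : b x <;> cases hbn : b (N2 x)
    · rw [hbx, hbn] at h1; simp at h1
    · rfl
    · rfl
    · exact absurd ⟨hbx, hbn⟩ h0
  set g : ℕ → Bool := fun k => b ⟨(2 * k) % n, Nat.mod_lt _ hpos⟩ with hg
  have hgs : ∀ k, g (k + 1) = !(g k) := by
    intro k
    have hs := hstep ⟨(2 * k) % n, Nat.mod_lt _ hpos⟩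
    have e : N2 ⟨(2 * k) % n, Nat.mod_lt _ hpos⟩ = ⟨(2 * (k + 1)) % n, Nat.mod_lt _ hpos⟩ := by
      apply Fin.ext
      show ((2 * k) % n + 2) % n = (2 * (k + 1)) % n
      rw [Nat.mod_add_mod, show 2 * k + 2 = 2 * (k + 1) from by ring]
    rw [e] at hs
    exact hs
  have hper : ∀ j, g (2 * j) = g 0 ∧ g (2 * j + 1) = !(g 0) := by
    intro j
    induction j with
    | zero => exact ⟨rfl, hgs 0⟩
    | succ j ih =>
      have h1 : g (2 * (j + 1)) = g 0 := by
        rw [show 2 * (j + 1) = (2 * j + 1) + 1 by ring, hgs, ih.2, Bool.not_not]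
      exact ⟨h1, by rw [hgs, h1]⟩
  obtain ⟨j0, hj0⟩ : ∃ j, n / 2 = 2 * j + 1 := ⟨(n - 2) / 4, by omega⟩
  have hend : g (n / 2) = !(g 0) := by rw [hj0]; exact (hper j0).2
  have hend2 : g (n / 2) = g 0 := by
    have e : ((2 * (n / 2)) % n : ℕ) = (2 * 0) % n := by
      rw [show 2 * (n / 2) = n by omega, Nat.mod_self]
      simp
    exact congrArg b (Fin.ext e)
  rw [hend2] at hend
  exact absurd hend (by cases g 0 <;> simp)

/-- For `n ≥ 4`: if `n ≡ 0, 1, 3 (mod 4)` then the wheel `W_n` admits a 2-coloring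
1-balanced at every open neighborhood; if `n ≡ 2 (mod 4)` it admits none. -/
theorem stmt9 (n : ℕ) (hn : 4 ≤ n) :
    ((n % 4 = 1 ∨ n % 4 = 3 ∨ n % 4 = 0) →
      ∃ c : Option (Fin n) → Bool, ∀ v,
        ((oCnt (whlGraph n) c v true : ℤ) - oCnt (whlGraph n) c v false).natAbs ≤ 1) ∧
    (n % 4 = 2 →
      ¬ ∃ c : Option (Fin n) → Bool, ∀ v,
        ((oCnt (whlGraph n) c v true : ℤ) - oCnt (whlGraph n) c v false).natAbs ≤ 1) := by
  constructor
  · rintro (h | h | h)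
    · exact caseOdd hn (by omega)
    · exact caseOdd hn (by omega)
    · exact case4 hn h
  · exact case2 hn
end

section
/- For n ≥ 4, the wheel W_n admits a 2-coloring that is 1-balanced at every closed neighborhood if and only if n = 6. -/
instance decAdjWhl (n : ℕ) : DecidableRel (whlGraph n).Adj := fun u v =>
  match u, v with
  | none, none => Decidable.isFalse id
  | none, some _ => Decidable.isTrue trivial
  | some _, none => Decidable.isTrue trivial
  | some _, some _ => instDecidableAnd

lemma cCnt_eq_card {n : ℕ} (c : Option (Fin n) → Bool) (v : Option (Fin n)) (b : Bool) :
    cCnt (whlGraph n) c v b =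
      ((Finset.univ : Finset (Option (Fin n))).filter
        fun u => (u = v ∨ (whlGraph n).Adj v u) ∧ c u = b).card := by
  rw [cCnt, ← Set.ncard_coe_finset]
  congr 1
  ext u
  simp

lemma ite_toNat (b : Bool) : (if b = true then 1 else 0) = b.toNat := by cases b <;> rfl

lemma bpair (x : Bool) : (if x = true then 1 else 0) + (if x = false then 1 else 0) = 1 := by
  cases x <;> rfl

/-- For `n ≥ 4`, the wheel `W_n` admits a 2-coloring 1-balanced at every closed
neighborhood iff `n = 6`. -/
theorem stmt10 (n : ℕ) (hn : 4 ≤ n) :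
    (∃ c : Option (Fin n) → Bool, ∀ v,
      ((cCnt (whlGraph n) c v true : ℤ) - cCnt (whlGraph n) c v false).natAbs ≤ 1) ↔ n = 6 := by
  constructor
  · rintro ⟨c, hc⟩
    haveI : NeZero n := ⟨by omega⟩
    set t : Fin n → Bool := fun i => c (some i) with ht
    -- basic Fin facts
    have hone : (1 : Fin n).val = 1 := by
      rw [Fin.val_one']; exact Nat.mod_eq_of_lt (by omega)
    have hvadd : ∀ i : Fin n, (i + 1).val = (i.val + 1) % n := by
      intro i; rw [Fin.val_add, hone]
    have hsucc : ∀ i j : Fin n, (i.val + 1) % n = j.val ↔ i + 1 = j := by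
      intro i j
      rw [← hvadd]
      exact ⟨fun h => Fin.val_injective h, fun h => by rw [h]⟩
    have hd1 : ∀ i : Fin n, i ≠ i + 1 := by
      intro i h
      have h2 := congrArg Fin.val h
      rw [hvadd] at h2
      have hiv := i.isLt
      rcases Nat.lt_or_ge (i.val + 1) n with h' | h'
      · rw [Nat.mod_eq_of_lt h'] at h2; omega
      · rw [Nat.mod_eq_sub_mod h', Nat.mod_eq_of_lt (by omega)] at h2
        omega
    have hd2 : ∀ i : Fin n, i - 1 ≠ i := by
      intro i h
      apply hd1 (i - 1)
      rw [sub_add_cancel, h]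
    have hd3 : ∀ i : Fin n, i - 1 ≠ i + 1 := by
      intro i h
      have h' : i = i + 1 + 1 := by
        have h2 := congrArg (· + 1) h
        simpa [sub_add_cancel] using h2
      have h2 := congrArg Fin.val h'
      rw [hvadd, hvadd, Nat.mod_add_mod] at h2
      have hiv := i.isLt
      rcases Nat.lt_or_ge (i.val + 2) n with h'' | h''
      · rw [Nat.mod_eq_of_lt h''] at h2; omega
      · rw [Nat.mod_eq_sub_mod h'', Nat.mod_eq_of_lt (by omega)] at h2; omega
    -- neighborhood of a cycle vertex
    have nb : ∀ i : Fin n,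
        ((Finset.univ : Finset (Option (Fin n))).filter
          fun u => u = some i ∨ (whlGraph n).Adj (some i) u)
        = {none, some (i - 1), some i, some (i + 1)} := by
      intro i
      ext u
      cases u with
      | none => simp only [Finset.mem_filter, Finset.mem_univ, true_and]; simp [whlGraph]
      | some j =>
        simp only [Finset.mem_filter, Finset.mem_univ, true_and, Finset.mem_insert,
          Finset.mem_singleton, Option.some.injEq, reduceCtorEq, false_or]
        constructor
        · rintro (h | h)
          · right; left; exact h
          · rcases h.2 with h' | h'
            · right; right; exact ((hsucc i j).mp h').symm
            · left
              have hji : j + 1 = i := (hsucc j i).mp h'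
              rw [← hji, add_sub_cancel_right]
        · rintro (h | h | h)
          · right
            subst h
            exact ⟨fun h' => hd2 i h'.symm, Or.inr ((hsucc _ i).mpr (sub_add_cancel i 1))⟩
          · left; exact h
          · right
            subst h
            exact ⟨hd1 i, Or.inl ((hsucc i _).mpr rfl)⟩
    -- count at a cycle vertex
    have cnt : ∀ (i : Fin n) (b : Bool), cCnt (whlGraph n) c (some i) b =
        (if c none = b then 1 else 0) + (if t (i - 1) = b then 1 else 0)
          + (if t i = b then 1 else 0) + (if t (i + 1) = b then 1 else 0) := by
      intro i b
      rw [cCnt_eq_card]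
      have hre : ((Finset.univ : Finset (Option (Fin n))).filter
            fun u => (u = some i ∨ (whlGraph n).Adj (some i) u) ∧ c u = b)
          = (((Finset.univ : Finset (Option (Fin n))).filter
            fun u => u = some i ∨ (whlGraph n).Adj (some i) u).filter fun u => c u = b) := by
        rw [Finset.filter_filter]
      rw [hre, nb i]
      rw [show ({none, some (i - 1), some i, some (i + 1)} : Finset (Option (Fin n)))
        = insert none (insert (some (i - 1)) (insert (some i)
            ({some (i + 1)} : Finset (Option (Fin n))))) from rfl]
      rw [Finset.card_filter,
        Finset.sum_insert (by simp),
        Finset.sum_insert (by simp [hd2 i, hd3 i]),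
        Finset.sum_insert (by simp [hd1 i]),
        Finset.sum_singleton]
      simp only [ht]
      ring
    -- window equation
    have window : ∀ i : Fin n,
        (c none).toNat + (t (i - 1)).toNat + (t i).toNat + (t (i + 1)).toNat = 2 := by
      intro i
      have h1 := hc (some i)
      have e1 := cnt i true
      have e2 := cnt i false
      have p1 := bpair (c none)
      have p2 := bpair (t (i - 1))
      have p3 := bpair (t i)
      have p4 := bpair (t (i + 1))
      have hCt : cCnt (whlGraph n) c (some i) true = 2 := by omega
      rw [e1] at hCt
      simpa [ite_toNat] using hCt
    -- hub counts
    have hubcnt : ∀ b : Bool, cCnt (whlGraph n) c none b =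
        ((Finset.univ : Finset (Option (Fin n))).filter fun u => c u = b).card := by
      intro b
      rw [cCnt_eq_card]
      congr 1
      ext u
      cases u <;> simp only [Finset.mem_filter, Finset.mem_univ, true_and] <;> simp [whlGraph]
    have hubT : cCnt (whlGraph n) c none true = (c none).toNat + ∑ i : Fin n, (t i).toNat := by
      rw [hubcnt, Finset.card_filter, Fintype.sum_option]
      simp [ite_toNat, ht]
    have hubsum : cCnt (whlGraph n) c none true + cCnt (whlGraph n) c none false = n + 1 := by
      rw [hubcnt, hubcnt, Finset.card_filter, Finset.card_filter, ← Finset.sum_add_distrib]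
      calc (∑ u : Option (Fin n),
            ((if c u = true then 1 else 0) + (if c u = false then 1 else 0)))
          = ∑ _u : Option (Fin n), 1 := Finset.sum_congr rfl (fun u _ => bpair (c u))
        _ = n + 1 := by simp
    -- sum of window equations
    have eshift1 : ∑ i : Fin n, (t (i - 1)).toNat = ∑ i : Fin n, (t i).toNat :=
      Fintype.sum_equiv (Equiv.subRight (1 : Fin n)) _ _ (fun _ => rfl)
    have eshift2 : ∑ i : Fin n, (t (i + 1)).toNat = ∑ i : Fin n, (t i).toNat :=
      Fintype.sum_equiv (Equiv.addRight (1 : Fin n)) _ _ (fun _ => rfl)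
    have big : n * (c none).toNat + 3 * ∑ i : Fin n, (t i).toNat = 2 * n := by
      have hb : ∑ i : Fin n,
          ((c none).toNat + (t (i - 1)).toNat + (t i).toNat + (t (i + 1)).toNat)
          = ∑ _i : Fin n, 2 := Finset.sum_congr rfl (fun i _ => window i)
      rw [Finset.sum_add_distrib, Finset.sum_add_distrib, Finset.sum_add_distrib,
        eshift1, eshift2, Finset.sum_const, Finset.sum_const] at hb
      simp only [Finset.card_univ, Fintype.card_fin, smul_eq_mul] at hb
      omega
    -- conclude
    have h0 := hc none
    cases hcn : c none with
    | true => rw [hcn] at hubT big; simp only [Bool.toNat_true] at hubT big; omega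
    | false => rw [hcn] at hubT big; simp only [Bool.toNat_false] at hubT big; omega
  · intro h
    subst h
    refine ⟨fun o => o.elim true (fun i => decide (i = 0 ∨ i = 3)), ?_⟩
    have key : ∀ v : Option (Fin 6),
        (((((Finset.univ : Finset (Option (Fin 6))).filter
            fun u => (u = v ∨ (whlGraph 6).Adj v u) ∧
              (u.elim true (fun i => decide (i = 0 ∨ i = 3)) : Bool) = true).card : ℤ))
          - (((Finset.univ : Finset (Option (Fin 6))).filter
            fun u => (u = v ∨ (whlGraph 6).Adj v u) ∧
              (u.elim true (fun i => decide (i = 0 ∨ i = 3)) : Bool) = false).card : ℤ)).natAbs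
          ≤ 1 := by decide
    intro v
    rw [cCnt_eq_card, cCnt_eq_card]
    exact key v
end

section
/- Every finite tree admits a 2-coloring that is 1-balanced at every open neighborhood (i.e., all trees are in OSB). -/
open SimpleGraph

universe u

private theorem auxOSB (n : ℕ) : ∀ (V : Type u) [Fintype V] (G : SimpleGraph V), G.IsTree →
    Fintype.card V = n →
    ∃ c : V → Bool, ∀ v, ((oCnt G c v true : ℤ) - oCnt G c v false).natAbs ≤ 1 := by
  induction n using Nat.strong_induction_on with
  | _ n ih =>
  intro V _ G htree hcard
  classical
  by_cases hle : Fintype.card V ≤ 1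
  · -- subsingleton case
    haveI : Subsingleton V := Fintype.card_le_one_iff_subsingleton.mp hle
    refine ⟨fun _ => true, fun v => ?_⟩
    have he : ∀ i, oCnt G (fun _ => true) v i = 0 := by
      intro i
      rw [oCnt]
      have : {u | G.Adj v u ∧ (fun _ : V => true) u = i} = ∅ := by
        ext u
        simp only [Set.mem_setOf_eq, Set.mem_empty_iff_false, iff_false]
        rintro ⟨hadj, -⟩
        exact G.ne_of_adj hadj (Subsingleton.elim v u)
      rw [this, Set.ncard_empty]
    simp [he]
  · push_neg at hle
    -- find a leaf
    haveI : DecidableRel G.Adj := Classical.decRel _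
    have hdegpos : ∀ v, 0 < G.degree v := by
      intro v
      obtain ⟨w, hw⟩ := Fintype.exists_ne_of_one_lt_card hle v
      obtain ⟨p⟩ := (htree.isConnected.preconnected v w).symm.symm
      rw [G.degree_pos_iff_exists_adj]
      cases p with
      | nil => exact absurd rfl hw.symm
      | cons h q => exact ⟨_, h⟩
    have hsum : ∑ v, G.degree v = 2 * (Fintype.card V - 1) := by
      rw [G.sum_degrees_eq_twice_card_edges]
      have := htree.card_edgeFinset
      omega
    have hleaf : ∃ a, G.degree a = 1 := by
      by_contra hno
      push_neg at hno
      have h2 : ∀ v ∈ Finset.univ, 2 ≤ G.degree v := by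
        intro v _
        have := hdegpos v
        have := hno v
        omega
      have := Finset.card_nsmul_le_sum Finset.univ (fun v => G.degree v) 2 h2
      simp only [Finset.card_univ, smul_eq_mul] at this
      rw [hsum] at this
      omega
    obtain ⟨a, ha⟩ := hleaf
    rw [← G.card_neighborFinset_eq_degree, Finset.card_eq_one] at ha
    obtain ⟨a', ha'⟩ := ha
    have hnb : ∀ u, G.Adj a u ↔ u = a' := by
      intro u
      rw [← G.mem_neighborFinset, ha', Finset.mem_singleton]
    have haa' : G.Adj a a' := (hnb a').mpr rfl
    have ha'ne : a' ≠ a := fun h => G.irrefl (h ▸ haa')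
    set s : Set V := {x | x ≠ a} with hs
    haveI : Fintype ↥s := Subtype.fintype _
    set G' : SimpleGraph ↥s := G.induce s with hG'
    have hadj' : ∀ (u v : ↥s), G'.Adj u v ↔ G.Adj u v := by
      intro u v; rfl
    -- G' is a tree
    have htree' : G'.IsTree := by
      constructor
      · haveI : Nonempty ↥s := ⟨⟨a', ha'ne⟩⟩
        have hpre : G'.Preconnected := by
          intro x y
          obtain ⟨u, hu⟩ := x
          obtain ⟨v, hv⟩ := y
          obtain ⟨p⟩ := htree.isConnected.preconnected u v
          have key : ∀ (m : ℕ) (u v : V) (hu : u ≠ a) (hv : v ≠ a) (p : G.Walk u v),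
              p.length ≤ m → G'.Reachable ⟨u, hu⟩ ⟨v, hv⟩ := by
            intro m
            induction m with
            | zero =>
              intro u v hu hv p hp
              have : u = v := Walk.eq_of_length_eq_zero (Nat.le_zero.mp hp)
              subst this
              exact Reachable.refl _
            | succ m ihm =>
              intro u v hu hv p hp
              cases p with
              | nil => exact Reachable.refl _
              | @cons _ x _ h q =>
                by_cases hx : x = a
                · subst hx
                  have hu' : u = a' := (hnb u).mp h.symm
                  cases q with
                  | nil => exact absurd rfl hv
                  | @cons _ y _ h2 q2 =>
                    have hy : y = a' := (hnb y).mp h2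
                    have hyu : y = u := hy.trans hu'.symm
                    have hlen : (q2.copy hyu rfl).length ≤ m := by
                      simp only [Walk.length_copy]
                      simp only [Walk.length_cons] at hp
                      omega
                    exact ihm u v hu hv (q2.copy hyu rfl) hlen
                · have hadj : G'.Adj ⟨u, hu⟩ ⟨x, hx⟩ := (hadj' _ _).mpr h
                  have hlen : q.length ≤ m := by
                    simp only [Walk.length_cons] at hp
                    omega
                  exact hadj.reachable.trans (ihm x v hx hv q hlen)
          exact key p.length u v hu hv p le_rfl
        exact ⟨hpre⟩
      · intro x w hw
        exact htree.IsAcyclic _ (hw.map (f := (Embedding.induce (G := G) s).toHom)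
          (Embedding.induce (G := G) s).injective)
    -- apply induction
    have hcardlt : Fintype.card ↥s < n := by
      rw [← hcard]
      refine Fintype.card_lt_of_injective_of_notMem Subtype.val Subtype.val_injective (b := a) ?_
      rintro ⟨⟨u, hu⟩, h2⟩
      exact hu h2
    obtain ⟨c', hc'⟩ := ih _ hcardlt ↥s G' htree' rfl

    -- the new coloring
    set c : V → Bool := fun x => if h : x = a then
        (if (oCnt G' c' ⟨a', ha'ne⟩ true : ℤ) - oCnt G' c' ⟨a', ha'ne⟩ false ≤ 0 then true
          else false)
      else c' ⟨x, h⟩ with hc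
    set b : Bool := (if (oCnt G' c' ⟨a', ha'ne⟩ true : ℤ) - oCnt G' c' ⟨a', ha'ne⟩ false ≤ 0
        then true else false) with hb
    have hca : c a = b := by simp [hc]
    have hcs : ∀ (u : ↥s), c ↑u = c' u := by
      rintro ⟨u, hu⟩
      simp only [hc]
      rw [dif_neg hu]
    have himg : ∀ (v : ↥s) (i : Bool),
        (Subtype.val '' {u : ↥s | G'.Adj v u ∧ c' u = i})
          = {u : V | u ≠ a ∧ G.Adj ↑v u ∧ c u = i} := by
      intro v i
      ext u
      constructor
      · rintro ⟨⟨u, hu⟩, ⟨hadj, hcol⟩, rfl⟩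
        exact ⟨hu, (hadj' _ _).mp hadj, (hcs ⟨u, hu⟩).trans hcol⟩
      · rintro ⟨hu, hadj, hcol⟩
        exact ⟨⟨u, hu⟩, ⟨(hadj' _ _).mpr hadj, by rw [← hcs ⟨u, hu⟩]; exact hcol⟩, rfl⟩
    have hncard : ∀ (v : ↥s) (i : Bool),
        oCnt G' c' v i = {u : V | u ≠ a ∧ G.Adj ↑v u ∧ c u = i}.ncard := by
      intro v i
      rw [oCnt, ← himg v i, Set.ncard_image_of_injective _ Subtype.val_injective]
    have hsplit : ∀ (v : V) (hv : v ≠ a) (i : Bool), oCnt G c v i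
        = oCnt G' c' ⟨v, hv⟩ i + {u : V | u = a ∧ G.Adj v u ∧ c u = i}.ncard := by
      intro v hv i
      rw [oCnt, hncard]
      rw [← Set.ncard_union_eq ?dis (Set.toFinite _) (Set.toFinite _)]
      case dis =>
        rw [Set.disjoint_left]
        rintro u ⟨hu, -⟩ ⟨rfl, -⟩
        exact hu rfl
      congr 1
      ext u
      simp only [Set.mem_union, Set.mem_setOf_eq]
      by_cases hu : u = a <;> simp [hu]
    refine ⟨c, fun v => ?_⟩
    by_cases hva : v = a
    · -- v is the removed leaf; its unique neighbor is a'
      subst hva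
      have hset : ∀ i, {u : V | G.Adj v u ∧ c u = i} = {u : V | u = a' ∧ c u = i} := by
        intro i
        ext u
        simp only [Set.mem_setOf_eq, hnb u]
      have hone : ∀ i, {u : V | u = a' ∧ c u = i}.ncard = if c a' = i then 1 else 0 := by
        intro i
        by_cases h : c a' = i
        · rw [if_pos h]
          have : {u : V | u = a' ∧ c u = i} = {a'} := by
            ext u
            constructor
            · rintro ⟨rfl, -⟩; rfl
            · rintro rfl; exact ⟨rfl, h⟩
          rw [this, Set.ncard_singleton]
        · rw [if_neg h]
          have : {u : V | u = a' ∧ c u = i} = ∅ := by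
            ext u
            simp only [Set.mem_setOf_eq, Set.mem_empty_iff_false, iff_false]
            rintro ⟨rfl, hcu⟩
            exact h hcu
          rw [this, Set.ncard_empty]
      have eT : oCnt G c v true = if c a' = true then 1 else 0 := by
        rw [oCnt, hset, hone]
      have eF : oCnt G c v false = if c a' = false then 1 else 0 := by
        rw [oCnt, hset, hone]
      cases h : c a' <;> rw [h] at eT eF <;> simp at eT eF <;> omega
    · by_cases hva' : v = a'
      · subst hva'
        have hset : ∀ i, {u : V | u = a ∧ G.Adj v u ∧ c u = i}.ncard
            = if b = i then 1 else 0 := by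
          intro i
          by_cases h : b = i
          · rw [if_pos h]
            have : {u : V | u = a ∧ G.Adj v u ∧ c u = i} = {a} := by
              ext u
              constructor
              · rintro ⟨rfl, -, -⟩; rfl
              · rintro rfl
                exact ⟨rfl, haa'.symm, hca.trans h⟩
            rw [this, Set.ncard_singleton]
          · rw [if_neg h]
            have : {u : V | u = a ∧ G.Adj v u ∧ c u = i} = ∅ := by
              ext u
              simp only [Set.mem_setOf_eq, Set.mem_empty_iff_false, iff_false]
              rintro ⟨rfl, -, hcu⟩
              exact h (hca.symm.trans hcu)
            rw [this, Set.ncard_empty]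
        have eT := hsplit v hva true
        have eF := hsplit v hva false
        rw [hset] at eT eF
        have hbal := hc' ⟨v, hva⟩
        by_cases hdle : (oCnt G' c' ⟨v, hva⟩ true : ℤ) - oCnt G' c' ⟨v, hva⟩ false ≤ 0
        · have hbt : b = true := by rw [hb]; exact if_pos hdle
          rw [hbt] at eT eF
          simp at eT eF
          omega
        · have hbt : b = false := by rw [hb]; exact if_neg hdle
          rw [hbt] at eT eF
          simp at eT eF
          omega
      · have hempty : ∀ i, {u : V | u = a ∧ G.Adj v u ∧ c u = i} = ∅ := by
          intro i
          ext u
          simp only [Set.mem_setOf_eq, Set.mem_empty_iff_false, iff_false]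
          rintro ⟨rfl, hadj, -⟩
          exact hva' ((hnb v).mp hadj.symm)
        have eT := hsplit v hva true
        have eF := hsplit v hva false
        rw [hempty, Set.ncard_empty] at eT eF
        have hbal := hc' ⟨v, hva⟩
        omega


/-- Every finite tree admits a 2-coloring that is 1-balanced at every open
neighborhood, i.e. all trees are in `OSB`. -/
theorem stmt12 {V : Type*} [Fintype V] (G : SimpleGraph V) (htree : G.IsTree) :
    ∃ c : V → Bool, ∀ v, ((oCnt G c v true : ℤ) - oCnt G c v false).natAbs ≤ 1 := by
  exact auxOSB (Fintype.card V) V G htree rfl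
end

section
/- Let G be a caterpillar with a parity-balanced 2-coloring and P a longest path in G. If w is a non-endpoint vertex of P with exactly 2 or 3 leaf neighbors not on P, then w and its two neighbors on P all have the same color; if w has 0 or 1 leaf neighbors not on P, then the two neighbors of w on P have opposite colors. -/
open SimpleGraph in
private lemma spineWalk {V : Type*} {G : SimpleGraph V} {m : ℕ} {p : Fin m → V}
    (hinj : Function.Injective p)
    (hadj : ∀ i : Fin m, ∀ h : i.val + 1 < m, G.Adj (p i) (p ⟨i.val + 1, h⟩)) :
    ∀ (d : ℕ) (a : Fin m) (h : a.val + d < m),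
      ∃ q : G.Walk (p a) (p ⟨a.val + d, h⟩), q.IsPath ∧ q.length = d ∧
        ∀ v ∈ q.support, ∃ j : Fin m, a.val ≤ j.val ∧ p j = v := by
  intro d
  induction d with
  | zero =>
    intro a h
    refine ⟨Walk.nil.copy rfl (congrArg p (Fin.ext (by simp))), ?_, ?_, ?_⟩
    · simp
    · simp
    · intro v hv
      simp only [Walk.support_copy, Walk.support_nil, List.mem_singleton] at hv
      exact ⟨a, le_refl _, hv.symm⟩
  | succ d ih =>
    intro a h
    have ha1 : a.val + 1 < m := by omega
    obtain ⟨q, hq, hl, hs⟩ := ih ⟨a.val + 1, ha1⟩ (by simpa using by omega)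
    have hfe : (⟨(⟨a.val + 1, ha1⟩ : Fin m).val + d, by simpa using by omega⟩ : Fin m)
        = ⟨a.val + (d + 1), h⟩ := Fin.ext (by simp; omega)
    refine ⟨(Walk.cons (hadj a ha1) q).copy rfl (congrArg p hfe), ?_, ?_, ?_⟩
    · rw [Walk.isPath_copy, Walk.cons_isPath_iff]
      refine ⟨hq, fun hmem => ?_⟩
      obtain ⟨j, hj1, hj2⟩ := hs _ hmem
      have : j = a := hinj hj2
      subst this
      simp at hj1
    · simp [hl]
    · intro v hv
      simp only [Walk.support_copy, Walk.support_cons, List.mem_cons] at hv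
      rcases hv with rfl | hv
      · exact ⟨a, le_refl _, rfl⟩
      · obtain ⟨j, hj1, hj2⟩ := hs _ hv
        exact ⟨j, by simp at hj1; omega, hj2⟩

open SimpleGraph in
private lemma spinePath {V : Type*} {G : SimpleGraph V} (htree : G.IsTree) {m : ℕ}
    {p : Fin m → V} (hinj : Function.Injective p)
    (hadj : ∀ i : Fin m, ∀ h : i.val + 1 < m, G.Adj (p i) (p ⟨i.val + 1, h⟩))
    (i j : Fin m) (hij : i ≠ j) :
    ∃ W : G.Walk (p i) (p j), W.IsPath ∧
      (2 ≤ (i.val : ℤ) - j.val ∨ 2 ≤ (j.val : ℤ) - i.val → 2 ≤ W.length) ∧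
      ∀ v ∈ W.support, ∃ k, p k = v := by
  have hne : i.val ≠ j.val := fun h => hij (Fin.ext h)
  rcases Nat.lt_or_ge i.val j.val with hlt | hge
  · obtain ⟨q, hq, hl, hs⟩ := spineWalk hinj hadj (j.val - i.val) i (by omega)
    have hfe : (⟨i.val + (j.val - i.val), by omega⟩ : Fin m) = j := Fin.ext (by simp; omega)
    refine ⟨q.copy rfl (congrArg p hfe), by simpa using hq, ?_, ?_⟩
    · intro hd; simp only [Walk.length_copy]; omega
    · intro v hv
      simp only [Walk.support_copy] at hv
      obtain ⟨k, _, hk⟩ := hs _ hv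
      exact ⟨k, hk⟩
  · have hlt : j.val < i.val := by omega
    obtain ⟨q, hq, hl, hs⟩ := spineWalk hinj hadj (i.val - j.val) j (by omega)
    have hfe : (⟨j.val + (i.val - j.val), by omega⟩ : Fin m) = i := Fin.ext (by simp; omega)
    refine ⟨(q.copy rfl (congrArg p hfe)).reverse, by simp [hq], ?_, ?_⟩
    · intro hd; simp only [Walk.length_reverse, Walk.length_copy]; omega
    · intro v hv
      simp only [Walk.support_reverse, List.mem_reverse, Walk.support_copy] at hv
      obtain ⟨k, _, hk⟩ := hs _ hv
      exact ⟨k, hk⟩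

open SimpleGraph in
private lemma spineAdj {V : Type*} {G : SimpleGraph V} (htree : G.IsTree) {m : ℕ}
    {p : Fin m → V} (hinj : Function.Injective p)
    (hadj : ∀ i : Fin m, ∀ h : i.val + 1 < m, G.Adj (p i) (p ⟨i.val + 1, h⟩))
    {i j : Fin m} (hA : G.Adj (p i) (p j)) :
    j.val + 1 = i.val ∨ i.val + 1 = j.val := by
  by_contra hc
  push_neg at hc
  have hij : i ≠ j := fun h => G.irrefl (h ▸ hA)
  obtain ⟨W, hW, hWl, _⟩ := spinePath htree hinj hadj i j hij
  have hne : i.val ≠ j.val := fun h => hij (Fin.ext h)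
  have hW2 : (Walk.cons hA Walk.nil : G.Walk (p i) (p j)).IsPath := by
    simp [hA.ne]
  have heq := (htree.existsUnique_path (p i) (p j)).unique hW hW2
  have hlen : W.length = 1 := by rw [heq]; simp
  have : 2 ≤ W.length := hWl (by omega)
  omega

open SimpleGraph in
private lemma leafOnly {V : Type*} {G : SimpleGraph V} (htree : G.IsTree) {m : ℕ}
    {p : Fin m → V} (hinj : Function.Injective p)
    (hadj : ∀ i : Fin m, ∀ h : i.val + 1 < m, G.Adj (p i) (p ⟨i.val + 1, h⟩))
    (hcat : ∀ v : V, (∃ i, p i = v) ∨ (∃ i, G.Adj (p i) v))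
    {i : Fin m} {u : V} (hAu : G.Adj (p i) u) (hoff : ∀ j, p j ≠ u) :
    ∀ t, G.Adj u t → t = p i := by
  intro t hAt
  by_contra hne
  have hpiu : p i ≠ u := hoff i
  have hut : u ≠ t := hAt.ne
  by_cases hts : ∃ j, p j = t
  · obtain ⟨j, rfl⟩ := hts
    have hij : i ≠ j := fun h => hne (by rw [h])
    have hpij : p i ≠ p j := fun h => hij (hinj h)
    have hupj : u ≠ p j := fun h => hoff j h.symm
    obtain ⟨W, hW, _, hWs⟩ := spinePath htree hinj hadj i j hij
    have hW2 : (Walk.cons hAu (Walk.cons hAt Walk.nil) : G.Walk (p i) (p j)).IsPath := by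
      simp [Walk.cons_isPath_iff, hpiu, hut, hpij, hupj]
    have heq := (htree.existsUnique_path (p i) (p j)).unique hW2 hW
    have humem : u ∈ W.support := by rw [← heq]; simp
    obtain ⟨k, hk⟩ := hWs u humem
    exact hoff k hk
  · push_neg at hts
    rcases hcat t with ⟨j, hj⟩ | ⟨j, hAjt⟩
    · exact hts j hj
    have hpit : p i ≠ t := fun h => hne h.symm
    by_cases hji : j = i
    · subst hji
      have hW1 : (Walk.cons hAjt Walk.nil : G.Walk (p j) t).IsPath := by simp [hAjt.ne]
      have hW2 : (Walk.cons hAu (Walk.cons hAt Walk.nil) : G.Walk (p j) t).IsPath := by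
        simp [Walk.cons_isPath_iff, hpiu, hut, hpit]
      have heq := (htree.existsUnique_path (p j) t).unique hW2 hW1
      have : u ∈ (Walk.cons hAjt (Walk.nil : G.Walk t t)).support := by rw [← heq]; simp
      simp only [Walk.support_cons, Walk.support_nil, List.mem_cons, List.mem_singleton,
        List.not_mem_nil, or_false] at this
      rcases this with h | h
      · exact hoff j h.symm
      · exact hut h
    · have hij : i ≠ j := fun h => hji h.symm
      have hpij : p i ≠ p j := fun h => hij (hinj h)
      have hupj : u ≠ p j := fun h => hoff j h.symm
      have htpj : t ≠ p j := fun h => hts j h.symm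
      obtain ⟨W, hW, _, hWs⟩ := spinePath htree hinj hadj i j hij
      have hW2 : (Walk.cons hAu (Walk.cons hAt (Walk.cons hAjt.symm Walk.nil))
          : G.Walk (p i) (p j)).IsPath := by
        simp [Walk.cons_isPath_iff, hpiu, hut, hpij, hupj, hpit, htpj]
      have heq := (htree.existsUnique_path (p i) (p j)).unique hW2 hW
      have humem : u ∈ W.support := by rw [← heq]; simp
      obtain ⟨k, hk⟩ := hWs u humem
      exact hoff k hk

private lemma ncard_eq_filter_single {V : Type*} (a : V) (P : V → Prop) [Decidable (P a)] :
    {u | u = a ∧ P u}.ncard = if P a then 1 else 0 := by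
  by_cases h : P a
  · rw [if_pos h]
    have he : {u | u = a ∧ P u} = {a} := by
      ext u
      simp only [Set.mem_setOf_eq, Set.mem_singleton_iff]
      constructor
      · rintro ⟨rfl, _⟩; rfl
      · rintro rfl; exact ⟨rfl, h⟩
    rw [he, Set.ncard_singleton]
  · rw [if_neg h]
    have he : {u | u = a ∧ P u} = ∅ := by
      ext u
      simp only [Set.mem_setOf_eq, Set.mem_empty_iff_false, iff_false, not_and]
      rintro rfl; exact h
    rw [he, Set.ncard_empty]

open SimpleGraph in
/-- Let `G` be a caterpillar with a parity-balanced 2-coloring `c`, and let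
`p 0, p 1, ..., p (m-1)` be a longest path (spine) in `G`.  If `w = p i` is a
non-endpoint spine vertex with exactly 2 or 3 neighbors off the spine, then `w` and
its two spine neighbors all have the same color; if `w` has 0 or 1 neighbors off the
spine, then its two spine neighbors have opposite colors. -/
theorem stmt14 {V : Type*} [Fintype V] (G : SimpleGraph V) (htree : G.IsTree)
    (m : ℕ) (p : Fin m → V) (hinj : Function.Injective p)
    (hadj : ∀ i : Fin m, ∀ h : i.val + 1 < m, G.Adj (p i) (p ⟨i.val + 1, h⟩))
    (hlongest : ∀ (u v : V) (w : G.Walk u v), w.IsPath → w.length + 1 ≤ m)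
    (hcat : ∀ v : V, (∃ i, p i = v) ∨ (∃ i, G.Adj (p i) v))
    (c : V → Bool) (hpb : IsPB G c)
    (i : Fin m) (h0 : 0 < i.val) (h1 : i.val + 1 < m)
    (wgt : ℕ) (hwgt : wgt = {u | G.Adj (p i) u ∧ ∀ j, p j ≠ u}.ncard) :
    ((wgt = 2 ∨ wgt = 3) →
      c (p ⟨i.val - 1, by omega⟩) = c (p i) ∧ c (p ⟨i.val + 1, h1⟩) = c (p i)) ∧
    ((wgt = 0 ∨ wgt = 1) →
      c (p ⟨i.val - 1, by omega⟩) ≠ c (p ⟨i.val + 1, h1⟩)) := by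
  classical
  set w := p i with hwd
  set x := p ⟨i.val - 1, by omega⟩ with hxd
  set y := p ⟨i.val + 1, h1⟩ with hyd
  set S := {u | G.Adj w u ∧ ∀ j, p j ≠ u} with hSd
  -- basic distinctness
  have hxy : x ≠ y := by
    rw [hxd, hyd]
    intro h
    have h2 : i.val - 1 = i.val + 1 := congrArg Fin.val (hinj h)
    omega
  have hwx : w ≠ x := by
    rw [hwd, hxd]
    intro h
    have h2 : i.val = i.val - 1 := congrArg Fin.val (hinj h)
    omega
  have hwy : w ≠ y := by
    rw [hwd, hyd]
    intro h
    have h2 : i.val = i.val + 1 := congrArg Fin.val (hinj h)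
    omega
  have hadjwx : G.Adj w x := by
    have h := hadj ⟨i.val - 1, by omega⟩ (by simp; omega)
    have he : (⟨(⟨i.val - 1, by omega⟩ : Fin m).val + 1, by simp; omega⟩ : Fin m) = i :=
      Fin.ext (by simp; omega)
    rw [he] at h
    exact h.symm
  have hadjwy : G.Adj w y := hadj i h1
  -- the neighborhood of w
  have hNset : {u | G.Adj w u} = ({x, y} : Set V) ∪ S := by
    ext u
    simp only [Set.mem_setOf_eq, Set.mem_union, Set.mem_insert_iff, Set.mem_singleton_iff, hSd]
    constructor
    · intro hA
      by_cases hsp : ∃ j, p j = u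
      · obtain ⟨j, rfl⟩ := hsp
        rcases spineAdj htree hinj hadj hA with h | h
        · refine Or.inl (Or.inl ?_)
          rw [hxd]
          exact congrArg p (Fin.ext (by simp; omega)).symm
        · refine Or.inl (Or.inr ?_)
          rw [hyd]
          exact congrArg p (Fin.ext (by simp; omega)).symm
      · push_neg at hsp
        exact Or.inr ⟨hA, hsp⟩
    · rintro ((rfl | rfl) | hu)
      · exact hadjwx
      · exact hadjwy
      · exact hu.1
  -- every off-spine neighbor is a leaf of the opposite color
  have hleaf : ∀ u ∈ S, c u = !c w := by
    intro u huS
    obtain ⟨hAu, hoff⟩ := huS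
    have hL := leafOnly htree hinj hadj hcat hAu hoff
    have hNu : {t | G.Adj u t} = {w} := by
      ext t
      simp only [Set.mem_setOf_eq, Set.mem_singleton_iff]
      exact ⟨hL t, fun h => h ▸ hAu.symm⟩
    have hodd : Odd (deg' G u) := by
      rw [deg', hNu, Set.ncard_singleton]
      exact odd_one
    have hcc := (hpb u).2 hodd
    have huw : u ≠ w := hAu.ne'
    have hccb : ∀ b, cCnt G c u b =
        (if c u = b then 1 else 0) + (if c w = b then 1 else 0) := by
      intro b
      rw [cCnt]
      have hset : {t | (t = u ∨ G.Adj u t) ∧ c t = b}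
          = {t | t = u ∧ c t = b} ∪ {t | t = w ∧ c t = b} := by
        ext t
        simp only [Set.mem_setOf_eq, Set.mem_union]
        constructor
        · rintro ⟨h | h, hc⟩
          · exact Or.inl ⟨h, hc⟩
          · exact Or.inr ⟨hL t h, hc⟩
        · rintro (⟨rfl, hc⟩ | ⟨rfl, hc⟩)
          · exact ⟨Or.inl rfl, hc⟩
          · exact ⟨Or.inr hAu.symm, hc⟩
      have hdis : Disjoint {t | t = u ∧ c t = b} {t | t = w ∧ c t = b} := by
        rw [Set.disjoint_left]
        rintro t ⟨rfl, -⟩ ⟨h, -⟩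
        exact huw h
      rw [hset, Set.ncard_union_eq hdis (Set.toFinite _) (Set.toFinite _),
        ncard_eq_filter_single, ncard_eq_filter_single]
    rw [hccb true, hccb false] at hcc
    cases hbu : c u <;> cases hbw : c w <;> simp_all
  -- counting helpers at w
  have hSb : ∀ b, (S ∩ {u | c u = b}).ncard = if b = c w then 0 else wgt := by
    intro b
    by_cases hb : b = c w
    · rw [if_pos hb]
      have he : S ∩ {u | c u = b} = ∅ := by
        ext u
        simp only [Set.mem_inter_iff, Set.mem_setOf_eq, Set.mem_empty_iff_false, iff_false,
          not_and]
        intro huS hcu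
        have h2 := hleaf u huS
        exact Bool.not_ne_self (c w) (by rw [← h2, hcu, hb])
      rw [he, Set.ncard_empty]
    · rw [if_neg hb]
      have hb' : b = !c w := by
        cases b <;> cases hcwv : c w <;> simp_all
      have he : S ∩ {u | c u = b} = S := by
        apply Set.inter_eq_self_of_subset_left
        intro u huS
        rw [Set.mem_setOf_eq, hb']
        exact hleaf u huS
      rw [he]
      exact hwgt.symm
  have hdisxyS : Disjoint ({x, y} : Set V) S := by
    rw [Set.disjoint_left]
    rintro a ha haS
    simp only [Set.mem_insert_iff, Set.mem_singleton_iff] at ha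
    rcases ha with rfl | rfl
    · exact haS.2 ⟨i.val - 1, by omega⟩ hxd.symm
    · exact haS.2 ⟨i.val + 1, h1⟩ hyd.symm
  have hdeg : deg' G w = wgt + 2 := by
    rw [deg', hNset, Set.ncard_union_eq hdisxyS (Set.toFinite _) (Set.toFinite _),
      Set.ncard_pair hxy, hwgt]
    omega
  have hO : ∀ b, oCnt G c w b = (if c x = b then 1 else 0) + (if c y = b then 1 else 0)
      + (if b = c w then 0 else wgt) := by
    intro b
    rw [oCnt]
    have hset : {u | G.Adj w u ∧ c u = b}
        = ({u | u = x ∧ c u = b} ∪ {u | u = y ∧ c u = b}) ∪ (S ∩ {u | c u = b}) := by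
      ext u
      have hmem : G.Adj w u ↔ u ∈ ({x, y} : Set V) ∪ S := by
        rw [← hNset]; rfl
      simp only [Set.mem_setOf_eq, Set.mem_union, Set.mem_inter_iff]
      constructor
      · rintro ⟨hA, hc⟩
        rcases hmem.1 hA with h | h
        · simp only [Set.mem_insert_iff, Set.mem_singleton_iff] at h
          rcases h with rfl | rfl
          · exact Or.inl (Or.inl ⟨rfl, hc⟩)
          · exact Or.inl (Or.inr ⟨rfl, hc⟩)
        · exact Or.inr ⟨h, hc⟩
      · rintro ((⟨rfl, hc⟩ | ⟨rfl, hc⟩) | ⟨hu, hc⟩)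
        · exact ⟨hadjwx, hc⟩
        · exact ⟨hadjwy, hc⟩
        · exact ⟨hu.1, hc⟩
    have hd2 : Disjoint {u | u = x ∧ c u = b} {u | u = y ∧ c u = b} := by
      rw [Set.disjoint_left]
      rintro a ⟨rfl, -⟩ ⟨h, -⟩
      exact hxy h
    have hd1 : Disjoint ({u | u = x ∧ c u = b} ∪ {u | u = y ∧ c u = b}) (S ∩ {u | c u = b}) := by
      rw [Set.disjoint_left]
      rintro a (⟨rfl, -⟩ | ⟨rfl, -⟩) ⟨haS, -⟩
      · exact haS.2 ⟨i.val - 1, by omega⟩ hxd.symm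
      · exact haS.2 ⟨i.val + 1, h1⟩ hyd.symm
    rw [hset, Set.ncard_union_eq hd1 (Set.toFinite _) (Set.toFinite _),
      Set.ncard_union_eq hd2 (Set.toFinite _) (Set.toFinite _),
      ncard_eq_filter_single, ncard_eq_filter_single, hSb b]
  have hC : ∀ b, cCnt G c w b = (if c w = b then 1 else 0) + oCnt G c w b := by
    intro b
    rw [cCnt, oCnt]
    have hset : {u | (u = w ∨ G.Adj w u) ∧ c u = b}
        = {u | u = w ∧ c u = b} ∪ {u | G.Adj w u ∧ c u = b} := by
      ext u
      simp only [Set.mem_setOf_eq, Set.mem_union]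
      tauto
    have hdis : Disjoint {u | u = w ∧ c u = b} {u | G.Adj w u ∧ c u = b} := by
      rw [Set.disjoint_left]
      rintro a ⟨rfl, -⟩ ⟨hA, -⟩
      exact hA.ne rfl
    rw [hset, Set.ncard_union_eq hdis (Set.toFinite _) (Set.toFinite _),
      ncard_eq_filter_single]
  clear hNset hdisxyS hSb hleaf hadjwx hadjwy hlongest hcat hadj
  constructor
  · rintro (rfl | rfl)
    · have heven : Even (deg' G w) := by rw [hdeg]; decide
      have heq := (hpb w).1 heven
      rw [hO true, hO false] at heq
      show c x = c w ∧ c y = c w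
      cases hbx : c x <;> cases hby : c y <;> cases hbw : c w <;>
          rw [hbx, hby, hbw] at heq <;> norm_num at heq <;> simp [hbx, hby, hbw]
    · have hodd : Odd (deg' G w) := by rw [hdeg]; decide
      have heq := (hpb w).2 hodd
      rw [hC true, hC false, hO true, hO false] at heq
      show c x = c w ∧ c y = c w
      cases hbx : c x <;> cases hby : c y <;> cases hbw : c w <;>
          rw [hbx, hby, hbw] at heq <;> norm_num at heq <;> simp [hbx, hby, hbw]
  · rintro (rfl | rfl)
    · have heven : Even (deg' G w) := by rw [hdeg]; decide
      have heq := (hpb w).1 heven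
      rw [hO true, hO false] at heq
      show c x ≠ c y
      cases hbx : c x <;> cases hby : c y <;> cases hbw : c w <;>
          rw [hbx, hby, hbw] at heq <;> norm_num at heq <;> simp [hbx, hby, hbw]
    · have hodd : Odd (deg' G w) := by rw [hdeg]; decide
      have heq := (hpb w).2 hodd
      rw [hC true, hC false, hO true, hO false] at heq
      show c x ≠ c y
      cases hbx : c x <;> cases hby : c y <;> cases hbw : c w <;>
          rw [hbx, hby, hbw] at heq <;> norm_num at heq <;> simp [hbx, hby, hbw]
end

section
/- A complete multipartite graph G is in OSB (admits a 2-coloring 1-balanced at every open neighborhood) if and only if |V(G)| is even or G has exactly one part of odd size. -/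
/-- The complete multipartite graph whose parts are `Fin (f i)`, `i : ι`: two
vertices are adjacent iff they lie in different parts. -/
def cmpGraph {ι : Type*} (f : ι → ℕ) : SimpleGraph (Σ i, Fin (f i)) where
  Adj u v := u.1 ≠ v.1
  symm := ⟨fun _ _ h => h.symm⟩
  loopless := ⟨fun _ h => h rfl⟩

section Aux

set_option linter.unusedSectionVars false
set_option maxRecDepth 4000

variable {ι : Type*} [Fintype ι] [DecidableEq ι]

lemma cmpGraph_adj (f : ι → ℕ) (u v : Σ i, Fin (f i)) :
    (cmpGraph f).Adj u v ↔ u.1 ≠ v.1 := Iff.rfl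

/-- number of vertices of part `j` with color `b` -/
def cnt (f : ι → ℕ) (c : (Σ i, Fin (f i)) → Bool) (j : ι) (b : Bool) : ℕ :=
  (Finset.univ.filter fun x : Fin (f j) => c ⟨j, x⟩ = b).card

lemma oCnt_eq_s16 (f : ι → ℕ) (c : (Σ i, Fin (f i)) → Bool) (v : Σ i, Fin (f i)) (b : Bool) :
    oCnt (cmpGraph f) c v b = ∑ j ∈ Finset.univ.erase v.1, cnt f c j b := by
  classical
  have hset : {u | (cmpGraph f).Adj v u ∧ c u = b} =
      ↑((Finset.univ : Finset (Σ i, Fin (f i))).filter fun u => u.1 ≠ v.1 ∧ c u = b) := by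
    ext u
    simp only [Finset.coe_filter, Finset.mem_univ, true_and, Set.mem_setOf_eq, cmpGraph_adj]
    rw [ne_comm]
  rw [oCnt, hset, Set.ncard_coe_finset, Finset.card_filter,
    ← Finset.univ_sigma_univ, Finset.sum_sigma, ← Finset.filter_ne', Finset.sum_filter]
  refine Finset.sum_congr rfl fun j _ => ?_
  by_cases hj : j = v.1
  · simp [hj]
  · rw [if_pos hj, cnt, Finset.card_filter]
    refine Finset.sum_congr rfl fun x _ => ?_
    simp [hj]

lemma cnt_add (f : ι → ℕ) (c : (Σ i, Fin (f i)) → Bool) (j : ι) :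
    cnt f c j true + cnt f c j false = f j := by
  classical
  have h := Finset.card_filter_add_card_filter_not
    (s := (Finset.univ : Finset (Fin (f j)))) (p := fun x => c ⟨j, x⟩ = true)
  simpa [cnt, Bool.not_eq_true] using h

lemma diff_eq_s16 (f : ι → ℕ) (c : (Σ i, Fin (f i)) → Bool) (v : Σ i, Fin (f i)) :
    ((oCnt (cmpGraph f) c v true : ℤ) - oCnt (cmpGraph f) c v false)
      = (∑ j, ((cnt f c j true : ℤ) - cnt f c j false))
        - ((cnt f c v.1 true : ℤ) - cnt f c v.1 false) := by
  rw [oCnt_eq_s16, oCnt_eq_s16, ← Finset.sum_erase_eq_sub (Finset.mem_univ v.1)]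
  push_cast
  rw [← Finset.sum_sub_distrib]

/-- Pure arithmetic: forward direction. -/
lemma fwd_int (f : ι → ℕ) (d : ι → ℤ) (hpar : ∀ i, (2:ℤ) ∣ (d i - f i))
    (hbal : ∀ i, |(∑ j, d j) - d i| ≤ 1) (hodd : ¬ Even (∑ i, f i)) :
    ∃! i, Odd (f i) := by
  classical
  set D := ∑ j, d j with hD
  have hOddn : Odd (∑ i, f i) := Nat.not_even_iff_odd.mp hodd
  obtain ⟨m, hm⟩ := hOddn
  have hcast : ∑ i, ((f i : ℤ)) = ((∑ i, f i : ℕ) : ℤ) := by push_cast; rfl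
  have hdvd : (2:ℤ) ∣ D - ((∑ i, f i : ℕ) : ℤ) := by
    rw [← hcast, hD, ← Finset.sum_sub_distrib]
    exact Finset.dvd_sum fun i _ => hpar i
  obtain ⟨p, hp⟩ := hdvd
  have hq : D = 2*(p + m) + 1 := by omega
  set O := Finset.univ.filter (fun i => Odd (f i)) with hOdef
  have hOcard : Odd O.card := by
    rw [hOdef]
    exact (Finset.odd_sum_iff_odd_card_odd f).mp ⟨m, hm⟩
  have he0 : ∀ i ∈ O, D - d i = 0 := by
    intro i hi
    rw [hOdef, Finset.mem_filter, Nat.odd_iff] at hi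
    obtain ⟨k, hk⟩ := hpar i
    have hb := abs_le.mp (hbal i)
    omega
  have hm1 : 1 ≤ O.card := by obtain ⟨r, hr⟩ := hOcard; omega
  have hmuniv : O.card ≤ Fintype.card ι := by
    rw [← Finset.card_univ]
    exact Finset.card_le_card (Finset.filter_subset _ _)
  -- the counting estimate
  have h1 : ∑ i, (D - d i) = ((Fintype.card ι : ℤ)) * D - D := by
    rw [Finset.sum_sub_distrib, Finset.sum_const, Finset.card_univ, nsmul_eq_mul, ← hD]
  have h2 : |∑ i, (D - d i)| ≤ ∑ i, |D - d i| := Finset.abs_sum_le_sum_abs _ _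
  have hsplit := Finset.sum_filter_add_sum_filter_not Finset.univ (fun i => Odd (f i))
    (fun i => |D - d i|)
  rw [← hOdef] at hsplit
  have hz : ∑ i ∈ O, |D - d i| = 0 :=
    Finset.sum_eq_zero fun i hi => by rw [he0 i hi]; simp
  have hle : ∑ i ∈ Finset.univ.filter (fun i => ¬ Odd (f i)), |D - d i|
      ≤ ((Finset.univ.filter (fun i => ¬ Odd (f i))).card : ℤ) := by
    have := Finset.sum_le_card_nsmul (Finset.univ.filter (fun i => ¬ Odd (f i)))
      (fun i => |D - d i|) 1 (fun i _ => hbal i)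
    simpa using this
  have hcards : O.card + (Finset.univ.filter (fun i => ¬ Odd (f i))).card
      = Fintype.card ι := by
    rw [hOdef, Finset.card_filter_add_card_filter_not, Finset.card_univ]
  have h3 : ∑ i, |D - d i| ≤ (Fintype.card ι : ℤ) - O.card := by
    rw [← hsplit, hz, zero_add]
    have : ((Finset.univ.filter (fun i => ¬ Odd (f i))).card : ℤ)
        = (Fintype.card ι : ℤ) - O.card := by omega
    rw [← this]
    exact hle
  have hmabs : |((Fintype.card ι : ℤ)) * D - D| = ((Fintype.card ι : ℤ) - 1) * |D| := by
    rw [show ((Fintype.card ι : ℤ)) * D - D = ((Fintype.card ι : ℤ) - 1) * D by ring,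
      abs_mul, abs_of_nonneg (by omega : (0:ℤ) ≤ (Fintype.card ι : ℤ) - 1)]
  have hsum : ((Fintype.card ι : ℤ) - 1) * |D| ≤ (Fintype.card ι : ℤ) - O.card := by
    rw [← hmabs, ← h1]
    exact le_trans h2 h3
  have habs1 : (1:ℤ) ≤ |D| := Int.one_le_abs (by omega)
  have hOle : O.card ≤ 1 := by
    have h4 : ((Fintype.card ι : ℤ) - 1) * 1 ≤ ((Fintype.card ι : ℤ) - 1) * |D| :=
      mul_le_mul_of_nonneg_left habs1 (by omega)
    have : (O.card : ℤ) ≤ 1 := by linarith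
    exact_mod_cast this
  have hO1 : O.card = 1 := le_antisymm hOle hm1
  obtain ⟨i₀, hi₀⟩ := Finset.card_eq_one.mp hO1
  refine ⟨i₀, ?_, ?_⟩
  · have h : i₀ ∈ O := hi₀ ▸ Finset.mem_singleton_self i₀
    rw [hOdef, Finset.mem_filter] at h
    exact h.2
  · intro j hj
    have h : j ∈ O := by rw [hOdef, Finset.mem_filter]; exact ⟨Finset.mem_univ _, hj⟩
    rw [hi₀, Finset.mem_singleton] at h
    exact h

/-- From threshold data `t` we get a coloring. -/
lemma exists_coloring (f : ι → ℕ) (t : ι → ℕ) (ht : ∀ i, t i ≤ f i)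
    (hbal : ∀ i, |(∑ j, (2*(t j : ℤ) - f j)) - (2*(t i : ℤ) - f i)| ≤ 1) :
    ∃ c : (Σ i, Fin (f i)) → Bool, ∀ v,
      ((oCnt (cmpGraph f) c v true : ℤ) - oCnt (cmpGraph f) c v false).natAbs ≤ 1 := by
  classical
  set c : (Σ i, Fin (f i)) → Bool := fun u => decide ((u.2 : ℕ) < t u.1) with hc
  refine ⟨c, fun v => ?_⟩
  have hcntT : ∀ j, cnt f c j true = t j := by
    intro j
    have hfil : (Finset.univ.filter fun x : Fin (f j) => c ⟨j, x⟩ = true)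
        = (Finset.range (t j)).attachFin
            (fun m hm => lt_of_lt_of_le (Finset.mem_range.mp hm) (ht j)) := by
      ext x
      simp [hc, Finset.mem_attachFin]
    rw [cnt, hfil, Finset.card_attachFin, Finset.card_range]
  have hd : ∀ j, ((cnt f c j true : ℤ) - cnt f c j false) = 2*(t j : ℤ) - f j := by
    intro j
    have h := cnt_add f c j
    rw [hcntT j] at h
    rw [hcntT j]
    omega
  have h2 : ∑ j, ((cnt f c j true : ℤ) - cnt f c j false) = ∑ j, (2*(t j : ℤ) - f j) :=
    Finset.sum_congr rfl fun j _ => hd j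
  rw [diff_eq_s16, h2, hd]
  have hb := abs_le.mp (hbal v.1)
  omega

end Aux

/-- A complete multipartite graph is in `OSB` (admits a 2-coloring 1-balanced at every
open neighborhood) iff its number of vertices is even or it has exactly one part of
odd size. -/
theorem stmt16 {ι : Type*} [Fintype ι] [DecidableEq ι] (f : ι → ℕ) (hf : ∀ i, 1 ≤ f i) :
    (∃ c : (Σ i, Fin (f i)) → Bool, ∀ v,
      ((oCnt (cmpGraph f) c v true : ℤ) - oCnt (cmpGraph f) c v false).natAbs ≤ 1) ↔
    (Even (Fintype.card (Σ i, Fin (f i))) ∨ ∃! i, Odd (f i)) := by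
  classical
  have hcard : Fintype.card (Σ i, Fin (f i)) = ∑ i, f i := by
    simp [Fintype.card_sigma]
  constructor
  · rintro ⟨c, hc⟩
    by_cases hev : Even (Fintype.card (Σ i, Fin (f i)))
    · exact Or.inl hev
    right
    rw [hcard] at hev
    refine fwd_int f (fun i => (cnt f c i true : ℤ) - cnt f c i false) ?_ ?_ hev
    · intro i
      have h := cnt_add f c i
      refine ⟨-(cnt f c i false : ℤ), ?_⟩
      omega
    · intro i
      have hv := hc ⟨i, ⟨0, hf i⟩⟩
      rw [diff_eq_s16] at hv
      dsimp only at hv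
      rw [abs_le]
      omega
  · intro h
    rcases h with hev | ⟨i₀, hodd₀, huniq⟩
    · -- even case
      rw [hcard, Finset.even_sum_iff_even_card_odd] at hev
      set O := Finset.univ.filter (fun i => Odd (f i)) with hOdef
      obtain ⟨r, hr⟩ := hev
      obtain ⟨S, hS, hScard⟩ := Finset.exists_subset_card_eq (s := O) (n := r) (by omega)
      set t : ι → ℕ := fun i => if i ∈ S then (f i + 1)/2 else f i / 2 with htdef
      have ht : ∀ i, t i ≤ f i := by
        intro i
        have := hf i
        simp only [htdef]
        split <;> omega
      have hd : ∀ i, 2*(t i : ℤ) - f i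
          = if i ∈ S then 1 else if i ∈ O then -1 else 0 := by
        intro i
        simp only [htdef]
        by_cases hiS : i ∈ S
        · have hiO : i ∈ O := hS hiS
          rw [hOdef, Finset.mem_filter, Nat.odd_iff] at hiO
          simp only [hiS, if_true]
          omega
        · by_cases hiO : i ∈ O
          · have hodd : f i % 2 = 1 := by
              have := hiO
              rw [hOdef, Finset.mem_filter, Nat.odd_iff] at this
              exact this.2
            simp only [hiS, if_false, hiO, if_true]
            omega
          · have heven : f i % 2 = 0 := by
              have : ¬ Odd (f i) := fun hcon =>
                hiO (by rw [hOdef, Finset.mem_filter]; exact ⟨Finset.mem_univ _, hcon⟩)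
              rw [Nat.odd_iff] at this
              omega
            simp only [hiS, if_false, hiO]
            omega
      have hsum : ∑ j, (2*(t j : ℤ) - f j) = 0 := by
        have h1 : ∑ j, (2*(t j : ℤ) - f j)
            = ∑ j, ((if j ∈ S then (1:ℤ) else 0) + (if j ∈ O \ S then -1 else 0)) := by
          refine Finset.sum_congr rfl fun j _ => ?_
          rw [hd j]
          by_cases hjS : j ∈ S
          · simp [hjS, hS hjS]
          · by_cases hjO : j ∈ O <;> simp [hjS, hjO]
        rw [h1, Finset.sum_add_distrib, Finset.sum_ite_mem, Finset.sum_ite_mem,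
          Finset.univ_inter, Finset.univ_inter, Finset.sum_const, Finset.sum_const,
          Finset.card_sdiff_of_subset hS, hScard, hr]
        simp only [nsmul_eq_mul]
        omega
      apply exists_coloring f t ht
      intro i
      rw [hsum, hd i]
      by_cases hiS : i ∈ S
      · rw [if_pos hiS]; norm_num
      · rw [if_neg hiS]
        by_cases hiO : i ∈ O
        · rw [if_pos hiO]; norm_num
        · rw [if_neg hiO]; norm_num
    · -- unique odd part case
      set t : ι → ℕ := fun i => if i = i₀ then (f i + 1)/2 else f i / 2 with htdef
      have ht : ∀ i, t i ≤ f i := by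
        intro i
        have := hf i
        simp only [htdef]
        split <;> omega
      have hd : ∀ i, 2*(t i : ℤ) - f i = if i = i₀ then 1 else 0 := by
        intro i
        simp only [htdef]
        by_cases hi : i = i₀
        · subst hi
          rw [Nat.odd_iff] at hodd₀
          simp only [eq_self_iff_true, if_true]
          omega
        · have : ¬ Odd (f i) := fun hcon => hi (huniq i hcon)
          rw [Nat.odd_iff] at this
          simp only [hi, if_false]
          omega
      have hsum : ∑ j, (2*(t j : ℤ) - f j) = 1 := by
        have h1 : ∑ j, (2*(t j : ℤ) - f j) = ∑ j, (if j = i₀ then (1:ℤ) else 0) :=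
          Finset.sum_congr rfl fun j _ => hd j
        rw [h1, Finset.sum_ite_eq']
        simp
      apply exists_coloring f t ht
      intro i
      rw [hsum, hd i]
      by_cases hi : i = i₀
      · rw [if_pos hi]; norm_num
      · rw [if_neg hi]; norm_num
end

section
/- Let G be a complete multipartite graph on n vertices with m₁ singletons (parts of size 1) and h non-singleton odd parts. Then G admits a 2-coloring that is, at each vertex v, 1-balanced at N(v) or 1-balanced at N[v], if and only if n is even or m₁ ≥ h − 1. -/
set_option linter.unusedSectionVars false

namespace S17
variable {ι : Type*} [Fintype ι] [DecidableEq ι] (f : ι → ℕ)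

/-- number of vertices of part `j` with color `b` -/
def rc (c : (Σ i, Fin (f i)) → Bool) (j : ι) (b : Bool) : ℕ :=
  (Finset.univ.filter fun x : Fin (f j) => c ⟨j, x⟩ = b).card

lemma oCnt_eq (c : (Σ i, Fin (f i)) → Bool) (v : Σ i, Fin (f i)) (b : Bool) :
    oCnt (cmpGraph f) c v b + rc f c v.1 b = ∑ i, rc f c i b := by
  classical
  have h1 : oCnt (cmpGraph f) c v b
      = (Finset.univ.filter fun u : Σ i, Fin (f i) => u.1 ≠ v.1 ∧ c u = b).card := by
    rw [oCnt, Set.ncard_eq_toFinset_card']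
    congr 1
    ext u
    rw [Set.mem_toFinset]
    simp [cmpGraph, ne_comm]
  rw [h1]
  have h2 : ∀ i, rc f c i b
      = ∑ x : Fin (f i), if c ⟨i, x⟩ = b then 1 else 0 := by
    intro i; rw [rc, Finset.card_filter]
  have h3 : (Finset.univ.filter fun u : Σ i, Fin (f i) => u.1 ≠ v.1 ∧ c u = b).card
      = ∑ i, ∑ x : Fin (f i), if i ≠ v.1 ∧ c ⟨i, x⟩ = b then 1 else 0 := by
    rw [Finset.card_filter, ← Finset.univ_sigma_univ, Finset.sum_sigma]
  rw [h3]
  have h4 : ∀ i, (∑ x : Fin (f i), if i ≠ v.1 ∧ c ⟨i, x⟩ = b then 1 else 0)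
      = if i ≠ v.1 then rc f c i b else 0 := by
    intro i
    by_cases hi : i = v.1
    · simp [hi]
    · simp only [hi, if_pos, ne_eq, not_false_eq_true, if_true, h2]
      exact Finset.sum_congr rfl fun x _ => by simp [hi]
  rw [Finset.sum_congr rfl fun i _ => h4 i, ← Finset.sum_filter, Finset.filter_ne',
    Finset.sum_erase_add _ _ (Finset.mem_univ _)]

lemma cCnt_eq (c : (Σ i, Fin (f i)) → Bool) (v : Σ i, Fin (f i)) (b : Bool) :
    cCnt (cmpGraph f) c v b = oCnt (cmpGraph f) c v b + (if c v = b then 1 else 0) := by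
  classical
  have h1 : cCnt (cmpGraph f) c v b
      = (Finset.univ.filter fun u : Σ i, Fin (f i) => (u = v ∨ u.1 ≠ v.1) ∧ c u = b).card := by
    rw [cCnt, Set.ncard_eq_toFinset_card']
    congr 1
    ext u
    rw [Set.mem_toFinset]
    simp [cmpGraph, ne_comm]
  have h2 : oCnt (cmpGraph f) c v b
      = (Finset.univ.filter fun u : Σ i, Fin (f i) => u.1 ≠ v.1 ∧ c u = b).card := by
    rw [oCnt, Set.ncard_eq_toFinset_card']
    congr 1
    ext u
    rw [Set.mem_toFinset]
    simp [cmpGraph, ne_comm]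
  rw [h1, h2, Finset.card_filter, Finset.card_filter]
  have key : ∀ u : Σ i, Fin (f i),
      (if (u = v ∨ u.1 ≠ v.1) ∧ c u = b then (1:ℕ) else 0)
      = (if u.1 ≠ v.1 ∧ c u = b then 1 else 0) + (if u = v then (if c u = b then 1 else 0) else 0) := by
    intro u
    by_cases huv : u = v
    · subst huv; simp
    · by_cases h' : u.1 = v.1 <;> simp [huv, h']
  rw [Finset.sum_congr rfl fun u _ => key u, Finset.sum_add_distrib,
    Finset.sum_ite_eq' Finset.univ v]
  simp

/-- color imbalance of part j -/
def ew (c : (Σ i, Fin (f i)) → Bool) (j : ι) : ℤ :=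
  (rc f c j true : ℤ) - rc f c j false

/-- global color imbalance -/
def Dw (c : (Σ i, Fin (f i)) → Bool) : ℤ := ∑ j, ew f c j

lemma rc_add_rc (c : (Σ i, Fin (f i)) → Bool) (j : ι) :
    rc f c j true + rc f c j false = f j := by
  classical
  rw [rc, rc]
  have : (Finset.univ.filter fun x : Fin (f j) => c ⟨j, x⟩ = false)
      = Finset.univ.filter fun x : Fin (f j) => ¬ (c ⟨j, x⟩ = true) := by
    simp
  rw [this, Finset.card_filter_add_card_filter_not]
  simp

lemma oDiff (c : (Σ i, Fin (f i)) → Bool) (v : Σ i, Fin (f i)) :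
    (oCnt (cmpGraph f) c v true : ℤ) - oCnt (cmpGraph f) c v false
      = Dw f c - ew f c v.1 := by
  have h1 := oCnt_eq f c v true
  have h2 := oCnt_eq f c v false
  have h3 : Dw f c = (∑ i, (rc f c i true : ℤ)) - ∑ i, (rc f c i false : ℤ) := by
    rw [Dw, ← Finset.sum_sub_distrib]; rfl
  have h4 : ((∑ i, rc f c i true : ℕ) : ℤ) = ∑ i, (rc f c i true : ℤ) := by push_cast; rfl
  have h5 : ((∑ i, rc f c i false : ℕ) : ℤ) = ∑ i, (rc f c i false : ℤ) := by push_cast; rfl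
  rw [ew, h3]
  omega

lemma cDiff (c : (Σ i, Fin (f i)) → Bool) (v : Σ i, Fin (f i)) :
    (cCnt (cmpGraph f) c v true : ℤ) - cCnt (cmpGraph f) c v false
      = Dw f c - ew f c v.1 + (if c v then 1 else -1) := by
  rw [cCnt_eq, cCnt_eq]
  have := oDiff f c v
  cases hcv : c v <;> simp [hcv] <;> omega

lemma rc_le (c : (Σ i, Fin (f i)) → Bool) (j : ι) (b : Bool) : rc f c j b ≤ f j := by
  cases b
  · have := rc_add_rc f c j; omega
  · have := rc_add_rc f c j; omega

lemma epar (c : (Σ i, Fin (f i)) → Bool) (j : ι) :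
    ew f c j + f j = 2 * rc f c j true := by
  have := rc_add_rc f c j
  rw [ew]; omega

lemma helper (c : (Σ i, Fin (f i)) → Bool) (hf : ∀ i, 1 ≤ f i)
    (hc : ∀ v : Σ i, Fin (f i), (Dw f c - ew f c v.1).natAbs ≤ 1 ∨
      (Dw f c - ew f c v.1 + (if c v then 1 else -1)).natAbs ≤ 1)
    (hD1 : 1 ≤ Dw f c) (hDodd : Dw f c % 2 = 1) :
    (Finset.univ.filter fun i => Odd (f i) ∧ 1 < f i).card
      ≤ (Finset.univ.filter fun i => f i = 1).card + 1 := by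
  classical
  have F1 : ∀ j, (Dw f c - ew f c j).natAbs ≤ 2 := by
    intro j
    have hv := hc ⟨j, ⟨0, hf j⟩⟩
    dsimp only at hv
    rcases hv with hv | hv
    · omega
    · split_ifs at hv <;> omega
  have F2 : ∀ j, Dw f c - ew f c j = 2 → ew f c j = -(f j : ℤ) := by
    intro j hj
    have hblue : ∀ x : Fin (f j), c ⟨j, x⟩ = false := by
      intro x
      have hv := hc ⟨j, x⟩
      dsimp only at hv
      rcases hv with hv | hv
      · omega
      · split_ifs at hv with hcx
        · omega
        · simpa using hcx
    have hrc : rc f c j true = 0 := by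
      rw [rc, Finset.card_eq_zero, Finset.filter_eq_empty_iff]
      intro x _
      simp [hblue x]
    have := epar f c j
    omega
  have hoddNS : ∀ j, Odd (f j) → 1 < f j → Dw f c ≤ ew f c j := by
    intro j hodd hlt
    have hf3 : 3 ≤ f j := by
      have := Nat.odd_iff.mp hodd; omega
    have h1 := F1 j
    have h2 := epar f c j
    have h3 : f j % 2 = 1 := Nat.odd_iff.mp hodd
    by_cases h4 : Dw f c - ew f c j = 2
    · have := F2 j h4; omega
    · omega
  rcases eq_or_lt_of_le hD1 with hD1' | hD3
  · -- D = 1 case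
    have lower : ∀ j, (if f j = 1 then (-1:ℤ) else if Odd (f j) then 1 else 0) ≤ ew f c j := by
      intro j
      have h2 := epar f c j
      have hfj := hf j
      split_ifs with h1 hodd
      · omega
      · have := hoddNS j hodd (by omega)
        omega
      · have h1' := F1 j
        have h3 : f j % 2 = 0 := Nat.even_iff.mp (Nat.not_odd_iff_even.mp hodd)
        omega
    have hsum : (∑ j, (if f j = 1 then (-1:ℤ) else if Odd (f j) then 1 else 0)) ≤ Dw f c := by
      conv_rhs => rw [Dw]
      exact Finset.sum_le_sum fun j _ => lower j
    have hsplit : (∑ j, (if f j = 1 then (-1:ℤ) else if Odd (f j) then 1 else 0))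
        = ((Finset.univ.filter fun i => Odd (f i) ∧ 1 < f i).card : ℤ)
          - (Finset.univ.filter fun i => f i = 1).card := by
      have hpt : ∀ j, (if f j = 1 then (-1:ℤ) else if Odd (f j) then 1 else 0)
          = (if Odd (f j) ∧ 1 < f j then (1:ℤ) else 0) + (if f j = 1 then (-1:ℤ) else 0) := by
        intro j
        have hfj := hf j
        by_cases h1 : f j = 1
        · have : ¬ (Odd (f j) ∧ 1 < f j) := by omega
          simp [h1, this]
        · by_cases hodd : Odd (f j)
          · have : Odd (f j) ∧ 1 < f j := ⟨hodd, by omega⟩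
            simp [h1, hodd, this]
          · have : ¬ (Odd (f j) ∧ 1 < f j) := fun hh => hodd hh.1
            simp [h1, hodd, this]
      rw [Finset.sum_congr rfl fun j _ => hpt j, Finset.sum_add_distrib]
      rw [Finset.sum_boole]
      have hneg : (∑ j, if f j = 1 then (-1:ℤ) else 0)
          = - ∑ j, (if f j = 1 then (1:ℤ) else 0) := by
        rw [← Finset.sum_neg_distrib]
        exact Finset.sum_congr rfl fun j _ => by split_ifs <;> simp
      rw [hneg, Finset.sum_boole]
      ring
    rw [hsplit] at hsum
    omega
  · -- D ≥ 3 case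
    have hB : ∀ j, f j ≠ 1 := by
      intro j hj
      have h1 := F1 j
      have h2 := epar f c j
      have h3 := rc_le f c j true
      by_cases h4 : Dw f c - ew f c j = 2
      · have := F2 j h4
        rw [hj] at this
        omega
      · rw [hj] at h2 h3
        omega
    have lowerA : ∀ j, (if Odd (f j) ∧ 1 < f j then Dw f c else 0) ≤ ew f c j := by
      intro j
      have h1 := F1 j
      have h2 := epar f c j
      have hfj := hf j
      have hBj := hB j
      split_ifs with hA
      · have := hoddNS j hA.1 hA.2
        omega
      · have h3 : f j % 2 = 0 := by
          rcases Nat.even_or_odd (f j) with hp | hp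
          · exact Nat.even_iff.mp hp
          · exact absurd ⟨hp, by omega⟩ hA
        omega
    have hsum : (∑ j, (if Odd (f j) ∧ 1 < f j then Dw f c else 0)) ≤ Dw f c := by
      conv_rhs => rw [Dw]
      exact Finset.sum_le_sum fun j _ => lowerA j
    have hsplit : (∑ j, (if Odd (f j) ∧ 1 < f j then Dw f c else 0))
        = ((Finset.univ.filter fun i => Odd (f i) ∧ 1 < f i).card : ℤ) * Dw f c := by
      have hpt : ∀ j, (if Odd (f j) ∧ 1 < f j then Dw f c else 0)
          = (if Odd (f j) ∧ 1 < f j then (1:ℤ) else 0) * Dw f c := by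
        intro j; split_ifs <;> ring
      rw [Finset.sum_congr rfl fun j _ => hpt j, ← Finset.sum_mul, Finset.sum_boole]
    rw [hsplit] at hsum
    have hA1 : (Finset.univ.filter fun i => Odd (f i) ∧ 1 < f i).card ≤ 1 := by
      by_contra hcon
      push_neg at hcon
      have h2 : (2:ℤ) ≤ ((Finset.univ.filter fun i => Odd (f i) ∧ 1 < f i).card : ℤ) := by
        exact_mod_cast hcon
      nlinarith
    omega

lemma card_filter_val_lt' (n k : ℕ) :
    (Finset.univ.filter fun x : Fin n => (x : ℕ) < k).card = min k n := by
  have h1 : ((Finset.univ.map (Fin.valEmbedding (n := n))).filter fun a => a < k).card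
      = ((Finset.univ.filter fun x : Fin n => (x : ℕ) < k).map Fin.valEmbedding).card := by
    rw [Finset.filter_map]; rfl
  rw [Finset.card_map] at h1
  rw [← h1, Fin.map_valEmbedding_univ]
  have : (Finset.Iio n).filter (fun a => a < k) = Finset.Iio (min k n) := by
    ext a; simp [Nat.lt_min, and_comm]
  rw [this, Nat.card_Iio]

lemma constr (hf : ∀ i, 1 ≤ f i) (T : Finset ι) (hT : ∀ i ∈ T, Odd (f i)) :
    ∃ c : (Σ i, Fin (f i)) → Bool,
      (∀ j, ew f c j = if j ∈ T then 1 else if Odd (f j) then -1 else 0) ∧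
      (Dw f c = 2 * T.card - (Finset.univ.filter fun i => Odd (f i)).card) ∧
      (∀ v : Σ i, Fin (f i), v.1 ∉ T → f v.1 = 1 → c v = false) := by
  classical
  let g : ι → ℕ := fun i => if i ∈ T then (f i + 1) / 2 else f i / 2
  have hgval1 : ∀ j ∈ T, g j = (f j + 1) / 2 := fun j hj => by
    simp only [g, if_pos hj]
  have hgval2 : ∀ j ∉ T, g j = f j / 2 := fun j hj => by
    simp only [g, if_neg hj]
  let c : (Σ i, Fin (f i)) → Bool := fun u => decide ((u.2 : ℕ) < g u.1)
  have hcd : ∀ u : Σ i, Fin (f i), c u = decide ((u.2 : ℕ) < g u.1) := fun u => rfl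
  have hew : ∀ j, ew f c j = if j ∈ T then 1 else if Odd (f j) then -1 else 0 := by
    intro j
    have hrc : rc f c j true = g j := by
      rw [rc]
      have h0 : (Finset.univ.filter fun x : Fin (f j) => c ⟨j, x⟩ = true)
          = Finset.univ.filter fun x : Fin (f j) => (x : ℕ) < g j := by
        apply Finset.filter_congr
        intro x _
        rw [hcd]
        simp
      rw [h0, card_filter_val_lt']
      have hgle : g j ≤ f j := by
        have h1 := hf j
        by_cases hj : j ∈ T
        · have := hgval1 j hj; omega
        · have := hgval2 j hj; omega
      omega
    have hp := epar f c j
    rw [hrc] at hp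
    by_cases hj : j ∈ T
    · have hodd := Nat.odd_iff.mp (hT j hj)
      rw [if_pos hj]
      rw [hgval1 j hj] at hp
      omega
    · rw [if_neg hj]
      rw [hgval2 j hj] at hp
      rcases Nat.even_or_odd (f j) with hp2 | hp2
      · rw [if_neg (Nat.not_odd_iff_even.mpr hp2)]
        have := Nat.even_iff.mp hp2
        omega
      · rw [if_pos hp2]
        have := Nat.odd_iff.mp hp2
        omega
  have hDw : Dw f c = 2 * T.card - (Finset.univ.filter fun i => Odd (f i)).card := by
    rw [Dw, Finset.sum_congr rfl fun j _ => hew j]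
    have hpt : ∀ j : ι, (if j ∈ T then (1:ℤ) else if Odd (f j) then -1 else 0)
        = 2 * (if j ∈ T then (1:ℤ) else 0) + (if Odd (f j) then (-1:ℤ) else 0) := by
      intro j
      by_cases hj : j ∈ T
      · simp [hj, hT j hj]
      · simp [hj]
    rw [Finset.sum_congr rfl fun j _ => hpt j, Finset.sum_add_distrib, ← Finset.mul_sum,
      Finset.sum_boole]
    have hneg : (∑ j, if Odd (f j) then (-1:ℤ) else 0)
        = - ∑ j, (if Odd (f j) then (1:ℤ) else 0) := by
      rw [← Finset.sum_neg_distrib]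
      exact Finset.sum_congr rfl fun j _ => by split_ifs <;> simp
    rw [hneg, Finset.sum_boole]
    have hft : Finset.univ.filter (fun j => j ∈ T) = T := by
      simp [Finset.filter_mem_eq_inter]
    rw [hft]
    ring
  refine ⟨c, hew, hDw, ?_⟩
  intro v hv hf1
  rw [hcd]
  simp only [decide_eq_false_iff_not, not_lt, hgval2 v.1 hv, hf1]
  omega

lemma Dw_parity (c : (Σ i, Fin (f i)) → Bool) :
    Dw f c + (∑ i, (f i : ℤ)) = 2 * ∑ i, (rc f c i true : ℤ) := by
  rw [Dw, ← Finset.sum_add_distrib, Finset.mul_sum]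
  exact Finset.sum_congr rfl fun j _ => epar f c j

lemma sum_parity : (∑ i, f i) % 2 = (Finset.univ.filter fun i => Odd (f i)).card % 2 := by
  classical
  rw [Finset.sum_nat_mod, Finset.card_filter]
  congr 1
  exact Finset.sum_congr rfl fun i _ => by
    by_cases hi : Odd (f i)
    · rw [if_pos hi, Nat.odd_iff.mp hi]
    · rw [if_neg hi, Nat.even_iff.mp (Nat.not_odd_iff_even.mp hi)]

lemma cardO_split (hf : ∀ i, 1 ≤ f i) :
    (Finset.univ.filter fun i => Odd (f i)).card
      = (Finset.univ.filter fun i => Odd (f i) ∧ 1 < f i).card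
        + (Finset.univ.filter fun i => f i = 1).card := by
  classical
  have h1 : (Finset.univ.filter fun i => Odd (f i))
      = (Finset.univ.filter fun i => (Odd (f i) ∧ 1 < f i) ∨ f i = 1) := by
    apply Finset.filter_congr
    intro i _
    have hfi := hf i
    constructor
    · intro hodd
      by_cases h : f i = 1
      · exact Or.inr h
      · exact Or.inl ⟨hodd, by omega⟩
    · rintro (⟨hodd, _⟩ | h1)
      · exact hodd
      · rw [h1]; exact odd_one
  rw [h1, Finset.filter_or, Finset.card_union_of_disjoint]
  rw [Finset.disjoint_left]
  intro i hi1 hi2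
  have := (Finset.mem_filter.mp hi1).2
  have := (Finset.mem_filter.mp hi2).2
  omega

lemma ncard_eq_filter (p : ι → Prop) [DecidablePred p] :
    {i | p i}.ncard = (Finset.univ.filter p).card := by
  rw [Set.ncard_eq_toFinset_card', Set.toFinset_setOf]

lemma rc_swap (c : (Σ i, Fin (f i)) → Bool) (j : ι) (b : Bool) :
    rc f (fun u => !(c u)) j b = rc f c j (!b) := by
  rw [rc, rc]
  congr 1
  apply Finset.filter_congr
  intro x _
  cases b <;> simp

lemma ew_swap (c : (Σ i, Fin (f i)) → Bool) (j : ι) :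
    ew f (fun u => !(c u)) j = - ew f c j := by
  rw [ew, ew, rc_swap, rc_swap]
  simp only [Bool.not_true, Bool.not_false]
  ring

lemma Dw_swap (c : (Σ i, Fin (f i)) → Bool) :
    Dw f (fun u => !(c u)) = - Dw f c := by
  rw [Dw, Dw, ← Finset.sum_neg_distrib]
  exact Finset.sum_congr rfl fun j _ => ew_swap f c j

end S17

open S17 in
/-- A complete multipartite graph on `n` vertices with `m₁` singleton parts and `h`
non-singleton odd parts admits a 2-coloring that at each vertex is 1-balanced at the
open or at the closed neighborhood, iff `n` is even or `m₁ ≥ h - 1`. -/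
theorem stmt17 {ι : Type*} [Fintype ι] [DecidableEq ι] (f : ι → ℕ) (hf : ∀ i, 1 ≤ f i)
    (m₁ h : ℕ) (hm₁ : m₁ = {i | f i = 1}.ncard) (hh : h = {i | Odd (f i) ∧ 1 < f i}.ncard) :
    (∃ c : (Σ i, Fin (f i)) → Bool, ∀ v,
      ((oCnt (cmpGraph f) c v true : ℤ) - oCnt (cmpGraph f) c v false).natAbs ≤ 1 ∨
      ((cCnt (cmpGraph f) c v true : ℤ) - cCnt (cmpGraph f) c v false).natAbs ≤ 1) ↔
    (Even (Fintype.card (Σ i, Fin (f i))) ∨ h ≤ m₁ + 1) := by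
  classical
  have hcardV : Fintype.card (Σ i, Fin (f i)) = ∑ i, f i := by
    simp [Fintype.card_sigma]
  have hm₁' : m₁ = (Finset.univ.filter fun i => f i = 1).card := by
    rw [hm₁, ncard_eq_filter]
  have hh' : h = (Finset.univ.filter fun i => Odd (f i) ∧ 1 < f i).card := by
    rw [hh, ncard_eq_filter]
  constructor
  · rintro ⟨c, hc⟩
    by_cases hn : Even (Fintype.card (Σ i, Fin (f i)))
    · exact Or.inl hn
    right
    have hc' : ∀ v : Σ i, Fin (f i), (Dw f c - ew f c v.1).natAbs ≤ 1 ∨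
        (Dw f c - ew f c v.1 + (if c v then 1 else -1)).natAbs ≤ 1 := by
      intro v
      rcases hc v with hv | hv
      · left; rwa [oDiff] at hv
      · right; rwa [cDiff] at hv
    have hnodd : (∑ i, f i) % 2 = 1 := by
      rw [← hcardV]
      exact Nat.odd_iff.mp (Nat.not_even_iff_odd.mp hn)
    have hpar := Dw_parity f c
    have hcast : (∑ i, (f i : ℤ)) = ((∑ i, f i : ℕ) : ℤ) := by push_cast; rfl
    rw [hcast] at hpar
    have hDodd : Dw f c % 2 = 1 := by omega
    rcases le_or_gt 1 (Dw f c) with hD | hD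
    · have := helper f c hf hc' hD hDodd
      omega
    · set c2 : (Σ i, Fin (f i)) → Bool := fun u => !(c u) with hc2def
      have hDw2 : Dw f c2 = - Dw f c := Dw_swap f c
      have hew2 : ∀ j, ew f c2 j = - ew f c j := ew_swap f c
      have hc2' : ∀ v : Σ i, Fin (f i), (Dw f c2 - ew f c2 v.1).natAbs ≤ 1 ∨
          (Dw f c2 - ew f c2 v.1 + (if c2 v then 1 else -1)).natAbs ≤ 1 := by
        intro v
        have heps : (if c2 v then (1:ℤ) else -1) = -(if c v then (1:ℤ) else -1) := by
          cases hcv : c v <;> simp [hc2def, hcv]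
        rw [hDw2, hew2, heps]
        rcases hc' v with hv | hv
        · left; omega
        · right; omega
      have := helper f c2 hf hc2' (by omega) (by omega)
      omega
  · intro hside
    by_cases hn : Even (Fintype.card (Σ i, Fin (f i)))
    · -- balanced construction, D = 0
      have hOeven : (Finset.univ.filter fun i => Odd (f i)).card % 2 = 0 := by
        have h1 := sum_parity f
        have h2 : (∑ i, f i) % 2 = 0 := by
          rw [← hcardV]; exact Nat.even_iff.mp hn
        omega
      obtain ⟨T, hTsub, hTcard⟩ := Finset.exists_subset_card_eq
        (Nat.div_le_self (Finset.univ.filter fun i => Odd (f i)).card 2)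
      have hT : ∀ i ∈ T, Odd (f i) := fun i hi => (Finset.mem_filter.mp (hTsub hi)).2
      obtain ⟨c, hew, hDw, -⟩ := constr f hf T hT
      have hDw0 : Dw f c = 0 := by
        rw [hDw, hTcard]; omega
      refine ⟨c, fun v => Or.inl ?_⟩
      rw [oDiff, hDw0]
      have := hew v.1
      split_ifs at this <;> omega
    · -- D = 1 construction
      have hmh : h ≤ m₁ + 1 := hside.resolve_left hn
      set A := (Finset.univ.filter fun i => Odd (f i) ∧ 1 < f i) with hA
      set B := (Finset.univ.filter fun i => f i = 1) with hB
      have hOsplit := cardO_split f hf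
      have hOodd : (Finset.univ.filter fun i => Odd (f i)).card % 2 = 1 := by
        have h1 := sum_parity f
        have h2 : (∑ i, f i) % 2 = 1 := by
          rw [← hcardV]
          exact Nat.odd_iff.mp (Nat.not_even_iff_odd.mp hn)
        omega
      rw [← hA, ← hB] at hOsplit
      rw [hh', hm₁'] at hmh
      have ha2 : 2 * ((B.card + 1 - A.card) / 2) = B.card + 1 - A.card := by omega
      set a := (B.card + 1 - A.card) / 2 with haa
      have haB : a ≤ B.card := by omega
      obtain ⟨S, hSsub, hScard⟩ := Finset.exists_subset_card_eq haB
      have hdisj : Disjoint A S := by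
        rw [Finset.disjoint_left]
        intro i hiA hiS
        have h1 := (Finset.mem_filter.mp hiA).2
        have h2 := (Finset.mem_filter.mp (hSsub hiS)).2
        omega
      have hT : ∀ i ∈ A ∪ S, Odd (f i) := by
        intro i hi
        rcases Finset.mem_union.mp hi with hi | hi
        · exact (Finset.mem_filter.mp hi).2.1
        · have := (Finset.mem_filter.mp (hSsub hi)).2
          rw [this]; exact odd_one
      obtain ⟨c, hew, hDw, hc1⟩ := constr f hf (A ∪ S) hT
      have hTcard : (A ∪ S).card = A.card + a := by
        rw [Finset.card_union_of_disjoint hdisj, hScard]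
      have hDw1 : Dw f c = 1 := by
        rw [hDw, hTcard]
        have : (Finset.univ.filter fun i => Odd (f i)).card = A.card + B.card := hOsplit
        rw [this]
        push_cast
        omega
      refine ⟨c, fun v => ?_⟩
      have hewv := hew v.1
      by_cases hj : v.1 ∈ A ∪ S
      · left
        rw [oDiff, hDw1]
        rw [if_pos hj] at hewv
        rw [hewv]
        omega
      · by_cases hodd : Odd (f v.1)
        · -- singleton, colored blue
          have hf1 : f v.1 = 1 := by
            have : v.1 ∉ A := fun hin => hj (Finset.mem_union_left _ hin)
            rw [hA] at this
            simp only [Finset.mem_filter, Finset.mem_univ, true_and] at this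
            have h2 : ¬ 1 < f v.1 := fun hlt => this ⟨hodd, hlt⟩
            have := hf v.1
            omega
          right
          rw [cDiff, hDw1, hc1 v hj hf1]
          rw [if_neg hj, if_pos hodd] at hewv
          rw [hewv]
          simp
        · left
          rw [oDiff, hDw1]
          rw [if_neg hj, if_neg hodd] at hewv
          rw [hewv]
          omega
end

section
/- Let G be a complete multipartite graph on n vertices with a 2-coloring that is 1-balanced at every closed neighborhood. If n is even then every odd-size part is monochromatic, and if n is odd then every even-size part is monochromatic. -/
open Finset in
lemma aux_part_card {ι : Type*} [Fintype ι] [DecidableEq ι] (f : ι → ℕ) (i : ι) :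
    (Finset.univ.filter (fun u : Σ j, Fin (f j) => u.1 = i)).card = f i := by
  have h : Finset.univ.filter (fun u : Σ j, Fin (f j) => u.1 = i)
      = (Finset.univ : Finset (Fin (f i))).image (fun x => ⟨i, x⟩) := by
    ext ⟨j, x⟩
    simp only [mem_filter, mem_univ, true_and, mem_image]
    constructor
    · rintro rfl; exact ⟨x, rfl⟩
    · rintro ⟨y, h⟩; exact (congrArg Sigma.fst h).symm
  rw [h, Finset.card_image_of_injective _ sigma_mk_injective, Finset.card_univ, Fintype.card_fin]

open Finset in
lemma aux_cCnt {ι : Type*} [Fintype ι] [DecidableEq ι] (f : ι → ℕ)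
    (c : (Σ i, Fin (f i)) → Bool) (i : ι) (x : Fin (f i)) (b : Bool) :
    cCnt (cmpGraph f) c ⟨i, x⟩ b
      + (Finset.univ.filter (fun u : Σ j, Fin (f j) => u.1 = i ∧ c u = b)).card
      = (Finset.univ.filter (fun u : Σ j, Fin (f j) => c u = b)).card
      + (if c ⟨i, x⟩ = b then 1 else 0) := by
  classical
  have hs : cCnt (cmpGraph f) c ⟨i, x⟩ b
      = (Finset.univ.filter (fun u : Σ j, Fin (f j) =>
          (u = ⟨i, x⟩ ∨ u.1 ≠ i) ∧ c u = b)).card := by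
    rw [cCnt, Set.ncard_eq_toFinset_card']
    congr 1
    ext u
    rw [Set.mem_toFinset]
    simp only [Set.mem_toFinset, Set.mem_setOf_eq, mem_filter, mem_univ, true_and, cmpGraph]
    constructor
    · rintro ⟨h1 | h1, h2⟩
      exacts [⟨Or.inl h1, h2⟩, ⟨Or.inr (fun h => h1 h.symm), h2⟩]
    · rintro ⟨h1 | h1, h2⟩
      exacts [⟨Or.inl h1, h2⟩, ⟨Or.inr (fun h => h1 h.symm), h2⟩]
  rw [hs]
  have hsplit : Finset.univ.filter (fun u : Σ j, Fin (f j) =>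
          (u = ⟨i, x⟩ ∨ u.1 ≠ i) ∧ c u = b)
      = (Finset.univ.filter (fun u : Σ j, Fin (f j) => u.1 ≠ i ∧ c u = b))
        ∪ (Finset.univ.filter (fun u : Σ j, Fin (f j) => u = ⟨i, x⟩ ∧ c u = b)) := by
    ext ⟨j, y⟩
    simp only [mem_filter, mem_univ, true_and, mem_union]
    constructor
    · rintro ⟨h1 | h1, h2⟩
      · exact Or.inr ⟨h1, h2⟩
      · exact Or.inl ⟨h1, h2⟩
    · rintro (⟨h1, h2⟩ | ⟨h1, h2⟩)
      · exact ⟨Or.inr h1, h2⟩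
      · exact ⟨Or.inl h1, h2⟩
  rw [hsplit, Finset.card_union_of_disjoint]
  · have h2 : (Finset.univ.filter (fun u : Σ j, Fin (f j) => u = ⟨i, x⟩ ∧ c u = b)).card
        = if c ⟨i, x⟩ = b then 1 else 0 := by
      split
      · next h =>
        rw [Finset.card_eq_one]
        exact ⟨⟨i, x⟩, by ext u; simp; rintro rfl; exact h⟩
      · next h =>
        rw [Finset.card_eq_zero]
        ext u; simp; rintro rfl; exact h
    rw [h2]
    have h3 : (Finset.univ.filter (fun u : Σ j, Fin (f j) => u.1 ≠ i ∧ c u = b)).card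
        + (Finset.univ.filter (fun u : Σ j, Fin (f j) => u.1 = i ∧ c u = b)).card
        = (Finset.univ.filter (fun u : Σ j, Fin (f j) => c u = b)).card := by
      have h4 := Finset.card_filter_add_card_filter_not
        (s := (Finset.univ.filter (fun u : Σ j, Fin (f j) => c u = b)))
        (p := fun u => u.1 = i)
      simp only [Finset.filter_filter] at h4
      have e1 : Finset.univ.filter (fun u : Σ j, Fin (f j) => c u = b ∧ u.1 = i)
          = Finset.univ.filter (fun u : Σ j, Fin (f j) => u.1 = i ∧ c u = b) := by
        simp [and_comm]
      have e2 : Finset.univ.filter (fun u : Σ j, Fin (f j) => c u = b ∧ ¬u.1 = i)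
          = Finset.univ.filter (fun u : Σ j, Fin (f j) => u.1 ≠ i ∧ c u = b) := by
        simp [and_comm, Ne]
      rw [e1, e2] at h4
      omega
    omega
  · rw [Finset.disjoint_left]
    rintro u hu hv
    simp at hu hv
    exact hu.1 (congrArg Sigma.fst hv.1)

open Finset in
lemma aux_key {ι : Type*} [Fintype ι] [DecidableEq ι] (f : ι → ℕ)
    (c : (Σ i, Fin (f i)) → Bool)
    (hc : ∀ v, ((cCnt (cmpGraph f) c v true : ℤ) - cCnt (cmpGraph f) c v false).natAbs ≤ 1)
    (i : ι) (x y : Fin (f i)) (hx : c ⟨i, x⟩ = true) (hy : c ⟨i, y⟩ = false) :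
    (Fintype.card (Σ j, Fin (f j)) + f i) % 2 = 0 := by
  classical
  have h1 := aux_cCnt f c i x true
  have h2 := aux_cCnt f c i x false
  have h3 := aux_cCnt f c i y true
  have h4 := aux_cCnt f c i y false
  rw [hx] at h1 h2
  rw [hy] at h3 h4
  norm_num at h1 h2 h3 h4
  have hcx := hc ⟨i, x⟩
  have hcy := hc ⟨i, y⟩
  have hn : (Finset.univ.filter (fun u : Σ j, Fin (f j) => c u = true)).card
      + (Finset.univ.filter (fun u : Σ j, Fin (f j) => c u = false)).card
      = Fintype.card (Σ j, Fin (f j)) := by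
    have h5 := Finset.card_filter_add_card_filter_not
      (s := (Finset.univ : Finset (Σ j, Fin (f j)))) (p := fun u => c u = true)
    simp only [Bool.not_eq_true, Finset.card_univ] at h5
    exact h5
  have hfi : (Finset.univ.filter (fun u : Σ j, Fin (f j) => u.1 = i ∧ c u = true)).card
      + (Finset.univ.filter (fun u : Σ j, Fin (f j) => u.1 = i ∧ c u = false)).card
      = f i := by
    have h5 := Finset.card_filter_add_card_filter_not
      (s := Finset.univ.filter (fun u : Σ j, Fin (f j) => u.1 = i)) (p := fun u => c u = true)
    simp only [Bool.not_eq_true, Finset.filter_filter, aux_part_card] at h5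
    exact h5
  omega

/-- If a complete multipartite graph on `n` vertices has a 2-coloring 1-balanced at
every closed neighborhood, then: if `n` is even every odd-size part is monochromatic,
and if `n` is odd every even-size part is monochromatic. -/
theorem stmt18 {ι : Type*} [Fintype ι] [DecidableEq ι] (f : ι → ℕ) (hf : ∀ i, 1 ≤ f i)
    (c : (Σ i, Fin (f i)) → Bool)
    (hc : ∀ v, ((cCnt (cmpGraph f) c v true : ℤ) - cCnt (cmpGraph f) c v false).natAbs ≤ 1) :
    (Even (Fintype.card (Σ i, Fin (f i))) →
      ∀ i, Odd (f i) → ∀ x y : Fin (f i), c ⟨i, x⟩ = c ⟨i, y⟩) ∧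
    (Odd (Fintype.card (Σ i, Fin (f i))) →
      ∀ i, Even (f i) → ∀ x y : Fin (f i), c ⟨i, x⟩ = c ⟨i, y⟩) := by
  have main : ∀ i (x y : Fin (f i)), c ⟨i, x⟩ ≠ c ⟨i, y⟩ →
      (Fintype.card (Σ j, Fin (f j)) + f i) % 2 = 0 := by
    intro i x y h
    rcases Bool.eq_false_or_eq_true (c ⟨i, x⟩) with hx | hx
    · rcases Bool.eq_false_or_eq_true (c ⟨i, y⟩) with hy | hy
      · exact absurd (hx.trans hy.symm) h
      · exact aux_key f c hc i x y hx hy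
    · rcases Bool.eq_false_or_eq_true (c ⟨i, y⟩) with hy | hy
      · exact aux_key f c hc i y x hy hx
      · exact absurd (hx.trans hy.symm) h
    
  constructor
  · intro hn i hodd x y
    by_contra h
    have key := main i x y h
    rw [Nat.even_iff] at hn
    rw [Nat.odd_iff] at hodd
    omega
  · intro hn i heven x y
    by_contra h
    have key := main i x y h
    rw [Nat.odd_iff] at hn
    rw [Nat.even_iff] at heven
    omega
end

section
/- A complete multipartite graph G with at least two parts admits a parity-balanced 2-coloring if and only if |V(G)| is even and every odd-size part is a singleton. -/
section
open Finset

instance {ι : Type*} [DecidableEq ι] (f : ι → ℕ) : DecidableRel (cmpGraph f).Adj :=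
  fun u v => decidable_of_iff (u.1 ≠ v.1) Iff.rfl

lemma pb_ncard_filter {α : Type*} [Fintype α] (p : α → Prop) [DecidablePred p] :
    {u | p u}.ncard = (univ.filter p).card := by
  rw [Set.ncard_eq_toFinset_card', Set.toFinset_setOf]

section
set_option linter.unusedSectionVars false
variable {ι : Type*} [Fintype ι] [DecidableEq ι] (f : ι → ℕ) (c : (Σ i, Fin (f i)) → Bool)

def Pset (b : Bool) : Finset (Σ i, Fin (f i)) := univ.filter (fun u => c u = b)

def Qset (i : ι) (b : Bool) : Finset (Fin (f i)) := univ.filter (fun x => c ⟨i, x⟩ = b)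

lemma pb_part_filter (i : ι) (s : Finset (Σ i, Fin (f i))) :
    s.filter (fun u => u.1 = i) =
      (univ.filter (fun x : Fin (f i) => (⟨i, x⟩ : Σ i, Fin (f i)) ∈ s)).map
        ⟨fun x => ⟨i, x⟩, fun a b h => by cases h; rfl⟩ := by
  ext ⟨i', x⟩
  simp only [mem_filter, mem_map, Function.Embedding.coeFn_mk, mem_filter, mem_univ, true_and]
  constructor
  · rintro ⟨hs, rfl⟩; exact ⟨x, hs, rfl⟩
  · rintro ⟨y, hy, h⟩; cases h; exact ⟨hy, rfl⟩

lemma pb_card_part (i : ι) :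
    (univ.filter (fun u : Σ i, Fin (f i) => u.1 = i)).card = f i := by
  rw [pb_part_filter]
  simp

lemma pb_deg (i : ι) (j : Fin (f i)) :
    deg' (cmpGraph f) ⟨i, j⟩ + f i = Fintype.card (Σ i, Fin (f i)) := by
  have h := card_filter_add_card_filter_not (s := (univ : Finset (Σ i, Fin (f i))))
    (p := fun u => u.1 = i)
  rw [pb_card_part] at h
  have : deg' (cmpGraph f) ⟨i, j⟩ = (univ.filter (fun u : Σ i, Fin (f i) => ¬ u.1 = i)).card := by
    rw [deg', pb_ncard_filter]
    congr 1
    ext u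
    simp only [mem_filter, mem_univ, true_and]
    exact ⟨fun h e => h e.symm, fun h e => h e.symm⟩
  rw [this]
  rw [Finset.card_univ] at h
  omega

lemma pb_oCnt (i : ι) (j : Fin (f i)) (b : Bool) :
    oCnt (cmpGraph f) c ⟨i, j⟩ b + (Qset f c i b).card = (Pset f c b).card := by
  have h := card_filter_add_card_filter_not (s := Pset f c b)
    (p := fun u => u.1 = i)
  have h1 : (Pset f c b).filter (fun u => u.1 = i) =
      (Qset f c i b).map ⟨fun x => ⟨i, x⟩, fun a b h => by cases h; rfl⟩ := by
    rw [pb_part_filter]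
    congr 1
    ext x
    simp [Pset, Qset]
  have h2 : oCnt (cmpGraph f) c ⟨i, j⟩ b = ((Pset f c b).filter (fun u => ¬ u.1 = i)).card := by
    rw [oCnt, pb_ncard_filter]
    congr 1
    ext u
    simp only [Pset, filter_filter, mem_filter, mem_univ, true_and]
    constructor
    · rintro ⟨h, hc⟩; exact ⟨hc, fun e => h (e.symm)⟩
    · rintro ⟨hc, h⟩; exact ⟨fun e => h e.symm, hc⟩
  rw [h2, ← h, h1, card_map]
  ring

lemma pb_cCnt (i : ι) (j : Fin (f i)) (b : Bool) :
    cCnt (cmpGraph f) c ⟨i, j⟩ b =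
      oCnt (cmpGraph f) c ⟨i, j⟩ b + (if c ⟨i, j⟩ = b then 1 else 0) := by
  rw [cCnt, oCnt, pb_ncard_filter, pb_ncard_filter]
  have h := card_filter_add_card_filter_not
    (s := univ.filter (fun u : Σ i, Fin (f i) => (u = ⟨i, j⟩ ∨ (cmpGraph f).Adj ⟨i, j⟩ u) ∧ c u = b))
    (p := fun u => u.1 = i)
  rw [← h]
  have h1 : (univ.filter (fun u : Σ i, Fin (f i) => (u = ⟨i, j⟩ ∨ (cmpGraph f).Adj ⟨i, j⟩ u) ∧ c u = b)).filter
      (fun u => ¬ u.1 = i) = univ.filter (fun u => (cmpGraph f).Adj ⟨i, j⟩ u ∧ c u = b) := by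
    ext u
    simp only [filter_filter, mem_filter, mem_univ, true_and]
    constructor
    · rintro ⟨⟨h1 | h1, hc⟩, hne⟩
      · exact absurd (by rw [h1]) hne
      · exact ⟨h1, hc⟩
    · rintro ⟨hadj, hc⟩
      exact ⟨⟨Or.inr hadj, hc⟩, fun e => hadj e.symm⟩
  have h2 : (univ.filter (fun u : Σ i, Fin (f i) => (u = ⟨i, j⟩ ∨ (cmpGraph f).Adj ⟨i, j⟩ u) ∧ c u = b)).filter
      (fun u => u.1 = i) = if c ⟨i, j⟩ = b then {⟨i, j⟩} else ∅ := by
    ext u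
    simp only [filter_filter, mem_filter, mem_univ, true_and]
    split_ifs with hc
    · simp only [mem_singleton]
      constructor
      · rintro ⟨⟨h1 | h1, _⟩, he⟩
        · exact h1
        · exact absurd he.symm h1
      · rintro rfl; exact ⟨⟨Or.inl rfl, hc⟩, rfl⟩
    · simp only [notMem_empty, iff_false]
      rintro ⟨⟨h1 | h1, hcb⟩, he⟩
      · exact hc (h1 ▸ hcb)
      · exact h1 he.symm
  rw [h1, h2]
  split_ifs <;> simp <;> omega

lemma pb_Psum (b : Bool) : (Pset f c b).card = ∑ i, (Qset f c i b).card := by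
  rw [Finset.card_eq_sum_card_fiberwise (f := Sigma.fst) (t := univ) (fun x _ => mem_univ _)]
  refine Finset.sum_congr rfl (fun i _ => ?_)
  have := pb_part_filter f i (Pset f c b)
  rw [this, card_map]
  congr 1
  ext x
  simp [Pset, Qset]

lemma pb_Ptot : (Pset f c true).card + (Pset f c false).card = Fintype.card (Σ i, Fin (f i)) := by
  have h := card_filter_add_card_filter_not (s := (univ : Finset (Σ i, Fin (f i))))
    (p := fun u => c u = true)
  simp only [Bool.not_eq_true] at h
  rw [Pset, Pset]
  rw [← Finset.card_univ]
  exact h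

lemma pb_Qtot (i : ι) : (Qset f c i true).card + (Qset f c i false).card = f i := by
  have h := card_filter_add_card_filter_not (s := (univ : Finset (Fin (f i))))
    (p := fun x => c ⟨i, x⟩ = true)
  simp only [Bool.not_eq_true] at h
  rw [Qset, Qset]
  simpa using h

lemma pb_N : Fintype.card (Σ i, Fin (f i)) = ∑ i, f i := by
  simp [Fintype.card_sigma]

end

section
set_option linter.unusedSectionVars false
variable {ι : Type*} [Fintype ι] [DecidableEq ι] {f : ι → ℕ} {c : (Σ i, Fin (f i)) → Bool}

lemma pb_even_s19 (h : IsPB (cmpGraph f) c) (i : ι) (j : Fin (f i))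
    (hE : Even (deg' (cmpGraph f) ⟨i, j⟩)) :
    (Pset f c true).card + (Qset f c i false).card =
      (Pset f c false).card + (Qset f c i true).card := by
  have h1 := (h ⟨i, j⟩).1 hE
  have h2 := pb_oCnt f c i j true
  have h3 := pb_oCnt f c i j false
  omega

lemma pb_odd_s19 (h : IsPB (cmpGraph f) c) (i : ι) (j : Fin (f i))
    (hO : Odd (deg' (cmpGraph f) ⟨i, j⟩)) :
    (Pset f c true).card + (Qset f c i false).card + (if c ⟨i, j⟩ = true then 1 else 0) =
      (Pset f c false).card + (Qset f c i true).card + (if c ⟨i, j⟩ = false then 1 else 0) := by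
  have h1 := (h ⟨i, j⟩).2 hO
  rw [pb_cCnt, pb_cCnt] at h1
  have h2 := pb_oCnt f c i j true
  have h3 := pb_oCnt f c i j false
  cases hc : c ⟨i, j⟩ <;> simp [hc] at h1 ⊢ <;> omega

lemma pb_mono (h : IsPB (cmpGraph f) c) (i : ι) (j j' : Fin (f i))
    (hO : Odd (deg' (cmpGraph f) ⟨i, j⟩)) : c ⟨i, j⟩ = c ⟨i, j'⟩ := by
  have hO' : Odd (deg' (cmpGraph f) ⟨i, j'⟩) := by
    have e1 := pb_deg f i j
    have e2 := pb_deg f i j'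
    have : deg' (cmpGraph f) ⟨i, j⟩ = deg' (cmpGraph f) ⟨i, j'⟩ := by omega
    rwa [← this]
  have h1 := pb_odd_s19 h i j hO
  have h2 := pb_odd_s19 h i j' hO'
  cases hc : c ⟨i, j⟩ <;> cases hc' : c ⟨i, j'⟩ <;>
    simp [hc, hc'] at h1 h2 ⊢ <;> omega

lemma pb_mono_true (h : IsPB (cmpGraph f) c) (i : ι) (j : Fin (f i))
    (hO : Odd (deg' (cmpGraph f) ⟨i, j⟩)) (hc : c ⟨i, j⟩ = true) :
    (Qset f c i true).card = f i := by
  have : Qset f c i true = univ := by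
    ext x
    simp only [Qset, mem_filter, mem_univ, true_and, iff_true]
    rw [← pb_mono h i j x hO]; exact hc
  rw [this]; simp

lemma pb_mono_false (h : IsPB (cmpGraph f) c) (i : ι) (j : Fin (f i))
    (hO : Odd (deg' (cmpGraph f) ⟨i, j⟩)) (hc : c ⟨i, j⟩ = false) :
    (Qset f c i false).card = f i := by
  have : Qset f c i false = univ := by
    ext x
    simp only [Qset, mem_filter, mem_univ, true_and, iff_true]
    rw [← pb_mono h i j x hO]; exact hc
  rw [this]; simp

lemma pb_not_lt (hf : ∀ i, 1 ≤ f i) (hparts : 2 ≤ Fintype.card ι)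
    (h : IsPB (cmpGraph f) c) :
    ¬ ((Pset f c false).card < (Pset f c true).card) := by
  intro hlt
  set T := (Pset f c true).card with hT
  set F := (Pset f c false).card with hF
  have hD : (0 : ℤ) < (T : ℤ) - F := by omega
  have claim : ∀ i : ι, (T : ℤ) - F ≤ ((Qset f c i true).card : ℤ) - (Qset f c i false).card := by
    intro i
    set j0 : Fin (f i) := ⟨0, hf i⟩
    by_cases hE : Even (deg' (cmpGraph f) ⟨i, j0⟩)
    · have := pb_even_s19 h i j0 hE
      omega
    · have hO : Odd (deg' (cmpGraph f) ⟨i, j0⟩) := Nat.not_even_iff_odd.mp hE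
      have hQ := pb_Qtot f c i
      have hfi := hf i
      have h1 := pb_odd_s19 h i j0 hO
      cases hc : c ⟨i, j0⟩
      · have := pb_mono_false h i j0 hO hc
        simp [hc] at h1
        omega
      · have := pb_mono_true h i j0 hO hc
        simp [hc] at h1
        omega
  have hTs : (T : ℤ) = ∑ i : ι, ((Qset f c i true).card : ℤ) := by
    rw [hT, pb_Psum]; push_cast; ring
  have hFs : (F : ℤ) = ∑ i : ι, ((Qset f c i false).card : ℤ) := by
    rw [hF, pb_Psum]; push_cast; ring
  have hRHS : ∑ i : ι, (((Qset f c i true).card : ℤ) - (Qset f c i false).card)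
      = (T : ℤ) - F := by
    rw [Finset.sum_sub_distrib, ← hTs, ← hFs]
  have hsum : (Fintype.card ι : ℤ) * ((T : ℤ) - F) ≤ (T : ℤ) - F := by
    calc (Fintype.card ι : ℤ) * ((T : ℤ) - F)
        = ∑ _i : ι, ((T : ℤ) - F) := by
          rw [Finset.sum_const, Finset.card_univ, nsmul_eq_mul]
      _ ≤ ∑ i : ι, (((Qset f c i true).card : ℤ) - (Qset f c i false).card) :=
          Finset.sum_le_sum (fun i _ => claim i)
      _ = (T : ℤ) - F := hRHS
  have h2 : (2 : ℤ) * ((T : ℤ) - F) ≤ (Fintype.card ι : ℤ) * ((T : ℤ) - F) := by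
    apply mul_le_mul_of_nonneg_right _ (le_of_lt hD)
    exact_mod_cast hparts
  linarith

lemma pb_neg (h : IsPB (cmpGraph f) c) : IsPB (cmpGraph f) (fun v => !c v) := by
  intro v
  have hset : ∀ (p : (Σ i, Fin (f i)) → Prop) (b : Bool),
      {u | p u ∧ (!c u) = b} = {u | p u ∧ c u = !b} := by
    intro p b; ext u; simp [Bool.not_eq]
  constructor
  · intro hE
    have := (h v).1 hE
    rw [oCnt, oCnt, hset, hset]
    rw [oCnt, oCnt] at this
    simpa using this.symm
  · intro hO
    have := (h v).2 hO
    rw [cCnt, cCnt, hset, hset]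
    rw [cCnt, cCnt] at this
    simpa using this.symm

lemma pb_TF (hf : ∀ i, 1 ≤ f i) (hparts : 2 ≤ Fintype.card ι)
    (h : IsPB (cmpGraph f) c) : (Pset f c true).card = (Pset f c false).card := by
  have h1 := pb_not_lt hf hparts h
  have h2 := pb_not_lt hf hparts (pb_neg h)
  have e1 : Pset f (fun v => !c v) true = Pset f c false := by
    ext u; simp [Pset]
  have e2 : Pset f (fun v => !c v) false = Pset f c true := by
    ext u; simp [Pset]
  rw [e1, e2] at h2
  omega

lemma pb_forward (hf : ∀ i, 1 ≤ f i) (hparts : 2 ≤ Fintype.card ι)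
    (h : IsPB (cmpGraph f) c) :
    Even (Fintype.card (Σ i, Fin (f i))) ∧ ∀ i, Odd (f i) → f i = 1 := by
  have hTF := pb_TF hf hparts h
  have hN := pb_Ptot f c
  constructor
  · exact ⟨(Pset f c true).card, by omega⟩
  · intro i hodd
    set j0 : Fin (f i) := ⟨0, hf i⟩
    have hdeg := pb_deg f i j0
    have hO : Odd (deg' (cmpGraph f) ⟨i, j0⟩) := by
      rw [Nat.odd_iff] at hodd ⊢
      omega
    have hQ := pb_Qtot f c i
    have h1 := pb_odd_s19 h i j0 hO
    cases hc : c ⟨i, j0⟩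
    · have := pb_mono_false h i j0 hO hc
      simp [hc] at h1
      omega
    · have := pb_mono_true h i j0 hO hc
      simp [hc] at h1
      omega
end

lemma pb_card_lt (n m : ℕ) (h : m ≤ n) :
    (univ.filter fun x : Fin n => (x : ℕ) < m).card = m := by
  rw [Finset.card_filter, Fin.sum_univ_eq_sum_range (fun k => if k < m then 1 else 0),
    ← Finset.card_filter]
  rw [show (Finset.range n).filter (fun k => k < m) = Finset.range m by
    ext k; simp; omega]
  exact Finset.card_range m

lemma pb_filter_one {n : ℕ} (hn : n = 1) (p : Fin n → Prop) [DecidablePred p] (j : Fin n) :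
    (univ.filter p).card = if p j then 1 else 0 := by
  subst hn
  have hd : j = default := Subsingleton.elim _ _
  subst hd
  rw [Finset.univ_unique, Finset.filter_singleton]
  split_ifs <;> simp

section
set_option linter.unusedSectionVars false
variable {ι : Type*} [Fintype ι] [DecidableEq ι]

def pbO (f : ι → ℕ) : Finset ι := univ.filter (fun i => f i % 2 = 1)

noncomputable def pbE (f : ι → ℕ) : {x // x ∈ pbO f} ≃ Fin (pbO f).card :=
  Fintype.equivFinOfCardEq (Fintype.card_coe _)

noncomputable def pbc (f : ι → ℕ) : (Σ i, Fin (f i)) → Bool := fun u =>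
  if h : f u.1 % 2 = 1 then
    decide (((pbE f) ⟨u.1, by simp [pbO, h]⟩ : ℕ) < (pbO f).card / 2)
  else decide ((u.2 : ℕ) < f u.1 / 2)

variable {f : ι → ℕ}

lemma pbc_even (i : ι) (hi : ¬ f i % 2 = 1) (x : Fin (f i)) :
    pbc f ⟨i, x⟩ = decide ((x : ℕ) < f i / 2) := by
  simp only [pbc, hi, dif_neg, not_false_iff]

lemma pbc_odd (i : ι) (hi : f i % 2 = 1) (x : Fin (f i)) :
    pbc f ⟨i, x⟩ = decide (((pbE f) ⟨i, by simp [pbO, hi]⟩ : ℕ) < (pbO f).card / 2) := by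
  simp only [pbc, hi, dif_pos]

lemma pbQ_even (i : ι) (hi : ¬ f i % 2 = 1) :
    (Qset f (pbc f) i true).card = f i / 2 ∧ (Qset f (pbc f) i false).card = f i / 2 := by
  have ht : (Qset f (pbc f) i true).card = f i / 2 := by
    rw [Qset, Finset.filter_congr (fun x _ => by
      rw [pbc_even i hi, decide_eq_true_eq] :
      ∀ x ∈ (univ : Finset (Fin (f i))), (pbc f ⟨i, x⟩ = true) ↔ ((x : ℕ) < f i / 2))]
    exact pb_card_lt _ _ (Nat.div_le_self _ _)
  have htot := pb_Qtot f (pbc f) i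
  exact ⟨ht, by omega⟩

lemma pbQ_one (c : (Σ i, Fin (f i)) → Bool) (i : ι) (h1 : f i = 1) (j : Fin (f i)) (b : Bool) :
    (Qset f c i b).card = if c ⟨i, j⟩ = b then 1 else 0 :=
  pb_filter_one h1 _ j

lemma pbK_even (hf : ∀ i, 1 ≤ f i) (hN : Even (Fintype.card (Σ i, Fin (f i))))
    (h1 : ∀ i, Odd (f i) → f i = 1) : (pbO f).card % 2 = 0 := by
  have hsplit := Finset.sum_filter_add_sum_filter_not univ (fun i => f i % 2 = 1) f
  have hO : ∑ i ∈ univ.filter (fun i => f i % 2 = 1), f i = (pbO f).card := by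
    rw [show (pbO f).card = ∑ _i ∈ pbO f, 1 by simp, pbO]
    exact Finset.sum_congr rfl (fun i hi => by
      simp only [mem_filter] at hi
      exact h1 i (Nat.odd_iff.mpr hi.2))
  have hE : (∑ i ∈ univ.filter (fun i => ¬ f i % 2 = 1), f i) % 2 = 0 := by
    rw [Finset.sum_nat_mod]
    have : ∑ i ∈ univ.filter (fun i => ¬ f i % 2 = 1), f i % 2 = 0 := by
      apply Finset.sum_eq_zero
      intro i hi
      simp only [mem_filter] at hi
      omega
    rw [this]
  have hNs : Fintype.card (Σ i, Fin (f i)) = ∑ i, f i := pb_N f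
  rw [Nat.even_iff] at hN
  omega

lemma pbQ_odd_sum (hf : ∀ i, 1 ≤ f i) (hN : Even (Fintype.card (Σ i, Fin (f i))))
    (h1 : ∀ i, Odd (f i) → f i = 1) (b : Bool) :
    ∑ i ∈ pbO f, (Qset f (pbc f) i b).card = (pbO f).card / 2 := by
  set K := (pbO f).card with hK
  have hKe := pbK_even hf hN h1
  have step1 : ∀ x : {i // i ∈ pbO f}, (Qset f (pbc f) x.1 b).card =
      (if (decide (((pbE f) x : ℕ) < K / 2) : Bool) = b then 1 else 0) := by
    rintro ⟨i, hi⟩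
    have hmod : f i % 2 = 1 := by simpa [pbO] using hi
    have hone : f i = 1 := h1 i (Nat.odd_iff.mpr hmod)
    rw [pbQ_one (pbc f) i hone ⟨0, by omega⟩ b, pbc_odd i hmod]
  rw [← Finset.sum_coe_sort (pbO f) (fun i => (Qset f (pbc f) i b).card)]
  rw [Finset.sum_congr rfl (fun x _ => step1 x)]
  rw [Fintype.sum_equiv (pbE f) _
    (fun y : Fin K => if (decide ((y : ℕ) < K / 2) : Bool) = b then 1 else 0)
    (fun x => rfl)]
  have hle : K / 2 ≤ K := Nat.div_le_self _ _
  have hcard := pb_card_lt K (K / 2) hle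
  have hsplit := card_filter_add_card_filter_not
    (s := (univ : Finset (Fin K))) (p := fun y => (y : ℕ) < K / 2)
  have huniv : (univ : Finset (Fin K)).card = K := by simp
  cases b
  · have he : ∀ y : Fin K, (if (decide ((y : ℕ) < K / 2) : Bool) = false then 1 else 0)
        = if ¬ (y : ℕ) < K / 2 then 1 else 0 := by
      intro y; by_cases hy : (y : ℕ) < K / 2 <;> simp [hy]
    rw [Finset.sum_congr rfl (fun y _ => he y), ← Finset.card_filter]
    omega
  · have he : ∀ y : Fin K, (if (decide ((y : ℕ) < K / 2) : Bool) = true then 1 else 0)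
        = if (y : ℕ) < K / 2 then 1 else 0 := by
      intro y; by_cases hy : (y : ℕ) < K / 2 <;> simp [hy]
    rw [Finset.sum_congr rfl (fun y _ => he y), ← Finset.card_filter]
    omega

lemma pb_backward (hf : ∀ i, 1 ≤ f i) (hN : Even (Fintype.card (Σ i, Fin (f i))))
    (h1 : ∀ i, Odd (f i) → f i = 1) : IsPB (cmpGraph f) (pbc f) := by
  have hTF : (Pset f (pbc f) true).card = (Pset f (pbc f) false).card := by
    have ht := pb_Psum f (pbc f) true
    have hff := pb_Psum f (pbc f) false
    have hsplit : ∀ b : Bool, ∑ i, (Qset f (pbc f) i b).card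
        = ∑ i ∈ pbO f, (Qset f (pbc f) i b).card +
          ∑ i ∈ univ.filter (fun i => ¬ f i % 2 = 1), (Qset f (pbc f) i b).card := by
      intro b
      rw [pbO]
      exact (Finset.sum_filter_add_sum_filter_not univ _ _).symm
    have hodd := pbQ_odd_sum hf hN h1
    have heven : ∑ i ∈ univ.filter (fun i => ¬ f i % 2 = 1), (Qset f (pbc f) i true).card
        = ∑ i ∈ univ.filter (fun i => ¬ f i % 2 = 1), (Qset f (pbc f) i false).card :=
      Finset.sum_congr rfl (fun i hi => by
        simp only [mem_filter] at hi
        rw [(pbQ_even i hi.2).1, (pbQ_even i hi.2).2])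
    rw [ht, hff, hsplit true, hsplit false, hodd true, hodd false, heven]
  rintro ⟨i, j⟩
  have hdeg := pb_deg f i j
  have hNe := hN
  rw [Nat.even_iff] at hNe
  have hQtot := pb_Qtot f (pbc f) i
  have ho1 := pb_oCnt f (pbc f) i j true
  have ho2 := pb_oCnt f (pbc f) i j false
  constructor
  · intro hE
    rw [Nat.even_iff] at hE
    have hfi : ¬ f i % 2 = 1 := by omega
    have hq := pbQ_even i hfi
    omega
  · intro hO
    rw [Nat.odd_iff] at hO
    have hfi : f i % 2 = 1 := by omega
    have hone : f i = 1 := h1 i (Nat.odd_iff.mpr hfi)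
    rw [pb_cCnt, pb_cCnt]
    have hq1 := pbQ_one (pbc f) i hone j true
    have hq2 := pbQ_one (pbc f) i hone j false
    cases hc : pbc f ⟨i, j⟩ <;> simp only [hc] at hq1 hq2 ⊢ <;> simp at hq1 hq2 ⊢ <;> omega

end

end

/-- A complete multipartite graph with at least two parts admits a parity-balanced
2-coloring iff its number of vertices is even and every odd-size part is a singleton. -/
theorem stmt19 {ι : Type*} [Fintype ι] [DecidableEq ι] (f : ι → ℕ) (hf : ∀ i, 1 ≤ f i)
    (hparts : 2 ≤ Fintype.card ι) :
    (∃ c : (Σ i, Fin (f i)) → Bool, IsPB (cmpGraph f) c) ↔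
    (Even (Fintype.card (Σ i, Fin (f i))) ∧ ∀ i, Odd (f i) → f i = 1) := by
  constructor
  · rintro ⟨c, hc⟩
    exact pb_forward hf hparts hc
  · rintro ⟨hN, h1⟩
    exact ⟨pbc f, pb_backward hf hN h1⟩
end
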